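/- arXiv:2405.14140 — 8 statements merged into one kernel-verified Lean document; each statement's English description precedes it below -/
import Mathlib

section
/- Let G be a finite abelian group with exponent n₁, let ζ = e^{2πi/n₁}, let L = ℚ(ζ) ⊆ ℂ, and let F be a subfield with ℚ ⊆ F ⊆ L. For k ∈ (ℤ/n₁ℤ)^×, let τ_k denote the automorphism of L determined by τ_k(ζ) = ζ^k, and set Z_F = {k ∈ (ℤ/n₁ℤ)^× : τ_k(x) = x for all x ∈ F}. Then for any subset C ⊆ G, every eigenvalue of the adjacency matrix A_C of the Cayley digraph X(G,C) lies in F if and only if k·g ∈ C for every g ∈ C and every k ∈ Z_F. -/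
open Finset in
lemma aux_fourier {G : Type*} [AddCommGroup G] [Fintype G] (u : G → ℂ)
    (h : ∀ χ : AddChar G ℂ, ∑ g, u g * χ g = 0) : u = 0 := by
  classical
  let Φ : (G → ℂ) →ₗ[ℂ] ℂ := ∑ g, u g • LinearMap.proj g
  have hΦ : Φ = 0 := by
    apply (AddChar.complexBasis G).ext
    intro χ
    rw [AddChar.complexBasis_apply]
    simpa [Φ, LinearMap.proj] using h χ
  funext g
  have h2 : Φ (Pi.single g 1) = 0 := by rw [hΦ]; rfl
  simpa [Φ, LinearMap.proj, Pi.single_apply, mul_ite] using h2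

open Finset in
lemma aux_spectrum {G : Type*} [AddCommGroup G] [Fintype G] [DecidableEq G]
    (C : Set G) [DecidablePred (· ∈ C)] :
    spectrum ℂ (Matrix.of fun g h : G => if h - g ∈ C then (1:ℂ) else 0)
      = Set.range (fun χ : AddChar G ℂ => ∑ c ∈ univ.filter (· ∈ C), χ c) := by
  classical
  set A : Matrix G G ℂ := Matrix.of fun g h => if h - g ∈ C then 1 else 0 with hA
  set d : AddChar G ℂ → ℂ := fun χ => ∑ c ∈ univ.filter (· ∈ C), χ c with hd
  set b := AddChar.complexBasis G with hb
  have key : Matrix.toLin' A = Matrix.toLin b b (Matrix.diagonal d) := by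
    apply b.ext
    intro χ
    have hbχ : (b χ : G → ℂ) = ⇑χ := AddChar.complexBasis_apply χ
    have hmul : A.mulVec ⇑χ = d χ • ⇑χ := by
      funext g
      have h1 : ∑ c, (if c ∈ C then (1:ℂ) else 0) * χ (g + c)
          = ∑ h, (if h - g ∈ C then (1:ℂ) else 0) * χ h := by
        apply Fintype.sum_equiv (Equiv.addLeft g)
        intro c
        simp [Equiv.addLeft, add_sub_cancel_left]
      simp only [Matrix.mulVec, dotProduct, hA, Matrix.of_apply, Pi.smul_apply,
        smul_eq_mul]
      rw [← h1]
      have : ∀ c, (if c ∈ C then (1:ℂ) else 0) * χ (g + c)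
          = (if c ∈ C then χ g * χ c else 0) := by
        intro c
        rw [AddChar.map_add_eq_mul]
        split_ifs <;> ring
      rw [Finset.sum_congr rfl fun c _ => this c, ← Finset.sum_filter, hd, ← Finset.mul_sum]
      ring
    rw [Matrix.toLin_self, Matrix.toLin'_apply, hbχ, hmul]
    simp [Matrix.diagonal_apply, ite_smul, hbχ]
  have e1 : Matrix.toLinAlgEquiv' A = Matrix.toLin' A := rfl
  have e2 : Matrix.toLinAlgEquiv b (Matrix.diagonal d) = Matrix.toLin b b (Matrix.diagonal d) :=
    rfl
  calc spectrum ℂ A = spectrum ℂ (Matrix.toLin' A) := by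
        rw [← e1]; exact (AlgEquiv.spectrum_eq Matrix.toLinAlgEquiv' A).symm
    _ = spectrum ℂ (Matrix.toLin b b (Matrix.diagonal d)) := by rw [key]
    _ = spectrum ℂ (Matrix.diagonal d) := by
        rw [← e2]; exact AlgEquiv.spectrum_eq (Matrix.toLinAlgEquiv b) _
    _ = Set.range d := spectrum_diagonal d

section
open Finset
/-- Let `G` be a finite abelian group with exponent `n₁`, let
`ζ = e^{2πi/n₁}`, `L = ℚ(ζ) ⊆ ℂ`, and let `F` be an intermediate field `ℚ ⊆ F ⊆ L`.
For `k ∈ (ℤ/n₁ℤ)ˣ`, let `τ k` be the automorphism of `L` with `τ k ζ = ζ^k`, and let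
`ZF = {k : τ k fixes F pointwise}`.  Then every eigenvalue of the adjacency matrix of
the Cayley digraph `X(G, C)` lies in `F` iff `C` is closed under multiplication by
elements of `ZF`. -/
theorem stmt0 (G : Type*) [AddCommGroup G] [Fintype G] [DecidableEq G]
    (n₁ : ℕ) (hn₁ : n₁ = AddMonoid.exponent G)
    (ζ : ℂ) (hζ : ζ = Complex.exp (2 * Real.pi * Complex.I / n₁))
    (L : IntermediateField ℚ ℂ) (hL : L = IntermediateField.adjoin ℚ {ζ})
    (hζL : ζ ∈ L)
    (F : IntermediateField ℚ ℂ) (hF : F ≤ L)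
    (τ : (ZMod n₁)ˣ → (L ≃ₐ[ℚ] L))
    (hτ : ∀ k : (ZMod n₁)ˣ, τ k ⟨ζ, hζL⟩ = ⟨ζ, hζL⟩ ^ ((k : ZMod n₁).val))
    (ZF : Set (ZMod n₁)ˣ)
    (hZF : ZF = {k | ∀ (x : ℂ) (hx : x ∈ F), τ k ⟨x, hF hx⟩ = ⟨x, hF hx⟩})
    (C : Set G) [DecidablePred (· ∈ C)]
    (A : Matrix G G ℂ)
    (hA : A = Matrix.of fun g h => if h - g ∈ C then 1 else 0) :
    (∀ μ ∈ spectrum ℂ A, μ ∈ F) ↔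
      (∀ g ∈ C, ∀ k ∈ ZF, ((k : ZMod n₁).val • g) ∈ C) := by
  classical
  subst hA hZF
  have hn0 : n₁ ≠ 0 := by rw [hn₁]; exact AddMonoid.exponent_ne_zero_of_finite
  have hnpos : 0 < n₁ := Nat.pos_of_ne_zero hn0
  haveI : NeZero n₁ := ⟨hn0⟩
  have hprim : IsPrimitiveRoot ζ n₁ := by rw [hζ]; exact Complex.isPrimitiveRoot_exp n₁ hn0
  set Cf : Finset G := univ.filter (· ∈ C) with hCf
  -- exponent facts
  have hng : ∀ g : G, n₁ • g = 0 := by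
    intro g; rw [hn₁]; exact AddMonoid.exponent_nsmul_eq_zero g
  have hmod : ∀ (a : ℕ) (g : G), a • g = (a % n₁) • g := by
    intro a g
    calc a • g = (n₁ * (a / n₁) + a % n₁) • g := by rw [Nat.div_add_mod]
      _ = (a / n₁) • (n₁ • g) + (a % n₁) • g := by
          rw [add_nsmul, mul_comm, mul_nsmul, smul_comm]
      _ = (a % n₁) • g := by rw [hng, smul_zero, zero_add]
  have hcancel : ∀ (k : (ZMod n₁)ˣ) (g : G),
      ((k : ZMod n₁)).val • (((k⁻¹ : (ZMod n₁)ˣ) : ZMod n₁)).val • g = g := by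
    intro k g
    rw [← mul_nsmul', hmod]
    have h1 : ((k : ZMod n₁).val * ((k⁻¹ : (ZMod n₁)ˣ) : ZMod n₁).val) % n₁
        = (1 : ZMod n₁).val := by
      rw [← ZMod.val_mul, ← Units.val_mul, mul_inv_cancel, Units.val_one]
    rw [h1, ZMod.val_one_eq_one_mod, ← hmod, one_nsmul]
  have hcancel' : ∀ (k : (ZMod n₁)ˣ) (g : G),
      (((k⁻¹ : (ZMod n₁)ˣ) : ZMod n₁)).val • ((k : ZMod n₁)).val • g = g := by
    intro k g
    have := hcancel k⁻¹ g
    rwa [inv_inv] at this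
  have hinj : ∀ k : (ZMod n₁)ˣ, Function.Injective (fun g : G => ((k : ZMod n₁)).val • g) := by
    intro k
    exact Function.LeftInverse.injective (g := fun g => (((k⁻¹:(ZMod n₁)ˣ) : ZMod n₁)).val • g)
      (hcancel' k)
  -- character values
  have hpowc : ∀ (χ : AddChar G ℂ) (c : G), χ c ^ n₁ = 1 := by
    intro χ c
    rw [← AddChar.map_nsmul_eq_pow, hng, AddChar.map_zero_eq_one]
  have memL : ∀ x : ℂ, x ^ n₁ = 1 → x ∈ L := by
    intro x hx
    obtain ⟨j, -, rfl⟩ := hprim.eq_pow_of_pow_eq_one hx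
    exact pow_mem hζL j
  have τpow : ∀ (k : (ZMod n₁)ˣ) (x : ℂ) (hx : x ^ n₁ = 1) (hxL : x ∈ L),
      ((τ k ⟨x, hxL⟩ : L) : ℂ) = x ^ ((k : ZMod n₁)).val := by
    intro k x hx hxL
    obtain ⟨j, -, rfl⟩ := hprim.eq_pow_of_pow_eq_one hx
    have h1 : (⟨ζ ^ j, hxL⟩ : L) = (⟨ζ, hζL⟩ : L) ^ j := by ext; push_cast; rfl
    rw [h1, map_pow, hτ]
    push_cast
    rw [← pow_mul, ← pow_mul, mul_comm]
  -- the eigenvalue, as an element of L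
  set s : AddChar G ℂ → L := fun χ => ∑ c ∈ Cf, (⟨χ c, memL _ (hpowc χ c)⟩ : L) with hs
  have hs_coe : ∀ χ : AddChar G ℂ, ((s χ : L) : ℂ) = ∑ c ∈ Cf, χ c := by
    intro χ
    rw [hs]
    push_cast
    rfl
  have hτs : ∀ (k : (ZMod n₁)ˣ) (χ : AddChar G ℂ),
      ((τ k (s χ) : L) : ℂ) = ∑ c ∈ Cf, χ (((k : ZMod n₁)).val • c) := by
    intro k χ
    rw [hs, map_sum]
    push_cast
    refine Finset.sum_congr rfl fun c _ => ?_
    rw [τpow k _ (hpowc χ c), ← AddChar.map_nsmul_eq_pow]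
  constructor
  · -- eigenvalues in F → C closed
    intro hspec g hg k hk
    have hstar : ∀ χ : AddChar G ℂ,
        ∑ c ∈ Cf, χ (((k : ZMod n₁)).val • c) = ∑ c ∈ Cf, χ c := by
      intro χ
      have hdF : (∑ c ∈ Cf, χ c) ∈ F := by
        apply hspec
        rw [aux_spectrum]
        exact ⟨χ, rfl⟩
      have hse : s χ = ⟨∑ c ∈ Cf, χ c, hF hdF⟩ := Subtype.ext (hs_coe χ)
      calc ∑ c ∈ Cf, χ (((k : ZMod n₁)).val • c) = ((τ k (s χ) : L) : ℂ) := (hτs k χ).symm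
        _ = ((τ k ⟨∑ c ∈ Cf, χ c, hF hdF⟩ : L) : ℂ) := by rw [hse]
        _ = ∑ c ∈ Cf, χ c := by rw [hk _ hdF]
    set m : ℕ := (((k⁻¹ : (ZMod n₁)ˣ) : ZMod n₁)).val with hm
    set e : G ≃ G :=
      ⟨fun c => ((k : ZMod n₁)).val • c, fun g => m • g, hcancel' k, hcancel k⟩ with he
    have hu : (fun g : G => (if m • g ∈ C then (1:ℂ) else 0) - (if g ∈ C then 1 else 0)) = 0 := by
      apply aux_fourier
      intro χ
      have h1 : ∑ c ∈ Cf, χ (((k : ZMod n₁)).val • c)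
          = ∑ x : G, (if m • x ∈ C then (1:ℂ) else 0) * χ x := by
        rw [hCf, Finset.sum_filter]
        apply Fintype.sum_equiv e
        intro c
        show (if c ∈ C then χ (((k : ZMod n₁)).val • c) else 0)
          = (if m • (((k : ZMod n₁)).val • c) ∈ C then (1:ℂ) else 0)
              * χ (((k : ZMod n₁)).val • c)
        rw [hcancel' k c]
        split_ifs <;> simp
      have h2 : ∑ c ∈ Cf, χ c = ∑ x : G, (if x ∈ C then (1:ℂ) else 0) * χ x := by
        rw [hCf, Finset.sum_filter]
        refine Finset.sum_congr rfl fun x _ => ?_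
        split_ifs <;> simp
      simp only [sub_mul, Finset.sum_sub_distrib]
      rw [← h1, ← h2, hstar χ, sub_self]
    have hx := congrFun hu (((k : ZMod n₁)).val • g)
    simp only [Pi.zero_apply, sub_eq_zero] at hx
    rw [hcancel' k g, if_pos hg] at hx
    by_contra hC
    rw [if_neg hC] at hx
    exact one_ne_zero hx
  · -- C closed → eigenvalues in F
    intro hclosed μ hμ
    rw [aux_spectrum] at hμ
    obtain ⟨χ, rfl⟩ := hμ
    -- Galois setup
    have hint : IsIntegral ℚ ζ := by
      refine ⟨Polynomial.X ^ n₁ - Polynomial.C 1, Polynomial.monic_X_pow_sub_C 1 hn0, ?_⟩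
      simp [Polynomial.eval₂_sub, hprim.pow_eq_one]
    subst hL
    set np : ℕ+ := ⟨n₁, hnpos⟩ with hnp
    have hprim' : IsPrimitiveRoot ζ ((np : ℕ+) : ℕ) := hprim
    haveI hcyc0 : IsCyclotomicExtension {(np : ℕ)} ℚ (Algebra.adjoin ℚ ({ζ} : Set ℂ)) :=
      hprim'.adjoin_isCyclotomicExtension ℚ
    have hsub : (IntermediateField.adjoin ℚ ({ζ} : Set ℂ)).toSubalgebra = Algebra.adjoin ℚ ({ζ} : Set ℂ) :=
      IntermediateField.adjoin_simple_toSubalgebra_of_isAlgebraic hint.isAlgebraic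
    haveI hcyc : IsCyclotomicExtension {(np : ℕ)} ℚ (IntermediateField.adjoin ℚ ({ζ} : Set ℂ)) :=
      IsCyclotomicExtension.equiv _ _ _ (Subalgebra.equivOfEq _ _ hsub.symm)
    haveI : FiniteDimensional ℚ (IntermediateField.adjoin ℚ ({ζ} : Set ℂ)) := IsCyclotomicExtension.finiteDimensional {(np : ℕ)} ℚ (IntermediateField.adjoin ℚ ({ζ} : Set ℂ))
    haveI : IsGalois ℚ (IntermediateField.adjoin ℚ ({ζ} : Set ℂ)) := IsCyclotomicExtension.isGalois {(np : ℕ)} ℚ (IntermediateField.adjoin ℚ ({ζ} : Set ℂ))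
    set F' : IntermediateField ℚ (IntermediateField.adjoin ℚ ({ζ} : Set ℂ)) := IntermediateField.comap (IntermediateField.adjoin ℚ ({ζ} : Set ℂ)).val F with hF'
    -- every automorphism is some τ k
    have hdet : ∀ σ : (IntermediateField.adjoin ℚ ({ζ} : Set ℂ)) ≃ₐ[ℚ] (IntermediateField.adjoin ℚ ({ζ} : Set ℂ)), ∃ k : (ZMod n₁)ˣ, σ = τ k := by
      intro σ
      have hz1 : ((⟨ζ, hζL⟩ : (IntermediateField.adjoin ℚ ({ζ} : Set ℂ)))) ^ n₁ = 1 := by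
        ext; push_cast; exact hprim.pow_eq_one
      have hσprim : IsPrimitiveRoot ((σ ⟨ζ, hζL⟩ : (IntermediateField.adjoin ℚ ({ζ} : Set ℂ))) : ℂ) n₁ := by
        constructor
        · have h1 : (σ ⟨ζ, hζL⟩) ^ n₁ = 1 := by rw [← map_pow, hz1, map_one]
          calc ((σ ⟨ζ, hζL⟩ : (IntermediateField.adjoin ℚ ({ζ} : Set ℂ))) : ℂ) ^ n₁ = (((σ ⟨ζ, hζL⟩) ^ n₁ : (IntermediateField.adjoin ℚ ({ζ} : Set ℂ))) : ℂ) := by push_cast; rfl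
            _ = 1 := by rw [h1]; rfl
        · intro l hl
          apply hprim.dvd_of_pow_eq_one
          have h2 : σ (⟨ζ, hζL⟩ ^ l) = 1 := by
            rw [map_pow]
            apply Subtype.ext
            push_cast
            exact hl
          have h3 : ((⟨ζ, hζL⟩ : (IntermediateField.adjoin ℚ ({ζ} : Set ℂ)))) ^ l = 1 := by
            apply σ.injective
            rw [h2, map_one]
          have h4 := congrArg (fun y : (IntermediateField.adjoin ℚ ({ζ} : Set ℂ)) => (y : ℂ)) h3
          push_cast at h4
          exact h4
      obtain ⟨j, hjlt, hj⟩ := hprim.eq_pow_of_pow_eq_one hσprim.pow_eq_one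
      have hcop : Nat.Coprime j n₁ := (hprim.pow_iff_coprime hnpos j).mp (hj ▸ hσprim)
      refine ⟨ZMod.unitOfCoprime j hcop, ?_⟩
      set k : (ZMod n₁)ˣ := ZMod.unitOfCoprime j hcop with hkdef
      have hkval : ((k : ZMod n₁)).val = j := by
        rw [hkdef]
        show ((j : ZMod n₁)).val = j
        rw [ZMod.val_natCast, Nat.mod_eq_of_lt hjlt]
      have hgeneq : σ ⟨ζ, hζL⟩ = τ k ⟨ζ, hζL⟩ := by
        rw [hτ k]
        apply Subtype.ext
        push_cast
        rw [hkval, hj]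
      have halg : (σ : ↥(IntermediateField.adjoin ℚ ({ζ} : Set ℂ)) →ₐ[ℚ] ↥(IntermediateField.adjoin ℚ ({ζ} : Set ℂ))) = ((τ k : (IntermediateField.adjoin ℚ ({ζ} : Set ℂ)) ≃ₐ[ℚ] (IntermediateField.adjoin ℚ ({ζ} : Set ℂ))) : ↥(IntermediateField.adjoin ℚ ({ζ} : Set ℂ)) →ₐ[ℚ] ↥(IntermediateField.adjoin ℚ ({ζ} : Set ℂ))) := by
        apply (IntermediateField.adjoin.powerBasis hint).algHom_ext
        have hgen : (IntermediateField.adjoin.powerBasis hint).gen = ⟨ζ, hζL⟩ := rfl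
        rw [hgen]
        exact hgeneq
      exact AlgEquiv.ext fun x => AlgHom.ext_iff.mp halg x
    -- the eigenvalue lies in the fixed field of the fixing subgroup of F'
    have hfix : ∀ σ ∈ F'.fixingSubgroup, σ (s χ) = s χ := by
      intro σ hσ
      obtain ⟨k, rfl⟩ := hdet σ
      have hkZF : ∀ (x : ℂ) (hx : x ∈ F), τ k ⟨x, hF hx⟩ = ⟨x, hF hx⟩ := by
        intro x hx
        exact (IntermediateField.mem_fixingSubgroup_iff F' (τ k)).mp hσ ⟨x, hF hx⟩
          (show (IntermediateField.adjoin ℚ ({ζ} : Set ℂ)).val ⟨x, hF hx⟩ ∈ F from hx)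
      apply Subtype.ext
      rw [hτs k χ, hs_coe χ]
      have himg : Cf.image (fun c => ((k : ZMod n₁)).val • c) = Cf := by
        apply Finset.eq_of_subset_of_card_le
        · intro x hx
          simp only [Finset.mem_image] at hx
          obtain ⟨c, hc, rfl⟩ := hx
          simp only [hCf, Finset.mem_filter, Finset.mem_univ, true_and] at hc ⊢
          exact hclosed c hc k hkZF
        · rw [Finset.card_image_of_injective _ (hinj k)]
      calc ∑ c ∈ Cf, χ (((k : ZMod n₁)).val • c)
          = ∑ x ∈ Cf.image (fun c => ((k : ZMod n₁)).val • c), χ x :=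
            (Finset.sum_image (fun a _ b _ h => hinj k h)).symm
        _ = ∑ c ∈ Cf, χ c := by rw [himg]
    have hsF' : s χ ∈ F' := by
      rw [← IsGalois.fixedField_fixingSubgroup F']
      exact fun g => hfix g.1 g.2
    show (∑ c ∈ Cf, χ c) ∈ F
    rw [← hs_coe χ]
    exact hsF'

end
end

section
/- Let n > 1 be an integer with prime decomposition n = 2^m p₁^{m₁}⋯p_r^{m_r}, where p₁,…,p_r are the distinct odd primes dividing n. Then the number of intermediate fields F of the cyclotomic field ℚ(ζ_n) over ℚ with [F : ℚ] = 2 equals 2^{2+r} − 1 if m ≥ 3, equals 2^{1+r} − 1 if m = 2, and equals 2^r − 1 if m ∈ {0,1}. -/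
open Function IntermediateField


instance instFiniteMonoidHom' (G M : Type*) [Group G] [Finite G] [Monoid M] [Finite M] :
    Finite (G →* M) :=
  Finite.of_injective (fun f => (f : G → M)) fun _ _ h => MonoidHom.ext (congrFun h)

lemma card_index_two_add_one (G : Type*) [CommGroup G] [Finite G] :
    Nat.card {H : Subgroup G // H.index = 2} + 1
      = Nat.card (G →* Multiplicative (ZMod 2)) := by
  classical
  have key : ∀ φ : G →* Multiplicative (ZMod 2), φ ≠ 1 → φ.ker.index = 2 := by
    intro φ hφ
    have hrange : φ.range ≠ ⊥ := by
      intro hbot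
      apply hφ
      ext x
      have : φ x ∈ φ.range := ⟨x, rfl⟩
      rw [hbot, Subgroup.mem_bot] at this
      simpa using this
    have hcard : Nat.card φ.range ∣ 2 := by
      have := Subgroup.card_subgroup_dvd_card φ.range
      simpa [Nat.card_eq_fintype_card] using this
    have h2 : Nat.card φ.range = 2 := by
      rcases (Nat.prime_two.eq_one_or_self_of_dvd _ hcard) with h | h
      · exact absurd (Subgroup.card_eq_one.mp h) hrange
      · exact h
    rw [Subgroup.index, Nat.card_congr (QuotientGroup.quotientKerEquivRange φ).toEquiv, h2]
  have e : {φ : G →* Multiplicative (ZMod 2) // φ ≠ 1} ≃ {H : Subgroup G // H.index = 2} := by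
    refine Equiv.ofBijective (fun φ => ⟨φ.1.ker, key φ.1 φ.2⟩) ⟨?_, ?_⟩
    · rintro ⟨φ₁, h1⟩ ⟨φ₂, h2⟩ h
      have hker : φ₁.ker = φ₂.ker := by simpa using congrArg Subtype.val h
      ext x
      have h01 : ∀ a b : ZMod 2, (a = 0 ↔ b = 0) → a = b := by decide
      have : φ₁ x = 1 ↔ φ₂ x = 1 := by
        rw [← MonoidHom.mem_ker, ← MonoidHom.mem_ker, hker]
      have h2 := h01 (Multiplicative.toAdd (φ₁ x)) (Multiplicative.toAdd (φ₂ x))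
        (by simpa [toAdd_eq_zero] using this)
      simpa using congrArg Multiplicative.ofAdd h2
    · rintro ⟨H, hH⟩
      haveI : Fact (Nat.Prime 2) := ⟨Nat.prime_two⟩
      have this : Nat.card (G ⧸ H) = 2 := hH
      have hcyc : IsCyclic (G ⧸ H) := isCyclic_of_prime_card this
      let c : Multiplicative (ZMod (Nat.card (G ⧸ H))) ≃* Multiplicative (ZMod 2) :=
        AddEquiv.toMultiplicative (ZMod.ringEquivCongr this).toAddEquiv
      let ψ : G ⧸ H ≃* Multiplicative (ZMod 2) := (zmodCyclicMulEquiv hcyc).symm.trans c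
      refine ⟨⟨ψ.toMonoidHom.comp (QuotientGroup.mk' H), ?_⟩, ?_⟩
      · intro h1
        obtain ⟨x, hx⟩ : ∃ x, x ∉ H := by
          by_contra hall
          push_neg at hall
          have : H = ⊤ := by ext y; simpa using hall y
          rw [this] at hH
          simp [Subgroup.index_top] at hH
        have : ψ ((QuotientGroup.mk' H) x) = 1 := by
          have := congrFun (congrArg (fun f : G →* Multiplicative (ZMod 2) => (f : G → Multiplicative (ZMod 2))) h1) x
          simpa using this
        rw [MulEquiv.map_eq_one_iff] at this
        rw [← QuotientGroup.ker_mk' H] at hx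
        exact hx this
      · ext1
        ext x
        simp only [MonoidHom.mem_ker, MonoidHom.coe_comp, comp_apply, MulEquiv.coe_toMonoidHom,
          MulEquiv.map_eq_one_iff]
        exact QuotientGroup.eq_one_iff x
  have hne : Nat.card {φ : G →* Multiplicative (ZMod 2) // φ ≠ 1} + 1
      = Nat.card (G →* Multiplicative (ZMod 2)) := by
    haveI : Fintype (G →* Multiplicative (ZMod 2)) := Fintype.ofFinite _
    rw [Nat.card_eq_fintype_card, Nat.card_eq_fintype_card]
    have h1 : Fintype.card {φ : G →* Multiplicative (ZMod 2) // ¬ (φ = 1)}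
        = Fintype.card (G →* Multiplicative (ZMod 2))
          - Fintype.card {φ : G →* Multiplicative (ZMod 2) // φ = 1} :=
      Fintype.card_subtype_compl _
    have h2 : Fintype.card {φ : G →* Multiplicative (ZMod 2) // φ = 1} = 1 :=
      Fintype.card_subtype_eq (1 : G →* Multiplicative (ZMod 2))
    have h3 : 1 ≤ Fintype.card (G →* Multiplicative (ZMod 2)) :=
      Fintype.card_pos
    have h4 : Fintype.card {φ : G →* Multiplicative (ZMod 2) // φ ≠ 1}
        = Fintype.card {φ : G →* Multiplicative (ZMod 2) // ¬ (φ = 1)} :=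
      Fintype.card_congr (Equiv.subtypeEquivRight fun _ => Iff.rfl)
    omega
  rw [← Nat.card_congr e, hne]


-- count of y : ZMod k with 2 • y = 0
lemma card_two_smul_zero (k : ℕ) (hk : 0 < k) :
    Nat.card {y : ZMod k // 2 • y = 0} = if 2 ∣ k then 2 else 1 := by
  haveI : NeZero k := ⟨hk.ne'⟩
  by_cases h2 : 2 ∣ k
  · rw [if_pos h2]
    obtain ⟨t, rfl⟩ := h2
    have ht : 0 < t := by omega
    have hset : {y : ZMod (2 * t) | 2 • y = 0} = {0, (t : ZMod (2 * t))} := by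
      ext y
      simp only [Set.mem_setOf_eq, Set.mem_insert_iff, Set.mem_singleton_iff]
      constructor
      · intro hy
        have hval : ((y.val : ℕ) : ZMod (2 * t)) = y := ZMod.natCast_rightInverse y
        have hlt : y.val < 2 * t := ZMod.val_lt y
        have : ((2 * y.val : ℕ) : ZMod (2 * t)) = 0 := by
          push_cast
          rw [hval]
          rw [two_smul] at hy
          linear_combination hy
        rw [ZMod.natCast_eq_zero_iff] at this
        have htv : t ∣ y.val := (mul_dvd_mul_iff_left (two_ne_zero)).mp this
        obtain ⟨c, hc⟩ := htv
        have hc2 : c < 2 := by nlinarith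
        interval_cases c
        · left; rw [← hval, hc]; simp
        · right; rw [← hval, hc]; simp
      · rintro (rfl | rfl)
        · simp
        · rw [two_smul, ← Nat.cast_add]
          have h' : t + t = 2 * t := by ring
          rw [h', ZMod.natCast_self]
    have hne : (0 : ZMod (2 * t)) ≠ (t : ZMod (2 * t)) := by
      intro h
      have := (ZMod.natCast_eq_zero_iff t (2 * t)).mp h.symm
      have := Nat.le_of_dvd ht this
      omega
    calc Nat.card {y : ZMod (2 * t) // 2 • y = 0}
        = ({0, (t : ZMod (2 * t))} : Set (ZMod (2 * t))).ncard := by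
          rw [← hset, ← Nat.card_coe_set_eq]; rfl
      _ = 2 := Set.ncard_pair hne
  · rw [if_neg h2]
    have hcop : Nat.Coprime 2 k := (Nat.Prime.coprime_iff_not_dvd Nat.prime_two).mpr h2
    have hiff : ∀ y : ZMod k, 2 • y = 0 ↔ y = 0 := by
      intro y
      constructor
      · intro h
        have h' : ((ZMod.unitOfCoprime 2 hcop : (ZMod k)ˣ) : ZMod k) * y = 0 := by
          rw [ZMod.coe_unitOfCoprime]
          rw [two_smul] at h
          push_cast
          linear_combination h
        exact (Units.mul_right_eq_zero _).mp h'
      · rintro rfl; simp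
    have hset : {y : ZMod k | 2 • y = 0} = {0} := by
      ext y; simpa using hiff y
    calc Nat.card {y : ZMod k // 2 • y = 0}
        = ({0} : Set (ZMod k)).ncard := by
          rw [← hset, ← Nat.card_coe_set_eq]; rfl
      _ = 1 := Set.ncard_singleton _

lemma card_sq_one_multiplicative (k : ℕ) (hk : 0 < k) :
    Nat.card {x : Multiplicative (ZMod k) // x ^ 2 = 1} = if 2 ∣ k then 2 else 1 := by
  rw [← card_two_smul_zero k hk]
  refine Nat.card_congr (Equiv.subtypeEquiv Multiplicative.toAdd (fun x => ?_))
  constructor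
  · intro h
    have := congrArg Multiplicative.toAdd h
    simpa [toAdd_pow] using this
  · intro h
    exact Multiplicative.toAdd.injective (by rw [toAdd_pow, h, toAdd_one])

lemma card_hom_multiplicative (k : ℕ) :
    Nat.card (Multiplicative (ZMod k) →* Multiplicative (ZMod 2)) = if 2 ∣ k then 2 else 1 := by
  have e1 : (Multiplicative (ZMod k) →* Multiplicative (ZMod 2)) ≃ (ZMod k →+ ZMod 2) :=
    AddMonoidHom.toMultiplicative.symm
  have e2 : (ZMod k →+ ZMod 2) ≃ {f : ℤ →+ ZMod 2 // f k = 0} := (ZMod.lift k).symm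
  have e3 : {x : ZMod 2 // (k : ℤ) • x = 0} ≃ {f : ℤ →+ ZMod 2 // f k = 0} :=
    Equiv.subtypeEquiv (zmultiplesHom (ZMod 2)) (fun x => Iff.rfl)
  rw [Nat.card_congr (e1.trans (e2.trans e3.symm))]
  have hsmul : ∀ x : ZMod 2, (k : ℤ) • x = (k : ZMod 2) * x := by
    intro x
    rw [natCast_zsmul, nsmul_eq_mul]
  by_cases h2 : 2 ∣ k
  · rw [if_pos h2]
    have hk0 : (k : ZMod 2) = 0 := (ZMod.natCast_eq_zero_iff k 2).mpr h2
    have : ∀ x : ZMod 2, (k : ℤ) • x = 0 := fun x => by rw [hsmul, hk0, zero_mul]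
    rw [Nat.card_congr (Equiv.subtypeUnivEquiv this), Nat.card_zmod]
  · rw [if_neg h2]
    have hk1 : (k : ZMod 2) = 1 := by
      have h0 : (k : ZMod 2) ≠ 0 := fun h => h2 ((ZMod.natCast_eq_zero_iff k 2).mp h)
      revert h0; generalize (k : ZMod 2) = a; revert a; decide
    have hiff : ∀ x : ZMod 2, (k : ℤ) • x = 0 ↔ x = 0 := fun x => by
      rw [hsmul, hk1, one_mul]
    have hset : {x : ZMod 2 | (k : ℤ) • x = 0} = {0} := by ext x; simpa using hiff x
    calc Nat.card {x : ZMod 2 // (k : ℤ) • x = 0}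
        = ({0} : Set (ZMod 2)).ncard := by rw [← hset, ← Nat.card_coe_set_eq]; rfl
      _ = 1 := Set.ncard_singleton _

lemma card_hom_two_eq_card_sq (G : Type*) [CommGroup G] [Finite G] :
    Nat.card (G →* Multiplicative (ZMod 2)) = Nat.card {x : G // x ^ 2 = 1} := by
  classical
  obtain ⟨ι, hfin, d, hd, ⟨e⟩⟩ := CommGroup.equiv_prod_multiplicative_zmod_of_finite G
  have l1 : Nat.card (G →* Multiplicative (ZMod 2))
      = ∏ i, Nat.card (Multiplicative (ZMod (d i)) →* Multiplicative (ZMod 2)) := by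
    rw [Nat.card_congr (MulEquiv.monoidHomCongrLeftEquiv e),
        Nat.card_congr (Pi.monoidHomMulEquiv _ _).toEquiv, Nat.card_pi]
  have ea : {x : G // x ^ 2 = 1}
      ≃ {y : ∀ i, Multiplicative (ZMod (d i)) // y ^ 2 = 1} := by
    refine Equiv.subtypeEquiv e.toEquiv (fun x => ?_)
    constructor
    · intro h
      show (e x) ^ 2 = 1
      rw [← map_pow, h, map_one]
    · intro h
      have h' : (e x) ^ 2 = 1 := h
      have h'' : e (x ^ 2) = 1 := by rw [map_pow]; exact h'
      have := congrArg e.symm h''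
      simpa using this
  have eb : {y : ∀ i, Multiplicative (ZMod (d i)) // y ^ 2 = 1}
      ≃ {y : ∀ i, Multiplicative (ZMod (d i)) // ∀ i, (y i) ^ 2 = 1} := by
    refine Equiv.subtypeEquivRight (fun y => ?_)
    rw [funext_iff]
    simp [Pi.pow_apply]
  have epow : {x : G // x ^ 2 = 1} ≃ ∀ i, {a : Multiplicative (ZMod (d i)) // a ^ 2 = 1} :=
    (ea.trans eb).trans
      (Equiv.subtypePiEquivPi (p := fun i (b : Multiplicative (ZMod (d i))) => b ^ 2 = 1))
  have l2 : Nat.card {x : G // x ^ 2 = 1}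
      = ∏ i, Nat.card {a : Multiplicative (ZMod (d i)) // a ^ 2 = 1} := by
    rw [Nat.card_congr epow, Nat.card_pi]
  rw [l1, l2]
  refine Finset.prod_congr rfl (fun i _ => ?_)
  rw [card_hom_multiplicative (d i), card_sq_one_multiplicative (d i) (lt_trans one_pos (hd i))]

lemma zmod_sq_eq_one_iff (N : ℕ) [NeZero N] (y : ZMod N) :
    y ^ 2 = 1 ↔ (N : ℤ) ∣ ((y.val : ℤ) - 1) * ((y.val : ℤ) + 1) := by
  have hy : (((y.val : ℤ)) : ZMod N) = y := by
    push_cast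
    exact ZMod.natCast_rightInverse y
  rw [← ZMod.intCast_zmod_eq_zero_iff_dvd]
  push_cast at hy ⊢
  rw [hy]
  constructor
  · intro h; linear_combination h
  · intro h; linear_combination h

lemma card_sq_one_two_pow (m : ℕ) (hm : 3 ≤ m) :
    Nat.card {y : ZMod (2 ^ m) // y ^ 2 = 1} = 4 := by
  obtain ⟨k, rfl⟩ : ∃ k, m = k + 3 := ⟨m - 3, by omega⟩
  set N := 2 ^ (k + 3) with hN
  haveI : NeZero N := ⟨pow_ne_zero _ two_ne_zero⟩
  have hp2 : Prime (2 : ℤ) := Int.prime_two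
  set h : ZMod N := ((2 ^ (k + 2) : ℕ) : ZMod N) with hh
  have hNN : ((N : ℕ) : ZMod N) = 0 := ZMod.natCast_self N
  have hc0 : (2 : ZMod N) ^ (k + 3) = 0 := by
    have := hNN
    rw [hN] at this
    push_cast at this
    exact this
  have hch : (2 : ZMod N) ^ (k + 2) = h := by rw [hh]; push_cast; ring
  have h2h : (2 : ZMod N) * h = 0 := by
    rw [← hch, ← pow_succ']
    exact hc0
  have hhsq : h * h = 0 := by
    rw [← hch, ← pow_add]
    have : (2 : ZMod N) ^ (k + 2 + (k + 2)) = 2 ^ (k + 3) * 2 ^ (k + 1) := by ring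
    rw [this, hc0, zero_mul]
  have hset : {y : ZMod N | y ^ 2 = 1} = {1, -1, h + 1, h - 1} := by
    ext y
    simp only [Set.mem_setOf_eq, Set.mem_insert_iff, Set.mem_singleton_iff]
    constructor
    · intro hy
      rw [zmod_sq_eq_one_iff] at hy
      set a : ℤ := (y.val : ℤ) with ha
      have hcast : ((a : ℤ) : ZMod N) = y := by
        rw [ha]; push_cast; exact ZMod.natCast_rightInverse y
      rw [hN] at hy
      push_cast at hy
      -- hy : (2:ℤ)^(k+3) ∣ (a - 1) * (a + 1)
      obtain ⟨b, hb⟩ : Odd a := by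
        rcases Int.even_or_odd a with he | ho
        · exfalso
          obtain ⟨b, hb⟩ := he
          have h2d : (2 : ℤ) ∣ (a - 1) * (a + 1) :=
            dvd_trans (dvd_pow_self 2 (by omega : k + 3 ≠ 0)) hy
          have hexp : (a - 1) * (a + 1) = 4 * b ^ 2 - 1 := by rw [hb]; ring
          rw [hexp] at h2d
          set c := b ^ 2
          omega
        · exact ho
      have hq : (4 : ℤ) * 2 ^ (k + 1) ∣ 4 * (b * (b + 1)) := by
        have e1 : (4 : ℤ) * 2 ^ (k + 1) = 2 ^ (k + 3) := by ring
        have e2 : (4 : ℤ) * (b * (b + 1)) = (a - 1) * (a + 1) := by rw [hb]; ring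
        rw [e1, e2]
        exact hy
      have hq2 : (2 : ℤ) ^ (k + 1) ∣ b * (b + 1) :=
        (mul_dvd_mul_iff_left (by norm_num : (4 : ℤ) ≠ 0)).mp hq
      have key : (2 : ℤ) ^ (k + 2) ∣ a - 1 ∨ (2 : ℤ) ^ (k + 2) ∣ a + 1 := by
        by_cases hb2 : (2 : ℤ) ∣ b
        · left
          have hnb : ¬ (2 : ℤ) ∣ (b + 1) := by omega
          have hcop : IsCoprime ((2 : ℤ) ^ (k + 1)) (b + 1) :=
            ((hp2.coprime_iff_not_dvd).mpr hnb).pow_left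
          have hdb : (2 : ℤ) ^ (k + 1) ∣ b := hcop.dvd_of_dvd_mul_right hq2
          have h2 : (2 : ℤ) * 2 ^ (k + 1) ∣ 2 * b := mul_dvd_mul_left 2 hdb
          have e3 : (2 : ℤ) * 2 ^ (k + 1) = 2 ^ (k + 2) := by ring
          have e4 : a - 1 = 2 * b := by omega
          rw [e3, ← e4] at h2
          exact h2
        · right
          have hcop : IsCoprime ((2 : ℤ) ^ (k + 1)) b :=
            ((hp2.coprime_iff_not_dvd).mpr hb2).pow_left
          have hdb : (2 : ℤ) ^ (k + 1) ∣ b + 1 := hcop.dvd_of_dvd_mul_left hq2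
          have h2 : (2 : ℤ) * 2 ^ (k + 1) ∣ 2 * (b + 1) := mul_dvd_mul_left 2 hdb
          have e3 : (2 : ℤ) * 2 ^ (k + 1) = 2 ^ (k + 2) := by ring
          have e4 : a + 1 = 2 * (b + 1) := by omega
          rw [e3, ← e4] at h2
          exact h2
      rcases key with hk2 | hk2
      · obtain ⟨c, hc⟩ := hk2
        rcases Int.even_or_odd c with ⟨d, hd⟩ | ⟨d, hd⟩
        · left
          have hae : a = 2 ^ (k + 3) * d + 1 := by
            have : (2 : ℤ) ^ (k + 2) * (d + d) = 2 ^ (k + 3) * d := by ring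
            rw [hd] at hc
            omega
          rw [← hcast, hae]
          push_cast
          rw [hc0]; ring
        · right; right; left
          have hae : a = 2 ^ (k + 3) * d + 2 ^ (k + 2) + 1 := by
            have : (2 : ℤ) ^ (k + 2) * (2 * d + 1) = 2 ^ (k + 3) * d + 2 ^ (k + 2) := by ring
            rw [hd] at hc
            omega
          rw [← hcast, hae]
          push_cast
          rw [hc0, hch]; ring
      · obtain ⟨c, hc⟩ := hk2
        rcases Int.even_or_odd c with ⟨d, hd⟩ | ⟨d, hd⟩
        · right; left
          have hae : a = 2 ^ (k + 3) * d - 1 := by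
            have : (2 : ℤ) ^ (k + 2) * (d + d) = 2 ^ (k + 3) * d := by ring
            rw [hd] at hc
            omega
          rw [← hcast, hae]
          push_cast
          rw [hc0]; ring
        · right; right; right
          have hae : a = 2 ^ (k + 3) * d + 2 ^ (k + 2) - 1 := by
            have : (2 : ℤ) ^ (k + 2) * (2 * d + 1) = 2 ^ (k + 3) * d + 2 ^ (k + 2) := by ring
            rw [hd] at hc
            omega
          rw [← hcast, hae]
          push_cast
          rw [hc0, hch]; ring
    · rintro (rfl | rfl | rfl | rfl)
      · ring
      · ring
      · linear_combination hhsq + h2h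
      · linear_combination hhsq - h2h
  -- distinctness
  have hinj : ∀ a b : ℕ, a < N → b < N → ((a : ZMod N) = (b : ZMod N)) → a = b := by
    intro a b haN hbN hab
    rw [← ZMod.val_cast_of_lt haN, ← ZMod.val_cast_of_lt hbN, hab]
  have hsz : 8 ≤ N ∧ 2 ^ (k + 2) * 2 = N ∧ 4 ≤ 2 ^ (k + 2) := by
    refine ⟨?_, ?_, ?_⟩
    · calc (8 : ℕ) = 2 ^ 3 := by norm_num
        _ ≤ 2 ^ (k + 3) := Nat.pow_le_pow_right (by norm_num) (by omega)
    · rw [hN, ← pow_succ]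
    · calc (4 : ℕ) = 2 ^ 2 := by norm_num
        _ ≤ 2 ^ (k + 2) := Nat.pow_le_pow_right (by norm_num) (by omega)
  obtain ⟨hs1, hs2, hs3⟩ := hsz
  have hmneg : (-1 : ZMod N) = ((N - 1 : ℕ) : ZMod N) := by
    have h' : ((N - 1 : ℕ) : ZMod N) + ((1 : ℕ) : ZMod N) = ((N - 1 + 1 : ℕ) : ZMod N) := by
      push_cast; ring
    have h'' : N - 1 + 1 = N := by omega
    rw [h''] at h'
    rw [hNN] at h'
    push_cast at h'
    linear_combination -h'
  have hmp : h + 1 = ((2 ^ (k + 2) + 1 : ℕ) : ZMod N) := by rw [hh]; push_cast; ring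
  have hmm : h - 1 = ((2 ^ (k + 2) - 1 : ℕ) : ZMod N) := by
    rw [hh, Nat.cast_sub (Nat.one_le_two_pow)]
    push_cast; ring
  have d12 : (1 : ZMod N) ≠ -1 := by
    rw [hmneg]; intro hc
    have := hinj 1 (N - 1) (by omega) (by omega) (by exact_mod_cast hc)
    omega
  have d13 : (1 : ZMod N) ≠ h + 1 := by
    rw [hmp]; intro hc
    have := hinj 1 (2 ^ (k + 2) + 1) (by omega) (by omega) (by exact_mod_cast hc)
    omega
  have d14 : (1 : ZMod N) ≠ h - 1 := by
    rw [hmm]; intro hc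
    have := hinj 1 (2 ^ (k + 2) - 1) (by omega) (by omega) (by exact_mod_cast hc)
    omega
  have d23 : (-1 : ZMod N) ≠ h + 1 := by
    rw [hmneg, hmp]; intro hc
    have := hinj (N - 1) (2 ^ (k + 2) + 1) (by omega) (by omega) hc
    omega
  have d24 : (-1 : ZMod N) ≠ h - 1 := by
    rw [hmneg, hmm]; intro hc
    have := hinj (N - 1) (2 ^ (k + 2) - 1) (by omega) (by omega) hc
    omega
  have d34 : h + 1 ≠ h - 1 := by
    rw [hmp, hmm]; intro hc
    have := hinj (2 ^ (k + 2) + 1) (2 ^ (k + 2) - 1) (by omega) (by omega) hc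
    omega
  have hcard : ({1, -1, h + 1, h - 1} : Set (ZMod N)).ncard = 4 := by
    rw [Set.ncard_insert_of_notMem (by simp [d12, d13, d14]),
        Set.ncard_insert_of_notMem (by simp [d23, d24]),
        Set.ncard_insert_of_notMem (by simp [d34]),
        Set.ncard_singleton]
  calc Nat.card {y : ZMod N // y ^ 2 = 1}
      = ({1, -1, h + 1, h - 1} : Set (ZMod N)).ncard := by
        rw [← hset, ← Nat.card_coe_set_eq]; rfl
    _ = 4 := hcard

lemma card_sq_one_odd_prime_pow (p k : ℕ) (hp : p.Prime) (hodd : p ≠ 2) (hk : 1 ≤ k) :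
    Nat.card {y : ZMod (p ^ k) // y ^ 2 = 1} = 2 := by
  haveI : NeZero (p ^ k) := ⟨pow_ne_zero k hp.pos.ne'⟩
  have hpZ : Prime (p : ℤ) := Int.prime_iff_natAbs_prime.mpr (by simpa using hp)
  have hq3 : 3 ≤ p ^ k := by
    have hp3 : 3 ≤ p := by
      have := hp.two_le
      omega
    calc 3 ≤ p := hp3
    _ ≤ p ^ k := Nat.le_self_pow (by omega) p
  have hset : {y : ZMod (p ^ k) | y ^ 2 = 1} = {1, -1} := by
    ext y
    simp only [Set.mem_setOf_eq, Set.mem_insert_iff, Set.mem_singleton_iff]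
    constructor
    · intro hy
      rw [zmod_sq_eq_one_iff] at hy
      set a : ℤ := (y.val : ℤ) with ha
      have hcast : ((a : ℤ) : ZMod (p ^ k)) = y := by
        rw [ha]; push_cast; exact ZMod.natCast_rightInverse y
      have hqdvd : ((p : ℤ)) ^ k ∣ (a - 1) * (a + 1) := by push_cast at hy ⊢; exact hy
      by_cases hd : (p : ℤ) ∣ a - 1
      · have hnd : ¬ (p : ℤ) ∣ a + 1 := by
          intro hd2
          have : (p : ℤ) ∣ 2 := by
            have := dvd_sub hd2 hd
            simpa using this
          have hpd : (p : ℕ) ∣ 2 := by exact_mod_cast this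
          rcases (Nat.prime_two.eq_one_or_self_of_dvd p hpd) with h | h
          · exact hp.one_lt.ne' h
          · exact hodd h
        have hcop : IsCoprime ((p : ℤ) ^ k) (a + 1) :=
          ((hpZ.coprime_iff_not_dvd).mpr hnd).pow_left
        have : ((p : ℤ)) ^ k ∣ a - 1 := hcop.dvd_of_dvd_mul_right hqdvd
        left
        have h0 : ((a - 1 : ℤ) : ZMod (p ^ k)) = 0 := by
          rw [ZMod.intCast_zmod_eq_zero_iff_dvd]
          exact_mod_cast this
        push_cast at h0
        rw [hcast] at h0
        linear_combination h0
      · have hcop : IsCoprime ((p : ℤ) ^ k) (a - 1) :=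
          ((hpZ.coprime_iff_not_dvd).mpr hd).pow_left
        have : ((p : ℤ)) ^ k ∣ a + 1 := by
          rw [mul_comm] at hqdvd
          exact hcop.dvd_of_dvd_mul_right hqdvd
        right
        have h0 : ((a + 1 : ℤ) : ZMod (p ^ k)) = 0 := by
          rw [ZMod.intCast_zmod_eq_zero_iff_dvd]
          exact_mod_cast this
        push_cast at h0
        rw [hcast] at h0
        linear_combination h0
    · rintro (rfl | rfl) <;> ring
  have hne : (1 : ZMod (p ^ k)) ≠ -1 := by
    intro h
    have h2 : ((2 : ℕ) : ZMod (p ^ k)) = 0 := by push_cast; linear_combination h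
    rw [ZMod.natCast_eq_zero_iff] at h2
    have := Nat.le_of_dvd (by norm_num) h2
    omega
  calc Nat.card {y : ZMod (p ^ k) // y ^ 2 = 1}
      = ({1, -1} : Set (ZMod (p ^ k))).ncard := by rw [← hset, ← Nat.card_coe_set_eq]; rfl
    _ = 2 := Set.ncard_pair hne

open IntermediateField

lemma card_quadratic_eq (n : ℕ+) :
    Nat.card {F : IntermediateField ℚ (CyclotomicField n ℚ) //
        Module.finrank ℚ F = 2}
      = Nat.card {H : Subgroup (ZMod (n : ℕ))ˣ // H.index = 2} := by
  classical
  set L := CyclotomicField n ℚ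
  haveI : IsCyclotomicExtension {(n : ℕ)} ℚ L :=
    haveI : NeZero ((n : ℕ) : ℚ) := ⟨by simp⟩
    CyclotomicField.isCyclotomicExtension _ _
  haveI : FiniteDimensional ℚ L := IsCyclotomicExtension.finiteDimensional {(n : ℕ)} ℚ L
  haveI : IsGalois ℚ L := IsCyclotomicExtension.isGalois {(n : ℕ)} ℚ L
  have hidx : ∀ F : IntermediateField ℚ L,
      (IntermediateField.fixingSubgroup F).index = Module.finrank ℚ F := by
    intro F
    have h1 : (IntermediateField.fixingSubgroup F).index
        * Nat.card (IntermediateField.fixingSubgroup F) = Nat.card (L ≃ₐ[ℚ] L) :=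
      Subgroup.index_mul_card _
    have h2 : Nat.card (IntermediateField.fixingSubgroup F) = Module.finrank F L := by
      rw [IsGalois.card_fixingSubgroup_eq_finrank]
    have h3 : Nat.card (L ≃ₐ[ℚ] L) = Module.finrank ℚ L := by
      rw [IsGalois.card_aut_eq_finrank]
    have h4 : Module.finrank ℚ F * Module.finrank F L = Module.finrank ℚ L :=
      Module.finrank_mul_finrank ℚ F L
    have h5 : 0 < Module.finrank F L := Module.finrank_pos
    rw [h2] at h1
    rw [h3] at h1
    rw [← h4] at h1
    exact Nat.eq_of_mul_eq_mul_right h5 h1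
  have E1 : {F : IntermediateField ℚ L // Module.finrank ℚ F = 2}
      ≃ {H : Subgroup (L ≃ₐ[ℚ] L) // H.index = 2} :=
  { toFun := fun F => ⟨IntermediateField.fixingSubgroup F.1, by rw [hidx]; exact F.2⟩
    invFun := fun H => ⟨IntermediateField.fixedField H.1, by
      rw [← hidx (IntermediateField.fixedField H.1),
        IntermediateField.fixingSubgroup_fixedField H.1]
      exact H.2⟩
    left_inv := fun F => Subtype.ext (IsGalois.fixedField_fixingSubgroup F.1)
    right_inv := fun H => Subtype.ext (IntermediateField.fixingSubgroup_fixedField H.1) }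
  have e : (L ≃ₐ[ℚ] L) ≃* (ZMod (n : ℕ))ˣ :=
    IsCyclotomicExtension.autEquivPow L (Polynomial.cyclotomic.irreducible_rat n.pos)
  have hcomp1 : (e.toMonoidHom.comp e.symm.toMonoidHom) = MonoidHom.id _ := by
    ext x; simp
  have hcomp2 : (e.symm.toMonoidHom.comp e.toMonoidHom) = MonoidHom.id _ := by
    ext x; simp
  have E2 : {H : Subgroup (L ≃ₐ[ℚ] L) // H.index = 2}
      ≃ {H : Subgroup (ZMod (n : ℕ))ˣ // H.index = 2} :=
  { toFun := fun H => ⟨Subgroup.comap e.symm.toMonoidHom H.1, by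
      rw [Subgroup.index_comap_of_surjective _ e.symm.surjective]; exact H.2⟩
    invFun := fun H => ⟨Subgroup.comap e.toMonoidHom H.1, by
      rw [Subgroup.index_comap_of_surjective _ e.surjective]; exact H.2⟩
    left_inv := fun H => Subtype.ext (by
      show Subgroup.comap e.toMonoidHom (Subgroup.comap e.symm.toMonoidHom H.1) = H.1
      rw [Subgroup.comap_comap, hcomp2, Subgroup.comap_id])
    right_inv := fun H => Subtype.ext (by
      show Subgroup.comap e.symm.toMonoidHom (Subgroup.comap e.toMonoidHom H.1) = H.1
      rw [Subgroup.comap_comap, hcomp1, Subgroup.comap_id]) }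
  rw [Nat.card_congr (E1.trans E2)]

-- generic equivs for squares
def sqOneEquiv {M N : Type*} [Monoid M] [Monoid N] (e : M ≃* N) :
    {y : M // y ^ 2 = 1} ≃ {y : N // y ^ 2 = 1} :=
  Equiv.subtypeEquiv e.toEquiv (fun y => by
    constructor
    · intro h
      show (e y) ^ 2 = 1
      rw [← map_pow, h, map_one]
    · intro h
      have h' : e (y ^ 2) = 1 := by rw [map_pow]; exact h
      have := congrArg e.symm h'
      simpa using this)

def sqOnePiEquiv {ι : Type*} (M : ι → Type*) [∀ i, Monoid (M i)] :
    {y : ∀ i, M i // y ^ 2 = 1} ≃ ∀ i, {z : M i // z ^ 2 = 1} :=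
  ((Equiv.subtypeEquivRight (fun y => by
      rw [funext_iff]
      simp [Pi.pow_apply] : ∀ y : ∀ i, M i, y ^ 2 = 1 ↔ ∀ i, (y i) ^ 2 = 1)).trans
    (Equiv.subtypePiEquivPi (p := fun i (b : M i) => b ^ 2 = 1)))

lemma card_sq_one_crt {r : ℕ} (n : ℕ) (a : Option (Fin r) → ℕ)
    (hcop : Pairwise (Nat.Coprime on a)) (hn : n = ∏ o, a o) :
    Nat.card {y : ZMod n // y ^ 2 = 1}
      = Nat.card {y : ZMod (a none) // y ^ 2 = 1}
        * ∏ i, Nat.card {y : ZMod (a (some i)) // y ^ 2 = 1} := by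
  have e : ZMod n ≃+* ∀ o, ZMod (a o) :=
    (ZMod.ringEquivCongr hn).trans (ZMod.prodEquivPi a hcop)
  rw [Nat.card_congr ((sqOneEquiv e.toMulEquiv).trans (sqOnePiEquiv _)), Nat.card_pi,
    Fintype.prod_option]

lemma card_sq_eq_one_units {M : Type*} [CommMonoid M] :
    Nat.card {x : Mˣ // x ^ 2 = 1} = Nat.card {y : M // y ^ 2 = 1} := by
  have tofun : ∀ x : {x : Mˣ // x ^ 2 = 1}, ((x : Mˣ) : M) ^ 2 = 1 := by
    intro x
    rw [← Units.val_pow_eq_pow_val, x.2, Units.val_one]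
  have inv : ∀ y : {y : M // y ^ 2 = 1}, (y : M) * (y : M) = 1 := by
    intro y; rw [← sq]; exact y.2
  refine Nat.card_congr ⟨fun x => ⟨(x : Mˣ).val, tofun x⟩,
    fun y => ⟨⟨y.1, y.1, inv y, inv y⟩, by ext; rw [Units.val_pow_eq_pow_val]; exact y.2⟩, ?_, ?_⟩
  · rintro ⟨x, hx⟩; ext; rfl
  · rintro ⟨y, hy⟩; rfl

/-- For `n > 1` with prime decomposition `n = 2^m p₁^{m₁} ⋯ p_r^{m_r}`
(the `pᵢ` the distinct odd primes dividing `n`), the number of quadratic subfields of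
the cyclotomic field `ℚ(ζ_n)` is `2^{2+r} - 1` if `m ≥ 3`, `2^{1+r} - 1` if `m = 2`,
and `2^r - 1` if `m ∈ {0, 1}`. -/
theorem stmt6 (n : ℕ+) (hn : 1 < (n : ℕ))
    (m r : ℕ) (p : Fin r → ℕ) (mexp : Fin r → ℕ)
    (hp : ∀ i, (p i).Prime) (hpodd : ∀ i, p i ≠ 2) (hpinj : Function.Injective p)
    (hmexp : ∀ i, 1 ≤ mexp i)
    (hfac : (n : ℕ) = 2 ^ m * ∏ i, p i ^ mexp i) :
    (3 ≤ m →
      Nat.card {F : IntermediateField ℚ (CyclotomicField n ℚ) //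
          Module.finrank ℚ F = 2} = 2 ^ (2 + r) - 1) ∧
    (m = 2 →
      Nat.card {F : IntermediateField ℚ (CyclotomicField n ℚ) //
          Module.finrank ℚ F = 2} = 2 ^ (1 + r) - 1) ∧
    (m ≤ 1 →
      Nat.card {F : IntermediateField ℚ (CyclotomicField n ℚ) //
          Module.finrank ℚ F = 2} = 2 ^ r - 1) := by
  classical
  set a : Option (Fin r) → ℕ := fun o => Option.elim o (2 ^ m) (fun i => p i ^ mexp i) with ha
  have hcop : Pairwise (Nat.Coprime on a) := by
    have base : ∀ i, Nat.Coprime 2 (p i) := fun i =>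
      (Nat.coprime_primes Nat.prime_two (hp i)).mpr (fun h => (hpodd i) h.symm)
    intro x y hxy
    match x, y with
    | none, none => exact absurd rfl hxy
    | none, some j => exact Nat.Coprime.pow _ _ (base j)
    | some i, none => exact (Nat.Coprime.pow _ _ (base i)).symm
    | some i, some j =>
        have hij : p i ≠ p j := fun h => (by simpa using hxy : i ≠ j) (hpinj h)
        exact Nat.Coprime.pow _ _ ((Nat.coprime_primes (hp i) (hp j)).mpr hij)
  have hnprod : (n : ℕ) = ∏ o, a o := by rw [hfac, Fintype.prod_option]; rfl
  have hodds : ∀ i, Nat.card {y : ZMod (a (some i)) // y ^ 2 = 1} = 2 := fun i =>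
    card_sq_one_odd_prime_pow (p i) (mexp i) (hp i) (hpodd i) (hmexp i)
  have hprod : ∏ i, Nat.card {y : ZMod (a (some i)) // y ^ 2 = 1} = 2 ^ r := by
    rw [Finset.prod_congr rfl (fun i _ => hodds i), Finset.prod_const, Finset.card_univ,
      Fintype.card_fin]
  have hkey : ∀ c : ℕ, Nat.card {y : ZMod (2 ^ m) // y ^ 2 = 1} = c →
      Nat.card {F : IntermediateField ℚ (CyclotomicField n ℚ) //
          Module.finrank ℚ F = 2} = c * 2 ^ r - 1 := by
    intro c hc
    have h1 := card_quadratic_eq n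
    have h2 := card_index_two_add_one (ZMod (n : ℕ))ˣ
    have h3 := card_hom_two_eq_card_sq (ZMod (n : ℕ))ˣ
    have h4 := card_sq_eq_one_units (M := ZMod (n : ℕ))
    have h5 := card_sq_one_crt (n : ℕ) a hcop hnprod
    have hc' : Nat.card {y : ZMod (a none) // y ^ 2 = 1} = c := hc
    rw [hc', hprod] at h5
    rw [h3, h4, h5] at h2
    rw [h1, ← h2]
    omega
  refine ⟨?_, ?_, ?_⟩
  · intro hm
    rw [hkey 4 (card_sq_one_two_pow m hm)]
    rw [pow_add]
    norm_num
  · intro hm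
    subst hm
    rw [hkey 2 (by rw [Nat.card_eq_fintype_card]; decide)]
    rw [pow_add]
    norm_num
  · intro hm
    interval_cases m
    · rw [hkey 1 (by rw [Nat.card_eq_fintype_card]; decide)]
      rw [one_mul]
    · rw [hkey 1 (by rw [Nat.card_eq_fintype_card]; decide)]
      rw [one_mul]
end

section
/- Let n > 1 be an integer with prime decomposition n = 2^m p₁^{m₁}⋯p_r^{m_r}, where p₁,…,p_r are the distinct odd primes dividing n, and let Δ ≠ 1 be a squarefree integer (positive or negative). Then ℚ(√Δ) is a subfield of ℚ(ζ_n) (equivalently, there exists x ∈ ℚ(ζ_n) with x² = Δ) if and only if Δ = 2^{w₀}·(−1)^w·∏_{i=1}^r ((−1)^{(p_i−1)/2} p_i)^{w_i} for some w, w₀, w₁,…,w_r ∈ {0,1} such that w₀ = 0 if m < 3 and w = 0 if m < 2. -/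
set_option linter.unusedSectionVars false
set_option linter.unusedVariables false


open Polynomial

namespace Stmt7

instance pnatNeZeroNat (n : ℕ+) : NeZero (n : ℕ) := ⟨n.pos.ne'⟩

instance pnatCycExt (n : ℕ+) : IsCyclotomicExtension {(n : ℕ)} ℚ (CyclotomicField n ℚ) :=
  CyclotomicField.isCyclotomicExtension _ _

variable {L : Type*} [Field L] [CharZero L]

lemma sq_i {M : ℕ} (hM : 0 < M) {μ : L} (hμ : IsPrimitiveRoot μ M) (h4 : 4 ∣ M) :
    (μ ^ (M / 4)) ^ 2 = -1 := by
  have h : IsPrimitiveRoot (μ ^ (M / 4)) 4 := hμ.pow hM (Nat.div_mul_cancel h4).symm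
  have h2 : IsPrimitiveRoot ((μ ^ (M / 4)) ^ 2) 2 := h.pow (by norm_num) (by norm_num)
  exact h2.eq_neg_one_of_two_right

lemma zeta8_pow4 {M : ℕ} (hM : 0 < M) {μ : L} (hμ : IsPrimitiveRoot μ M) (h8 : 8 ∣ M) :
    (μ ^ (M / 8)) ^ 4 = -1 := by
  have h : IsPrimitiveRoot (μ ^ (M / 8)) 8 := hμ.pow hM (Nat.div_mul_cancel h8).symm
  have h2 : IsPrimitiveRoot ((μ ^ (M / 8)) ^ 4) 2 := h.pow (by norm_num) (by norm_num)
  exact h2.eq_neg_one_of_two_right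

lemma sq_sqrt2 {M : ℕ} (hM : 0 < M) {μ : L} (hμ : IsPrimitiveRoot μ M) (h8 : 8 ∣ M) :
    (μ ^ (M / 8) + (μ ^ (M / 8))⁻¹) ^ 2 = 2 := by
  have h : IsPrimitiveRoot (μ ^ (M / 8)) 8 := hμ.pow hM (Nat.div_mul_cancel h8).symm
  have h4 := zeta8_pow4 hM hμ h8
  have hne : (μ ^ (M / 8)) ≠ 0 := by
    intro h0
    rw [h0] at h4
    norm_num at h4
  set z := μ ^ (M / 8)
  field_simp
  ring_nf
  linear_combination h4

lemma pow_eq_self_of_modeq {d : ℕ} {η : L} (hη : η ^ d = 1) {B : ℕ} (hB : B ≡ 1 [MOD d]) :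
    η ^ B = η := by
  rw [pow_eq_pow_mod B hη, hB, ← pow_eq_pow_mod 1 hη, pow_one]

lemma sigma_pow_root {M : ℕ} (hM : 0 < M) {μ η : L} (hμ : IsPrimitiveRoot μ M) (σ : L →+* L)
    (B : ℕ) (hσ : σ μ = μ ^ B) (hη : η ^ M = 1) : σ η = η ^ B := by
  haveI : NeZero M := ⟨hM.ne'⟩
  obtain ⟨k, -, hk⟩ := hμ.eq_pow_of_pow_eq_one hη
  rw [← hk, map_pow, hσ]
  exact pow_right_comm μ B k

lemma exists_aut (M : ℕ+) (B : ℕ) (hB : B.Coprime M) :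
    ∃ σ : CyclotomicField M ℚ ≃ₐ[ℚ] CyclotomicField M ℚ,
      σ (IsCyclotomicExtension.zeta M ℚ (CyclotomicField M ℚ)) =
        (IsCyclotomicExtension.zeta M ℚ (CyclotomicField M ℚ)) ^ B := by
  set L := CyclotomicField M ℚ
  have hirr : Irreducible (cyclotomic (M : ℕ) ℚ) := cyclotomic.irreducible_rat M.pos
  set b : (ZMod (M : ℕ))ˣ := ZMod.unitOfCoprime B hB with hbdef
  refine ⟨(IsCyclotomicExtension.autEquivPow L hirr).symm b, ?_⟩
  have hζ := IsCyclotomicExtension.zeta_spec M ℚ L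
  haveI : NeZero ((M : ℕ)) := ⟨M.pos.ne'⟩
  have hspec := hζ.autToPow_spec ℚ ((IsCyclotomicExtension.autEquivPow L hirr).symm b)
  have happ : (IsCyclotomicExtension.autEquivPow L hirr)
      ((IsCyclotomicExtension.autEquivPow L hirr).symm b) = b :=
    (IsCyclotomicExtension.autEquivPow L hirr).apply_symm_apply b
  rw [IsCyclotomicExtension.autEquivPow_apply] at happ
  rw [← hspec]
  have hval : ((hζ.autToPow ℚ ((IsCyclotomicExtension.autEquivPow L hirr).symm b) : ZMod (M : ℕ))).val
      = B % (M : ℕ) := by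
    have : (hζ.autToPow ℚ ((IsCyclotomicExtension.autEquivPow L hirr).symm b)) = b := happ
    rw [this, hbdef]
    simp [ZMod.coe_unitOfCoprime, ZMod.val_natCast]
  rw [hval, ← pow_eq_pow_mod B hζ.pow_eq_one]


open scoped Classical in
/-- Gauss sum of the quadratic character mod `q` in `L`, w.r.t. `ζ := μ^(M/q)`. -/
noncomputable def gaussE (μ : L) (M q : ℕ) : L :=
  if h : q.Prime ∧ (μ ^ (M / q)) ^ q = 1 then
    haveI : Fact q.Prime := ⟨h.1⟩
    gaussSum ((quadraticChar (ZMod q)).ringHomComp (Int.castRingHom L))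
      (AddChar.zmodChar q h.2)
  else 0

variable [CharZero L]

lemma gaussE_sq {M : ℕ} (hM : 0 < M) {μ : L} (hμ : IsPrimitiveRoot μ M)
    {q : ℕ} (hq : q.Prime) (hq2 : q ≠ 2) (hqM : q ∣ M) :
    gaussE μ M q ^ 2 = (((-1) ^ ((q - 1) / 2) * q : ℤ) : L) := by
  classical
  haveI : Fact q.Prime := ⟨hq⟩
  have hζ : IsPrimitiveRoot (μ ^ (M / q)) q := hμ.pow hM (Nat.div_mul_cancel hqM).symm
  have hpow : (μ ^ (M / q)) ^ q = 1 := hζ.pow_eq_one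
  rw [gaussE, dif_pos ⟨hq, hpow⟩]
  have hring : ringChar (ZMod q) ≠ 2 := by
    rw [ZMod.ringChar_zmod_n]; exact hq2
  have hχ1 : (quadraticChar (ZMod q)).ringHomComp (Int.castRingHom L) ≠ 1 :=
    (MulChar.ringHomComp_ne_one_iff Int.cast_injective).mpr (quadraticChar_ne_one hring)
  have hχ2 : ((quadraticChar (ZMod q)).ringHomComp (Int.castRingHom L)).IsQuadratic :=
    (quadraticChar_isQuadratic (ZMod q)).comp _
  have hψ : (AddChar.zmodChar q hpow).IsPrimitive :=
    AddChar.zmodChar_primitive_of_primitive_root q hζ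
  rw [gaussSum_sq hχ1 hχ2 hψ]
  rw [MulChar.ringHomComp_apply]
  have hodd : q % 2 = 1 := hq.two_le.lt_or_eq.elim (fun _ => Nat.odd_iff.mp (hq.odd_of_ne_two hq2)) (fun h => absurd h.symm hq2)
  have hcard : Fintype.card (ZMod q) = q := ZMod.card q
  rw [quadraticChar_neg_one hring, hcard, ZMod.χ₄_eq_neg_one_pow hodd]
  have hdiv : q / 2 = (q - 1) / 2 := by omega
  push_cast
  rw [hdiv]
  simp


lemma gaussE_map {M : ℕ} (hM : 0 < M) {μ : L} (hμ : IsPrimitiveRoot μ M)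
    {q : ℕ} [hfq : Fact q.Prime] (hq2 : q ≠ 2) (hqM : q ∣ M)
    (σ : L →+* L) (B : ℕ) (hσ : σ μ = μ ^ B) (hB : (B : ZMod q) ≠ 0) :
    σ (gaussE μ M q) = ((quadraticChar (ZMod q) (B : ZMod q) : ℤ) : L) * gaussE μ M q := by
  classical
  have hq := hfq.out
  have hζ : IsPrimitiveRoot (μ ^ (M / q)) q := hμ.pow hM (Nat.div_mul_cancel hqM).symm
  have hpow : (μ ^ (M / q)) ^ q = 1 := hζ.pow_eq_one
  set χ : MulChar (ZMod q) L := (quadraticChar (ZMod q)).ringHomComp (Int.castRingHom L) with hχdef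
  set ψ : AddChar (ZMod q) L := AddChar.zmodChar q hpow with hψdef
  have hgauss : gaussE μ M q = gaussSum χ ψ := by
    rw [gaussE, dif_pos ⟨hq, hpow⟩]
  have hσζ : ∀ k : ℕ, σ ((μ ^ (M / q)) ^ k) = (μ ^ (M / q)) ^ (B * k) := by
    intro k
    rw [map_pow, map_pow, hσ, ← pow_mul, ← pow_mul, ← pow_mul]
    ring_nf
  have hσψ : ∀ a : ZMod q, σ (ψ a) = ψ ((B : ZMod q) * a) := by
    intro a
    rw [hψdef, AddChar.zmodChar_apply, hσζ]
    have : ((B : ZMod q) * a) = ((B * a.val : ℕ) : ZMod q) := by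
      push_cast
      rw [ZMod.natCast_val, ZMod.cast_id]
    rw [this, AddChar.zmodChar_apply']
  have hσχ : ∀ a : ZMod q, σ (χ a) = χ a := by
    intro a
    rw [hχdef, MulChar.ringHomComp_apply]
    simp
  have hmap : σ (gaussSum χ ψ) = gaussSum χ (AddChar.mulShift ψ (B : ZMod q)) := by
    rw [gaussSum, gaussSum, map_sum]
    refine Finset.sum_congr rfl fun a _ => ?_
    rw [map_mul, hσχ, hσψ, AddChar.mulShift_apply]
  have hu : IsUnit ((B : ZMod q)) := hB.isUnit
  have hshift := gaussSum_mulShift χ ψ hu.unit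
  have hucoe : ((hu.unit : (ZMod q)ˣ) : ZMod q) = (B : ZMod q) := rfl
  rw [hucoe] at hshift
  -- hshift : χ B * gaussSum χ (mulShift ψ B) = gaussSum χ ψ
  have hval : χ ((B : ZMod q)) = ((quadraticChar (ZMod q) (B : ZMod q) : ℤ) : L) := by
    rw [hχdef, MulChar.ringHomComp_apply]; simp
  have hsq : χ ((B : ZMod q)) * χ ((B : ZMod q)) = 1 := by
    rw [hval, ← Int.cast_mul, ← pow_two, quadraticChar_sq_one hB]
    simp
  rw [hgauss, hmap, ← hshift, ← mul_assoc, ← hval, hsq, one_mul]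

noncomputable def cycEmb (n M : ℕ+) (h : (n : ℕ) ∣ (M : ℕ)) :
    CyclotomicField n ℚ →ₐ[ℚ] CyclotomicField M ℚ := by
  haveI := IsCyclotomicExtension.isSplittingField_X_pow_sub_one n ℚ (CyclotomicField n ℚ)
  refine IsSplittingField.lift (CyclotomicField n ℚ) (X ^ (n : ℕ) - 1) ?_
  have hsplit : Splits ((X ^ (M : ℕ) - 1 : ℚ[X]).map (algebraMap ℚ (CyclotomicField M ℚ))) :=
    IsCyclotomicExtension.splits_X_pow_sub_one ℚ (CyclotomicField M ℚ) (Set.mem_singleton (M : ℕ))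
  refine hsplit.of_dvd ?_ ?_
  · have := X_pow_sub_C_ne_zero (n := (M : ℕ)) M.pos (1 : ℚ)
    exact Polynomial.map_ne_zero (by simpa using this)
  · apply Polynomial.map_dvd
    obtain ⟨k, hk⟩ := h
    have : (X : ℚ[X]) ^ (M : ℕ) - 1 = ((X ^ (n : ℕ)) ^ k - 1 ^ k) := by
      rw [← pow_mul, ← hk, one_pow]
    rw [this]
    exact sub_dvd_pow_sub_pow _ _ k

lemma fix_of_fix_zeta {n M : ℕ+} (φ : CyclotomicField n ℚ →ₐ[ℚ] CyclotomicField M ℚ)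
    (σ : CyclotomicField M ℚ ≃ₐ[ℚ] CyclotomicField M ℚ)
    (hfix : σ (φ (IsCyclotomicExtension.zeta n ℚ (CyclotomicField n ℚ))) =
      φ (IsCyclotomicExtension.zeta n ℚ (CyclotomicField n ℚ))) (x : CyclotomicField n ℚ) :
    σ (φ x) = φ x := by
  have hζ := IsCyclotomicExtension.zeta_spec n ℚ (CyclotomicField n ℚ)
  have hext : (σ.toAlgHom.comp φ) = φ := by
    apply PowerBasis.algHom_ext (hζ.powerBasis ℚ)
    rw [IsPrimitiveRoot.powerBasis_gen]
    simpa using hfix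
  calc σ (φ x) = (σ.toAlgHom.comp φ) x := rfl
  _ = φ x := by rw [hext]


lemma intCast_zmod4_eq {a b : ℤ} (h : a % 4 = b % 4) : ((a : ZMod 4)) = ((b : ZMod 4)) := by
  rw [ZMod.intCast_eq_intCast_iff]
  exact h

lemma star_mod_four {q : ℕ} (hq : q.Prime) (hq2 : q ≠ 2) :
    ((((-1 : ℤ) ^ ((q - 1) / 2) * q : ℤ) : ZMod 4)) = 1 := by
  have hodd : q % 2 = 1 :=
    hq.two_le.lt_or_eq.elim (fun _ => Nat.odd_iff.mp (hq.odd_of_ne_two hq2))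
      (fun h => absurd h.symm hq2)
  have h4 : q % 4 = 1 ∨ q % 4 = 3 := by omega
  have hqz : ((q : ℕ) : ZMod 4) = ((q % 4 : ℕ) : ZMod 4) := (ZMod.natCast_mod q 4).symm
  rcases h4 with h | h
  · have hev : (-1 : ℤ) ^ ((q - 1) / 2) = 1 := by
      have : (q - 1) / 2 % 2 = 0 := by omega
      rw [← Nat.div_add_mod ((q - 1) / 2) 2, this, pow_add, pow_mul]
      norm_num
    push_cast [hev, one_mul]
    rw [hqz, h]
    norm_num
  · have hev : (-1 : ℤ) ^ ((q - 1) / 2) = -1 := by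
      have : (q - 1) / 2 % 2 = 1 := by omega
      rw [← Nat.div_add_mod ((q - 1) / 2) 2, this, pow_add, pow_mul]
      norm_num
    push_cast [hev]
    rw [hqz, h]
    decide


lemma mem_Q {Δ : ℤ} (hΔ0 : Δ ≠ 0) {q : ℕ} (hq : q ∈ Δ.natAbs.primeFactors.erase 2) :
    q.Prime ∧ q ≠ 2 ∧ (q : ℤ) ∣ Δ := by
  obtain ⟨hne, hmem⟩ := Finset.mem_erase.mp hq
  obtain ⟨hp, hdvd, -⟩ := Nat.mem_primeFactors.mp hmem
  exact ⟨hp, hne, Int.natCast_dvd.mpr hdvd⟩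

lemma T_decomp {Δ : ℤ} (hsf : Squarefree Δ) (hΔ0 : Δ ≠ 0) :
    (Δ.natAbs : ℤ) = 2 ^ (if (2:ℤ) ∣ Δ then 1 else 0) *
      ∏ q ∈ Δ.natAbs.primeFactors.erase 2, (q : ℤ) := by
  classical
  have hTsf : Squarefree Δ.natAbs := Int.squarefree_natAbs.mpr hsf
  have hT0 : Δ.natAbs ≠ 0 := Int.natAbs_ne_zero.mpr hΔ0
  have hprod : ∏ q ∈ Δ.natAbs.primeFactors, q = Δ.natAbs :=
    Nat.prod_primeFactors_of_squarefree hTsf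
  have h2 : (2:ℤ) ∣ Δ ↔ 2 ∣ Δ.natAbs := Int.natCast_dvd (m := 2)
  by_cases hdvd : (2:ℤ) ∣ Δ
  · rw [if_pos hdvd]
    have h2mem : 2 ∈ Δ.natAbs.primeFactors :=
      Nat.mem_primeFactors.mpr ⟨Nat.prime_two, h2.mp hdvd, hT0⟩
    have hnat : Δ.natAbs = 2 * ∏ q ∈ Δ.natAbs.primeFactors.erase 2, q := by
      conv_lhs => rw [← hprod]
      exact (Finset.mul_prod_erase _ _ h2mem).symm
    conv_lhs => rw [hnat]
    push_cast
    ring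
  · rw [if_neg hdvd]
    have h2mem : 2 ∉ Δ.natAbs.primeFactors := fun h =>
      hdvd (h2.mpr (Nat.mem_primeFactors.mp h).2.1)
    rw [Finset.erase_eq_of_notMem h2mem]
    conv_lhs => rw [← hprod]
    push_cast
    ring

lemma core_arith {Δ : ℤ} (hsf : Squarefree Δ) (hΔ0 : Δ ≠ 0) :
    ∃ w : ℕ, w ≤ 1 ∧
      Δ * (∏ q ∈ Δ.natAbs.primeFactors.erase 2, ((-1 : ℤ) ^ ((q - 1) / 2) * q)) *
        2 ^ (if (2:ℤ) ∣ Δ then 1 else 0) * (-1) ^ w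
        = (2 ^ (if (2:ℤ) ∣ Δ then 1 else 0) *
            ∏ q ∈ Δ.natAbs.primeFactors.erase 2, (q:ℤ)) ^ 2 ∧
      (Δ % 4 = 3 → w = 1) := by
  classical
  set Q := Δ.natAbs.primeFactors.erase 2 with hQdef
  set e := (if (2:ℤ) ∣ Δ then 1 else 0) with hedef
  set P := ∏ q ∈ Q, ((-1 : ℤ) ^ ((q - 1) / 2) * (q:ℤ)) with hPdef
  set S := ∑ q ∈ Q, ((q - 1) / 2) with hSdef
  set c := (2:ℤ) ^ e * ∏ q ∈ Q, (q:ℤ) with hcdef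
  have hP : P = (-1) ^ S * ∏ q ∈ Q, (q:ℤ) := by
    rw [hPdef, Finset.prod_mul_distrib, Finset.prod_pow_eq_pow_sum]
  have hT := T_decomp hsf hΔ0
  rw [← hQdef, ← hedef, ← hcdef] at hT
  have hPmod : ((P : ZMod 4)) = 1 := by
    rw [hPdef]
    push_cast
    refine Finset.prod_eq_one fun q hq => ?_
    obtain ⟨hp, h2, -⟩ := mem_Q hΔ0 hq
    have := star_mod_four hp h2
    push_cast at this
    exact this
  have hD : Δ * P * 2 ^ e = c ^ 2 ∨ Δ * P * 2 ^ e = -c ^ 2 := by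
    rcases Int.natAbs_eq Δ with habs | habs
    · rcases Nat.even_or_odd S with hS | hS
      · left; rw [habs, hT, hP, hS.neg_one_pow, hcdef]; ring
      · right; rw [habs, hT, hP, hS.neg_one_pow, hcdef]; ring
    · rcases Nat.even_or_odd S with hS | hS
      · right; rw [habs, hT, hP, hS.neg_one_pow, hcdef]; ring
      · left; rw [habs, hT, hP, hS.neg_one_pow, hcdef]; ring
  rcases hD with hD | hD
  · refine ⟨0, by norm_num, by rw [pow_zero, mul_one, hD], fun h34 => ?_⟩
    exfalso
    have he0 : e = 0 := by
      rw [hedef, if_neg]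
      intro h2d
      obtain ⟨k, hk⟩ := h2d
      omega
    have hΔ4 : ((Δ : ZMod 4)) = 3 := by
      have := intCast_zmod4_eq (a := Δ) (b := 3) (by omega)
      simpa using this
    have hprodsq : ((∏ q ∈ Q, (q:ℤ) : ℤ) : ZMod 4) ^ 2 = 1 := by
      have h1 : ((-1 : ZMod 4) ^ S) * ((∏ q ∈ Q, (q:ℤ) : ℤ) : ZMod 4) = 1 := by
        have : ((P : ZMod 4)) = ((-1 : ZMod 4) ^ S) * ((∏ q ∈ Q, (q:ℤ) : ℤ) : ZMod 4) := by
          rw [hP]; push_cast; ring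
        rw [← this, hPmod]
      have h2 : ((-1 : ZMod 4) ^ S) ^ 2 * ((∏ q ∈ Q, (q:ℤ) : ℤ) : ZMod 4) ^ 2 = 1 := by
        rw [← mul_pow, h1, one_pow]
      have h3 : ((-1 : ZMod 4) ^ S) ^ 2 = 1 := by
        rw [← pow_mul, mul_comm S 2, pow_mul]
        norm_num
      rwa [h3, one_mul] at h2
    have hcast := congrArg (fun z : ℤ => (z : ZMod 4)) hD
    simp only [he0, pow_zero, mul_one] at hcast
    push_cast at hcast
    rw [hΔ4, hPmod] at hcast
    have hc4 : ((c : ℤ) : ZMod 4) ^ 2 = 1 := by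
      rw [hcdef, he0]
      push_cast
      simpa using hprodsq
    rw [hc4] at hcast
    exact absurd hcast (by decide)
  · exact ⟨1, le_refl 1, by rw [pow_one]; rw [hD]; ring, fun _ => rfl⟩


lemma coprime_of_modeq_one {B A : ℕ} (h : B ≡ 1 [MOD A]) : B.Coprime A := by
  have hd : (A : ℤ) ∣ 1 - B := h.dvd
  have hg : ((Nat.gcd B A : ℕ) : ℤ) ∣ 1 := by
    have h1 : ((Nat.gcd B A : ℕ) : ℤ) ∣ (B : ℤ) := Int.natCast_dvd_natCast.mpr (Nat.gcd_dvd_left _ _)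
    have h2 : ((Nat.gcd B A : ℕ) : ℤ) ∣ (A : ℤ) := Int.natCast_dvd_natCast.mpr (Nat.gcd_dvd_right _ _)
    have := dvd_add (h2.trans hd) h1
    simpa using this
  have := Int.eq_one_of_dvd_one (by positivity) hg
  exact_mod_cast this

lemma forward_core {n : ℕ+} (hn : 1 < (n : ℕ)) {Δ : ℤ} (hsf : Squarefree Δ)
    (x : CyclotomicField n ℚ) (hx : x ^ 2 = (Δ : CyclotomicField n ℚ)) :
    (∀ q : ℕ, q.Prime → q ≠ 2 → (q : ℤ) ∣ Δ → q ∣ (n : ℕ)) ∧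
      ((2 : ℤ) ∣ Δ → 8 ∣ (n : ℕ)) ∧ (Δ % 4 = 3 → 4 ∣ (n : ℕ)) := by
  classical
  have hΔ0 : Δ ≠ 0 := hsf.ne_zero
  set Q := Δ.natAbs.primeFactors.erase 2 with hQdef
  set e := (if (2:ℤ) ∣ Δ then 1 else 0) with hedef
  obtain ⟨w, hw1, hw, hw3⟩ := core_arith hsf hΔ0
  set Mn : ℕ := 8 * (n : ℕ) * ∏ q ∈ Q, q with hMdef
  have hprodpos : 0 < ∏ q ∈ Q, q :=
    Finset.prod_pos fun q hq => (mem_Q hΔ0 hq).1.pos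
  have hM0 : 0 < Mn := by
    have : 0 < (n : ℕ) := n.pos
    positivity
  set M : ℕ+ := ⟨Mn, hM0⟩ with hMdef2
  set L' := CyclotomicField M ℚ with hLdef
  set μ := IsCyclotomicExtension.zeta M ℚ L' with hμdef
  have hμp : IsPrimitiveRoot μ Mn := IsCyclotomicExtension.zeta_spec M ℚ L'
  have hnM : (n : ℕ) ∣ Mn := ⟨8 * ∏ q ∈ Q, q, by rw [hMdef]; ring⟩
  have h8M : 8 ∣ Mn := ⟨(n : ℕ) * ∏ q ∈ Q, q, by rw [hMdef]; ring⟩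
  have h4M : 4 ∣ Mn := dvd_trans ⟨2, rfl⟩ h8M
  have hqM : ∀ q ∈ Q, q ∣ Mn := fun q hq =>
    Dvd.dvd.mul_left (Finset.dvd_prod_of_mem _ hq) _
  set φ := cycEmb n M hnM with hφdef
  set y := φ x with hydef
  set z8 := μ ^ (Mn / 8) with hz8def
  set s2 := z8 + z8⁻¹ with hs2def
  set ii := μ ^ (Mn / 4) with hiidef
  set G := ∏ q ∈ Q, gaussE μ Mn q with hGdef
  set Y := y * G * s2 ^ e * ii ^ w with hYdef
  set c : ℤ := 2 ^ e * ∏ q ∈ Q, (q:ℤ) with hcdef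
  have hc0 : c ≠ 0 := by
    rw [hcdef]
    have : (0:ℤ) < ∏ q ∈ Q, (q:ℤ) := by
      refine Finset.prod_pos fun q hq => ?_
      exact_mod_cast (mem_Q hΔ0 hq).1.pos
    positivity
  -- squares
  have hs2sq : s2 ^ 2 = 2 := sq_sqrt2 hM0 hμp h8M
  have hii2 : ii ^ 2 = -1 := sq_i hM0 hμp h4M
  have hz84 : z8 ^ 4 = -1 := zeta8_pow4 hM0 hμp h8M
  have hz8pow : z8 ^ 8 = 1 := by
    rw [hz8def, ← pow_mul, Nat.div_mul_cancel h8M, hμp.pow_eq_one]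
  have hiipow : ii ^ 4 = 1 := by
    rw [hiidef, ← pow_mul, Nat.div_mul_cancel h4M, hμp.pow_eq_one]
  have hz80 : z8 ≠ 0 := by
    intro h0
    rw [h0] at hz84
    norm_num at hz84
  have hY2 : Y ^ 2 = ((c ^ 2 : ℤ) : L') := by
    have hy2 : y ^ 2 = ((Δ : ℤ) : L') := by
      rw [hydef, ← map_pow, hx, map_intCast]
    have hG2 : G ^ 2 = ((∏ q ∈ Q, ((-1:ℤ) ^ ((q - 1) / 2) * q) : ℤ) : L') := by
      rw [hGdef, ← Finset.prod_pow]
      push_cast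
      refine Finset.prod_congr rfl fun q hq => ?_
      obtain ⟨hqp, hq2, -⟩ := mem_Q hΔ0 hq
      rw [gaussE_sq hM0 hμp hqp hq2 (hqM q hq)]
    have hs2e : (s2 ^ e) ^ 2 = (2 : L') ^ e := by
      rw [← pow_mul, mul_comm e 2, pow_mul, hs2sq]
    have hiiw : (ii ^ w) ^ 2 = (-1 : L') ^ w := by
      rw [← pow_mul, mul_comm w 2, pow_mul, hii2]
    calc Y ^ 2 = y ^ 2 * G ^ 2 * (s2 ^ e) ^ 2 * (ii ^ w) ^ 2 := by rw [hYdef]; ring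
    _ = ((Δ : ℤ) : L') * ((∏ q ∈ Q, ((-1:ℤ) ^ ((q - 1) / 2) * q) : ℤ) : L') *
          (2 : L') ^ e * (-1 : L') ^ w := by rw [hy2, hG2, hs2e, hiiw]
    _ = ((Δ * (∏ q ∈ Q, ((-1:ℤ) ^ ((q - 1) / 2) * q)) * 2 ^ e * (-1) ^ w : ℤ) : L') := by
          push_cast +zetaDelta; ring
    _ = ((c ^ 2 : ℤ) : L') := by rw [hw, hcdef]
  have hYpm : Y = ((c : ℤ) : L') ∨ Y = -((c : ℤ) : L') := by
    have h0 : (Y - ((c : ℤ) : L')) * (Y + ((c : ℤ) : L')) = 0 := by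
      have hexp : (Y - ((c : ℤ) : L')) * (Y + ((c : ℤ) : L')) = Y ^ 2 - ((c : ℤ) : L') ^ 2 := by
        ring
      rw [hexp, hY2]
      push_cast
      ring
    rcases mul_eq_zero.mp h0 with h | h
    · exact Or.inl (sub_eq_zero.mp h)
    · exact Or.inr (eq_neg_of_add_eq_zero_left h)
  have hYne : Y ≠ 0 := by
    rcases hYpm with h | h <;> rw [h] <;> simp [Int.cast_ne_zero, hc0]
  have contra : ∀ σ : L' ≃ₐ[ℚ] L', σ Y = -Y → False := by
    intro σ hσ
    have hfix : σ Y = Y := by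
      rcases hYpm with h | h <;> rw [h]
      · exact map_intCast σ c
      · rw [map_neg, map_intCast]
    rw [hfix] at hσ
    have hY0 : Y = 0 := by linear_combination (1/2 : L') * hσ
    exact hYne hY0
  -- action helpers
  have hpowB : ∀ (σ : L' ≃ₐ[ℚ] L') (B : ℕ), σ μ = μ ^ B → ∀ k : ℕ, σ (μ ^ k) = (μ ^ k) ^ B := by
    intro σ B h k
    rw [map_pow, h]
    exact pow_right_comm μ B k
  have hfixy : ∀ (σ : L' ≃ₐ[ℚ] L') (B : ℕ), σ μ = μ ^ B → B ≡ 1 [MOD (n : ℕ)] → σ y = y := by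
    intro σ B hσ hBn
    refine fix_of_fix_zeta φ σ ?_ x
    set η := φ (IsCyclotomicExtension.zeta n ℚ (CyclotomicField n ℚ)) with hηdef
    have hηn : η ^ (n : ℕ) = 1 := by
      rw [hηdef, ← map_pow, (IsCyclotomicExtension.zeta_spec n ℚ (CyclotomicField n ℚ)).pow_eq_one,
        map_one]
    have hηM : η ^ Mn = 1 := by
      obtain ⟨k, hk⟩ := hnM
      rw [hk, pow_mul, hηn, one_pow]
    have hση : σ η = η ^ B := sigma_pow_root hM0 hμp (σ : L' →+* L') B hσ hηM
    rw [hση]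
    exact pow_eq_self_of_modeq hηn hBn
  have hfixz8 : ∀ (σ : L' ≃ₐ[ℚ] L') (B : ℕ), σ μ = μ ^ B → B ≡ 1 [MOD 8] → σ s2 = s2 := by
    intro σ B hσ hB8
    have h1 : σ z8 = z8 := by
      rw [hz8def, hpowB σ B hσ]
      exact pow_eq_self_of_modeq hz8pow hB8
    rw [hs2def, map_add, h1, map_inv₀, h1]
  have hflipz8 : ∀ (σ : L' ≃ₐ[ℚ] L') (B : ℕ), σ μ = μ ^ B → B ≡ 5 [MOD 8] → σ s2 = -s2 := by
    intro σ B hσ hB8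
    have h5 : z8 ^ 5 = -z8 := by
      have : z8 ^ 5 = z8 ^ 4 * z8 := by ring
      rw [this, hz84]
      ring
    have h1 : σ z8 = -z8 := by
      rw [hz8def, hpowB σ B hσ, ← hz8def, pow_eq_pow_mod B hz8pow, hB8]
      norm_num [h5]
    rw [hs2def, map_add, h1, map_inv₀, h1, inv_neg]
    ring
  have hfixii : ∀ (σ : L' ≃ₐ[ℚ] L') (B : ℕ), σ μ = μ ^ B → B ≡ 1 [MOD 4] → σ ii = ii := by
    intro σ B hσ hB4
    rw [hiidef, hpowB σ B hσ]
    exact pow_eq_self_of_modeq hiipow hB4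
  have hflipii : ∀ (σ : L' ≃ₐ[ℚ] L') (B : ℕ), σ μ = μ ^ B → B ≡ 3 [MOD 4] → σ ii = -ii := by
    intro σ B hσ hB4
    have h3 : ii ^ 3 = -ii := by
      have : ii ^ 3 = ii ^ 2 * ii := by ring
      rw [this, hii2]
      ring
    rw [hiidef, hpowB σ B hσ, ← hiidef, pow_eq_pow_mod B hiipow, hB4]
    norm_num [h3]
  have hfixg : ∀ (σ : L' ≃ₐ[ℚ] L') (B : ℕ), σ μ = μ ^ B → ∀ q ∈ Q, B ≡ 1 [MOD q] →
      σ (gaussE μ Mn q) = gaussE μ Mn q := by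
    intro σ B hσ q hq hBq
    obtain ⟨hqp, hq2, -⟩ := mem_Q hΔ0 hq
    haveI : Fact q.Prime := ⟨hqp⟩
    have hB1 : (B : ZMod q) = 1 := by
      have := (ZMod.natCast_eq_natCast_iff B 1 q).mpr hBq
      simpa using this
    have hBne : (B : ZMod q) ≠ 0 := by
      rw [hB1]
      exact one_ne_zero
    have hmap := gaussE_map hM0 hμp hq2 (hqM q hq) (σ : L' →+* L') B hσ hBne
    rw [hB1] at hmap
    simp only [map_one, Int.cast_one, one_mul] at hmap
    exact hmap
  refine ⟨?_, ?_, ?_⟩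
  · -- odd primes dividing Δ divide n
    intro q₀ hq₀p hq₀2 hq₀Δ
    by_contra hq₀n
    have hq₀Q : q₀ ∈ Q := by
      rw [hQdef]
      exact Finset.mem_erase.mpr ⟨hq₀2, Nat.mem_primeFactors.mpr
        ⟨hq₀p, Int.natCast_dvd.mp hq₀Δ, Int.natAbs_ne_zero.mpr hΔ0⟩⟩
    set A := 8 * (n : ℕ) * ∏ q ∈ Q.erase q₀, q with hAdef
    have hMA : Mn = q₀ * A := by
      rw [hMdef, hAdef, ← Finset.mul_prod_erase _ _ hq₀Q]
      ring
    have hq₀A : Nat.Coprime q₀ A := by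
      rw [Nat.Prime.coprime_iff_not_dvd hq₀p]
      intro hdvd
      rcases (Nat.Prime.dvd_mul hq₀p).mp hdvd with h | h
      · rcases (Nat.Prime.dvd_mul hq₀p).mp h with h8 | hn'
        · have h2 : q₀ ∣ 2 := hq₀p.dvd_of_dvd_pow
            (show q₀ ∣ 2 ^ 3 by exact (by norm_num : (8:ℕ) = 2 ^ 3) ▸ h8)
          exact hq₀2 ((Nat.prime_dvd_prime_iff_eq hq₀p Nat.prime_two).mp h2)
        · exact hq₀n hn'
      · obtain ⟨q', hq'mem, hq'dvd⟩ := hq₀p.prime.exists_mem_finset_dvd h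
        have hq'Q : q' ∈ Q := Finset.mem_of_mem_erase hq'mem
        have heq : q₀ = q' := (Nat.prime_dvd_prime_iff_eq hq₀p (mem_Q hΔ0 hq'Q).1).mp hq'dvd
        exact (Finset.mem_erase.mp hq'mem).1 heq.symm
    haveI : Fact q₀.Prime := ⟨hq₀p⟩
    have hring : ringChar (ZMod q₀) ≠ 2 := by
      rw [ZMod.ringChar_zmod_n]
      exact hq₀2
    obtain ⟨a, ha⟩ := FiniteField.exists_nonsquare hring
    have haχ : quadraticChar (ZMod q₀) a = -1 := quadraticChar_neg_one_iff_not_isSquare.mpr ha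
    have ha0 : a ≠ 0 := by
      intro h0
      exact ha ⟨0, by rw [h0]; ring⟩
    obtain ⟨B, hB1, hB2⟩ := Nat.chineseRemainder hq₀A a.val 1
    have hBq₀ : (B : ZMod q₀) = a := by
      have := (ZMod.natCast_eq_natCast_iff B a.val q₀).mpr hB1
      rwa [ZMod.natCast_val, ZMod.cast_id] at this
    have hBcop : B.Coprime Mn := by
      rw [hMA]
      refine Nat.Coprime.mul_right ?_ (coprime_of_modeq_one hB2)
      rw [Nat.coprime_comm, Nat.Prime.coprime_iff_not_dvd hq₀p]
      intro hdvd
      have h0 : (B : ZMod q₀) = 0 := (ZMod.natCast_eq_zero_iff B q₀).mpr hdvd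
      rw [hBq₀] at h0
      exact ha0 h0
    obtain ⟨σ, hσμ⟩ := exists_aut M B hBcop
    have hσμ' : σ μ = μ ^ B := hσμ
    have h8A : 8 ∣ A := ⟨(n : ℕ) * ∏ q ∈ Q.erase q₀, q, by rw [hAdef]; ring⟩
    have hnA : (n : ℕ) ∣ A := ⟨8 * ∏ q ∈ Q.erase q₀, q, by rw [hAdef]; ring⟩
    have hB8 : B ≡ 1 [MOD 8] := hB2.of_dvd h8A
    have hB4 : B ≡ 1 [MOD 4] := hB2.of_dvd (dvd_trans ⟨2, rfl⟩ h8A)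
    have hBn : B ≡ 1 [MOD (n : ℕ)] := hB2.of_dvd hnA
    have hσG : σ G = -G := by
      rw [hGdef, ← Finset.mul_prod_erase _ _ hq₀Q, map_mul, map_prod]
      have h1 : σ (gaussE μ Mn q₀) = -gaussE μ Mn q₀ := by
        have hBne : (B : ZMod q₀) ≠ 0 := by
          rw [hBq₀]
          exact ha0
        have hmap := gaussE_map hM0 hμp hq₀2 (hqM q₀ hq₀Q) (σ : L' →+* L') B hσμ' hBne
        rw [hBq₀, haχ] at hmap
        calc σ (gaussE μ Mn q₀) = ((-1 : ℤ) : L') * gaussE μ Mn q₀ := hmap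
        _ = - gaussE μ Mn q₀ := by push_cast; ring
      have h2 : ∀ q ∈ Q.erase q₀, σ (gaussE μ Mn q) = gaussE μ Mn q := by
        intro q hq
        refine hfixg σ B hσμ' q (Finset.mem_of_mem_erase hq) ?_
        refine hB2.of_dvd ?_
        exact Dvd.dvd.mul_left (Finset.dvd_prod_of_mem _ hq) _
      rw [Finset.prod_congr rfl h2, h1]
      ring
    refine contra σ ?_
    rw [hYdef, map_mul, map_mul, map_mul, hfixy σ B hσμ' hBn, hσG, map_pow, map_pow,
      hfixz8 σ B hσμ' hB8, hfixii σ B hσμ' hB4]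
    ring
  · -- 2 ∣ Δ → 8 ∣ n
    intro h2Δ
    by_contra h8n
    set m2 := (n : ℕ).factorization 2 with hm2def
    set nodd := (n : ℕ) / 2 ^ m2 with hnodddef
    have hnsplit : 2 ^ m2 * nodd = (n : ℕ) := Nat.ordProj_mul_ordCompl_eq_self (n : ℕ) 2
    have hnoddodd : ¬ 2 ∣ nodd := Nat.not_dvd_ordCompl Nat.prime_two n.pos.ne'
    have hm2le : m2 ≤ 2 := by
      by_contra hgt
      refine h8n (dvd_trans ?_ (Nat.ordProj_dvd (n : ℕ) 2))
      exact (by norm_num : (8:ℕ) = 2 ^ 3) ▸ pow_dvd_pow 2 (by omega)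
    set A2 := nodd * ∏ q ∈ Q, q with hA2def
    have hMA2 : Mn = 2 ^ (m2 + 3) * A2 := by
      rw [hMdef, hA2def]
      conv_lhs => rw [← hnsplit]
      ring
    have hA2odd : ¬ 2 ∣ A2 := by
      intro hdvd
      rcases (Nat.Prime.dvd_mul Nat.prime_two).mp hdvd with h | h
      · exact hnoddodd h
      · obtain ⟨q', hq'mem, hq'dvd⟩ := Nat.prime_two.prime.exists_mem_finset_dvd h
        obtain ⟨hq'p, hq'2, -⟩ := mem_Q hΔ0 hq'mem
        exact hq'2 ((Nat.prime_dvd_prime_iff_eq Nat.prime_two hq'p).mp hq'dvd).symm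
    have hcop2 : Nat.Coprime (2 ^ (m2 + 3)) A2 :=
      Nat.Coprime.pow_left _ ((Nat.prime_two.coprime_iff_not_dvd).mpr hA2odd)
    obtain ⟨B, hB1, hB2⟩ := Nat.chineseRemainder hcop2 5 1
    have hB8 : B ≡ 5 [MOD 8] :=
      hB1.of_dvd ((by norm_num : (8:ℕ) = 2 ^ 3) ▸ pow_dvd_pow 2 (by omega))
    have hB4 : B ≡ 1 [MOD 4] := (hB8.of_dvd (by norm_num)).trans (by decide)
    have hBn : B ≡ 1 [MOD (n : ℕ)] := by
      rw [← hnsplit]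
      refine (Nat.modEq_and_modEq_iff_modEq_mul ?_).mp ⟨?_, ?_⟩
      · exact Nat.Coprime.pow_left _ ((Nat.prime_two.coprime_iff_not_dvd).mpr hnoddodd)
      · have h1 : B ≡ 5 [MOD 2 ^ m2] := hB1.of_dvd (pow_dvd_pow 2 (by omega))
        refine h1.trans ?_
        interval_cases m2 <;> decide
      · exact hB2.of_dvd ⟨∏ q ∈ Q, q, hA2def⟩
    have hBcop : B.Coprime Mn := by
      rw [hMA2]
      refine Nat.Coprime.mul_right ?_ (coprime_of_modeq_one hB2)
      refine Nat.Coprime.pow_right _ ?_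
      rw [Nat.coprime_comm, Nat.Prime.coprime_iff_not_dvd Nat.prime_two]
      intro h2B
      have h5 : B % 8 = 5 % 8 := hB8
      omega
    obtain ⟨σ, hσμ⟩ := exists_aut M B hBcop
    have hσμ' : σ μ = μ ^ B := hσμ
    have he1 : e = 1 := by rw [hedef, if_pos h2Δ]
    have hσG : σ G = G := by
      rw [hGdef, map_prod]
      refine Finset.prod_congr rfl fun q hq => ?_
      refine hfixg σ B hσμ' q hq ?_
      exact hB2.of_dvd (Dvd.dvd.mul_left (Finset.dvd_prod_of_mem _ hq) _)
    refine contra σ ?_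
    rw [hYdef, map_mul, map_mul, map_mul, hfixy σ B hσμ' hBn, hσG, map_pow, map_pow,
      hflipz8 σ B hσμ' hB8, hfixii σ B hσμ' hB4, he1]
    ring
  · -- Δ ≡ 3 mod 4 → 4 ∣ n
    intro h34
    by_contra h4n
    have hwone : w = 1 := hw3 h34
    have he0 : e = 0 := by
      rw [hedef, if_neg]
      intro hdvd
      obtain ⟨k, hk⟩ := hdvd
      omega
    set m2 := (n : ℕ).factorization 2 with hm2def
    set nodd := (n : ℕ) / 2 ^ m2 with hnodddef
    have hnsplit : 2 ^ m2 * nodd = (n : ℕ) := Nat.ordProj_mul_ordCompl_eq_self (n : ℕ) 2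
    have hnoddodd : ¬ 2 ∣ nodd := Nat.not_dvd_ordCompl Nat.prime_two n.pos.ne'
    have hm2le : m2 ≤ 1 := by
      by_contra hgt
      refine h4n (dvd_trans ?_ (Nat.ordProj_dvd (n : ℕ) 2))
      exact (by norm_num : (4:ℕ) = 2 ^ 2) ▸ pow_dvd_pow 2 (by omega)
    set A2 := nodd * ∏ q ∈ Q, q with hA2def
    have hMA2 : Mn = 2 ^ (m2 + 3) * A2 := by
      rw [hMdef, hA2def]
      conv_lhs => rw [← hnsplit]
      ring
    have hA2odd : ¬ 2 ∣ A2 := by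
      intro hdvd
      rcases (Nat.Prime.dvd_mul Nat.prime_two).mp hdvd with h | h
      · exact hnoddodd h
      · obtain ⟨q', hq'mem, hq'dvd⟩ := Nat.prime_two.prime.exists_mem_finset_dvd h
        obtain ⟨hq'p, hq'2, -⟩ := mem_Q hΔ0 hq'mem
        exact hq'2 ((Nat.prime_dvd_prime_iff_eq Nat.prime_two hq'p).mp hq'dvd).symm
    have hcop2 : Nat.Coprime (2 ^ (m2 + 3)) A2 :=
      Nat.Coprime.pow_left _ ((Nat.prime_two.coprime_iff_not_dvd).mpr hA2odd)
    obtain ⟨B, hB1, hB2⟩ := Nat.chineseRemainder hcop2 3 1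
    have hB4 : B ≡ 3 [MOD 4] :=
      hB1.of_dvd ((by norm_num : (4:ℕ) = 2 ^ 2) ▸ pow_dvd_pow 2 (by omega))
    have hBn : B ≡ 1 [MOD (n : ℕ)] := by
      rw [← hnsplit]
      refine (Nat.modEq_and_modEq_iff_modEq_mul ?_).mp ⟨?_, ?_⟩
      · exact Nat.Coprime.pow_left _ ((Nat.prime_two.coprime_iff_not_dvd).mpr hnoddodd)
      · have h1 : B ≡ 3 [MOD 2 ^ m2] := hB1.of_dvd (pow_dvd_pow 2 (by omega))
        refine h1.trans ?_
        interval_cases m2 <;> decide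
      · exact hB2.of_dvd ⟨∏ q ∈ Q, q, hA2def⟩
    have hBcop : B.Coprime Mn := by
      rw [hMA2]
      refine Nat.Coprime.mul_right ?_ (coprime_of_modeq_one hB2)
      refine Nat.Coprime.pow_right _ ?_
      rw [Nat.coprime_comm, Nat.Prime.coprime_iff_not_dvd Nat.prime_two]
      intro h2B
      have h3 : B % 4 = 3 % 4 := hB4
      omega
    obtain ⟨σ, hσμ⟩ := exists_aut M B hBcop
    have hσμ' : σ μ = μ ^ B := hσμ
    have hσG : σ G = G := by
      rw [hGdef, map_prod]
      refine Finset.prod_congr rfl fun q hq => ?_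
      refine hfixg σ B hσμ' q hq ?_
      exact hB2.of_dvd (Dvd.dvd.mul_left (Finset.dvd_prod_of_mem _ hq) _)
    refine contra σ ?_
    rw [hYdef, he0, hwone, pow_zero, mul_one, pow_one, map_mul, map_mul,
      hfixy σ B hσμ' hBn, hσG, hflipii σ B hσμ' hB4]
    ring


lemma backward {n : ℕ+} {m r : ℕ} {p : Fin r → ℕ} {mexp : Fin r → ℕ}
    (hp : ∀ i, (p i).Prime) (hpodd : ∀ i, p i ≠ 2)
    (hmexp : ∀ i, 1 ≤ mexp i)
    (hfac : (n : ℕ) = 2 ^ m * ∏ i, p i ^ mexp i)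
    {w w₀ : ℕ} {wi : Fin r → ℕ} (hwi : ∀ i, wi i = 0 ∨ wi i = 1)
    (h30 : m < 3 → w₀ = 0) (h20 : m < 2 → w = 0)
    (hw : w = 0 ∨ w = 1) (hw0 : w₀ = 0 ∨ w₀ = 1) :
    ∃ x : CyclotomicField n ℚ,
      x ^ 2 = ((2 ^ w₀ * (-1) ^ w *
        ∏ i, ((-1) ^ ((p i - 1) / 2) * (p i : ℤ)) ^ wi i : ℤ) : CyclotomicField n ℚ) := by
  classical
  set K := CyclotomicField n ℚ with hKdef
  set μ := IsCyclotomicExtension.zeta n ℚ K with hμdef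
  have hμp : IsPrimitiveRoot μ (n : ℕ) := IsCyclotomicExtension.zeta_spec n ℚ K
  have hN0 : 0 < (n : ℕ) := n.pos
  have hpn : ∀ i, p i ∣ (n : ℕ) := by
    intro i
    rw [hfac]
    exact Dvd.dvd.mul_left
      ((dvd_pow_self (p i) (Nat.one_le_iff_ne_zero.mp (hmexp i))).trans
        (Finset.dvd_prod_of_mem (fun j => p j ^ mexp j) (Finset.mem_univ i))) _
  refine ⟨(μ ^ ((n : ℕ) / 8) + (μ ^ ((n : ℕ) / 8))⁻¹) ^ w₀ * (μ ^ ((n : ℕ) / 4)) ^ w *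
    ∏ i, (gaussE μ (n : ℕ) (p i)) ^ wi i, ?_⟩
  have ha : ((μ ^ ((n : ℕ) / 8) + (μ ^ ((n : ℕ) / 8))⁻¹) ^ w₀) ^ 2 = ((2 : ℤ) : K) ^ w₀ := by
    rcases hw0 with h | h
    · rw [h]; norm_num
    · have hm3 : 3 ≤ m := by
        by_contra hlt
        rw [h30 (by omega)] at h
        omega
      have h8 : 8 ∣ (n : ℕ) := by
        rw [hfac]
        exact Dvd.dvd.mul_right ((by norm_num : (8:ℕ) = 2 ^ 3) ▸ pow_dvd_pow 2 hm3) _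
      rw [h, ← pow_mul, mul_comm 1 2, pow_mul, sq_sqrt2 hN0 hμp h8]
      norm_num
  have hb : ((μ ^ ((n : ℕ) / 4)) ^ w) ^ 2 = ((-1 : ℤ) : K) ^ w := by
    rcases hw with h | h
    · rw [h]; norm_num
    · have hm2 : 2 ≤ m := by
        by_contra hlt
        rw [h20 (by omega)] at h
        omega
      have h4 : 4 ∣ (n : ℕ) := by
        rw [hfac]
        exact Dvd.dvd.mul_right ((by norm_num : (4:ℕ) = 2 ^ 2) ▸ pow_dvd_pow 2 hm2) _
      rw [h, ← pow_mul, mul_comm 1 2, pow_mul, sq_i hN0 hμp h4]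
      norm_num
  have hg : ∀ i, ((gaussE μ (n : ℕ) (p i)) ^ wi i) ^ 2
      = ((((-1) ^ ((p i - 1) / 2) * (p i : ℤ)) ^ wi i : ℤ) : K) := by
    intro i
    rw [← pow_mul, mul_comm (wi i) 2, pow_mul, gaussE_sq hN0 hμp (hp i) (hpodd i) (hpn i)]
    push_cast
    ring
  calc ((μ ^ ((n : ℕ) / 8) + (μ ^ ((n : ℕ) / 8))⁻¹) ^ w₀ * (μ ^ ((n : ℕ) / 4)) ^ w *
      ∏ i, (gaussE μ (n : ℕ) (p i)) ^ wi i) ^ 2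
      = ((μ ^ ((n : ℕ) / 8) + (μ ^ ((n : ℕ) / 8))⁻¹) ^ w₀) ^ 2 * ((μ ^ ((n : ℕ) / 4)) ^ w) ^ 2 *
        ∏ i, ((gaussE μ (n : ℕ) (p i)) ^ wi i) ^ 2 := by
        rw [Finset.prod_pow]
        ring
  _ = ((2 : ℤ) : K) ^ w₀ * ((-1 : ℤ) : K) ^ w *
        ∏ i, ((((-1) ^ ((p i - 1) / 2) * (p i : ℤ)) ^ wi i : ℤ) : K) := by
        rw [ha, hb]
        congr 1
        exact Finset.prod_congr rfl fun i _ => hg i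
  _ = _ := by push_cast +zetaDelta; ring


end Stmt7

open Stmt7 in
/-- For `n > 1` with prime decomposition `n = 2^m p₁^{m₁} ⋯ p_r^{m_r}`
(the `pᵢ` the distinct odd primes dividing `n`) and a squarefree integer `Δ ≠ 1`,
`ℚ(√Δ)` is a subfield of `ℚ(ζ_n)` (i.e. some `x ∈ ℚ(ζ_n)` satisfies `x² = Δ`) iff
`Δ = 2^{w₀}·(−1)^w·∏ᵢ ((−1)^{(pᵢ−1)/2} pᵢ)^{wᵢ}` for some `w, w₀, wᵢ ∈ {0,1}`
with `w₀ = 0` if `m < 3` and `w = 0` if `m < 2`. -/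
theorem stmt7 (n : ℕ+) (hn : 1 < (n : ℕ))
    (m r : ℕ) (p : Fin r → ℕ) (mexp : Fin r → ℕ)
    (hp : ∀ i, (p i).Prime) (hpodd : ∀ i, p i ≠ 2) (hpinj : Function.Injective p)
    (hmexp : ∀ i, 1 ≤ mexp i)
    (hfac : (n : ℕ) = 2 ^ m * ∏ i, p i ^ mexp i)
    (Δ : ℤ) (hsf : Squarefree Δ) (hΔne : Δ ≠ 1) :
    (∃ x : CyclotomicField n ℚ, x ^ 2 = (Δ : CyclotomicField n ℚ)) ↔
      ∃ w w₀ : ℕ, ∃ wi : Fin r → ℕ,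
        w ∈ ({0, 1} : Set ℕ) ∧ w₀ ∈ ({0, 1} : Set ℕ) ∧
        (∀ i, wi i ∈ ({0, 1} : Set ℕ)) ∧
        (m < 3 → w₀ = 0) ∧ (m < 2 → w = 0) ∧
        Δ = 2 ^ w₀ * (-1) ^ w * ∏ i, ((-1) ^ ((p i - 1) / 2) * (p i : ℤ)) ^ wi i := by
  classical
  constructor
  · rintro ⟨x, hx⟩
    obtain ⟨FC1, FC2, FC3⟩ := forward_core hn hsf x hx
    have hΔ0 : Δ ≠ 0 := hsf.ne_zero
    set T := Δ.natAbs with hTdef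
    have hT0 : T ≠ 0 := Int.natAbs_ne_zero.mpr hΔ0
    set Q := T.primeFactors.erase 2 with hQdef
    set wi : Fin r → ℕ := fun i => if p i ∣ T then 1 else 0 with hwidef
    set w₀ : ℕ := if 2 ∣ T then 1 else 0 with hw₀def
    have h2T : (2:ℤ) ∣ Δ ↔ 2 ∣ T := Int.natCast_dvd (m := 2)
    have hOodd : ¬ 2 ∣ ∏ i, p i ^ mexp i := by
      intro hdvd
      obtain ⟨i, -, hdvd2⟩ := Nat.prime_two.prime.exists_mem_finset_dvd hdvd
      exact hpodd i ((Nat.prime_dvd_prime_iff_eq Nat.prime_two (hp i)).mp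
        (Nat.prime_two.dvd_of_dvd_pow hdvd2)).symm
    have hmof : ∀ k : ℕ, 2 ^ k ∣ (n : ℕ) → k ≤ m := by
      intro k hk
      rw [hfac] at hk
      have hcop : Nat.Coprime (2 ^ k) (∏ i, p i ^ mexp i) :=
        Nat.Coprime.pow_left _ ((Nat.prime_two.coprime_iff_not_dvd).mpr hOodd)
      have h2k : 2 ^ k ∣ 2 ^ m := (Nat.Coprime.dvd_of_dvd_mul_right hcop) hk
      exact (Nat.pow_dvd_pow_iff_le_right (by norm_num)).mp h2k
    have hw₀3 : m < 3 → w₀ = 0 := by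
      intro hm3
      rw [hw₀def, if_neg]
      intro h2
      have := hmof 3 ((by norm_num : (8:ℕ) = 2 ^ 3) ▸ FC2 (h2T.mpr h2))
      omega
    -- Q as image
    have hQimg : Q = Finset.image p (Finset.univ.filter (fun i => p i ∣ T)) := by
      ext q
      constructor
      · intro hq
        obtain ⟨hqp, hq2, hqΔ⟩ := mem_Q hΔ0 hq
        have hqT : q ∣ T := Int.natCast_dvd.mp hqΔ
        have hqn : q ∣ (n : ℕ) := FC1 q hqp hq2 hqΔ
        rw [hfac] at hqn
        have hqO : q ∣ ∏ i, p i ^ mexp i := by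
          refine (Nat.Coprime.dvd_of_dvd_mul_left ?_) hqn
          exact Nat.Coprime.pow_right _ (((Nat.coprime_primes hqp Nat.prime_two).mpr hq2))
        obtain ⟨i, -, hdvd2⟩ := hqp.prime.exists_mem_finset_dvd hqO
        have : q = p i := (Nat.prime_dvd_prime_iff_eq hqp (hp i)).mp (hqp.dvd_of_dvd_pow hdvd2)
        refine Finset.mem_image.mpr ⟨i, Finset.mem_filter.mpr ⟨Finset.mem_univ i, ?_⟩, this.symm⟩
        rw [← this]
        exact hqT
      · intro hq
        obtain ⟨i, hi, hpi⟩ := Finset.mem_image.mp hq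
        have hiT : p i ∣ T := (Finset.mem_filter.mp hi).2
        rw [← hpi]
        exact Finset.mem_erase.mpr ⟨hpodd i, Nat.mem_primeFactors.mpr ⟨hp i, hiT, hT0⟩⟩
    have hinjon : Set.InjOn p (Finset.univ.filter (fun i => p i ∣ T)) :=
      fun a _ b _ hab => hpinj hab
    have hprodQ : ∏ q ∈ Q, (q : ℤ) = ∏ i, (p i : ℤ) ^ wi i := by
      rw [hQimg, Finset.prod_image (fun a ha b hb hab => hinjon ha hb hab)]
      rw [Finset.prod_filter]
      refine Finset.prod_congr rfl fun i _ => ?_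
      simp only [hwidef]
      by_cases h : p i ∣ T
      · rw [if_pos h, if_pos h, pow_one]
      · rw [if_neg h, if_neg h, pow_zero]
    have hstarQ : ∏ q ∈ Q, ((-1:ℤ) ^ ((q - 1) / 2) * q)
        = ∏ i, (((-1):ℤ) ^ ((p i - 1) / 2) * (p i : ℤ)) ^ wi i := by
      rw [hQimg, Finset.prod_image (fun a ha b hb hab => hinjon ha hb hab)]
      rw [Finset.prod_filter]
      refine Finset.prod_congr rfl fun i _ => ?_
      simp only [hwidef]
      by_cases h : p i ∣ T
      · rw [if_pos h, if_pos h, pow_one]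
      · rw [if_neg h, if_neg h, pow_zero]
    set Pstar : ℤ := ∏ i, (((-1):ℤ) ^ ((p i - 1) / 2) * (p i : ℤ)) ^ wi i with hPstardef
    set S' : ℕ := ∑ q ∈ Q, ((q - 1) / 2) with hS'def
    have hsplit : ∏ q ∈ Q, ((-1:ℤ) ^ ((q - 1) / 2) * q) = (-1) ^ S' * ∏ q ∈ Q, (q:ℤ) := by
      rw [Finset.prod_mul_distrib, Finset.prod_pow_eq_pow_sum]
    have hTQ : (T : ℤ) = 2 ^ w₀ * ∏ q ∈ Q, (q : ℤ) := by
      have := T_decomp hsf hΔ0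
      rw [← hTdef, ← hQdef] at this
      rw [this]
      congr 2
      rw [hw₀def]
      by_cases h : (2:ℤ) ∣ Δ
      · rw [if_pos h, if_pos (h2T.mp h)]
      · rw [if_neg h, if_neg (fun hh => h (h2T.mpr hh))]
    have hPstar : Pstar = (-1) ^ S' * ∏ q ∈ Q, (q:ℤ) := by
      rw [← hstarQ, hsplit]
    have hPmod4 : ((Pstar : ZMod 4)) = 1 := by
      rw [hPstardef]
      push_cast
      refine Finset.prod_eq_one fun i _ => ?_
      have := star_mod_four (hp i) (hpodd i)
      push_cast at this
      rw [this, one_pow]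
    have hkey : Δ = 2 ^ w₀ * Pstar ∨ Δ = -(2 ^ w₀ * Pstar) := by
      have hTP : (T : ℤ) = (-1) ^ S' * (2 ^ w₀ * Pstar) := by
        rw [hTQ, hPstar]
        have : ((-1:ℤ) ^ S') * ((-1:ℤ) ^ S') = 1 := by
          rw [← pow_add]
          have : S' + S' = 2 * S' := by ring
          rw [this, pow_mul]
          norm_num
        calc (2:ℤ) ^ w₀ * ∏ q ∈ Q, (q : ℤ)
            = 2 ^ w₀ * ((((-1:ℤ) ^ S') * ((-1:ℤ) ^ S')) * ∏ q ∈ Q, (q:ℤ)) := by rw [this]; ring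
        _ = (-1) ^ S' * (2 ^ w₀ * ((-1) ^ S' * ∏ q ∈ Q, (q:ℤ))) := by ring
      rcases Int.natAbs_eq Δ with habs | habs <;> rcases Nat.even_or_odd S' with hS | hS
      · left; rw [habs, ← hTdef, hTP, hS.neg_one_pow, one_mul]
      · right; rw [habs, ← hTdef, hTP, hS.neg_one_pow]; ring
      · right; rw [habs, ← hTdef, hTP, hS.neg_one_pow]; ring
      · left; rw [habs, ← hTdef, hTP, hS.neg_one_pow]; ring
    have hwi01 : ∀ i, wi i ∈ ({0, 1} : Set ℕ) := by
      intro i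
      simp only [hwidef]
      by_cases h : p i ∣ T
      · rw [if_pos h]; exact Set.mem_insert_iff.mpr (Or.inr rfl)
      · rw [if_neg h]; exact Set.mem_insert _ _
    have hw₀01 : w₀ ∈ ({0, 1} : Set ℕ) := by
      rw [hw₀def]
      by_cases h : 2 ∣ T
      · rw [if_pos h]; exact Set.mem_insert_iff.mpr (Or.inr rfl)
      · rw [if_neg h]; exact Set.mem_insert _ _
    rcases hkey with hk | hk
    · exact ⟨0, w₀, wi, Set.mem_insert _ _, hw₀01, hwi01, hw₀3, fun _ => rfl,
        by rw [hk, ← hPstardef]; ring⟩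
    · refine ⟨1, w₀, wi, Set.mem_insert_iff.mpr (Or.inr rfl), hw₀01, hwi01, hw₀3, ?_,
        by rw [hk, ← hPstardef]; ring⟩
      intro hm2
      exfalso
      -- m < 2 : derive Δ % 4 = 3 and contradiction
      have hw₀0 : w₀ = 0 := hw₀3 (by omega)
      have hΔmod : ((Δ : ZMod 4)) = 3 := by
        have hcast : ((Δ : ZMod 4)) = ((-(2 ^ w₀ * Pstar) : ℤ) : ZMod 4) := by rw [hk]
        rw [hw₀0] at hcast
        push_cast at hcast
        rw [hPmod4] at hcast
        simp at hcast
        rw [hcast]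
        decide
      have hΔ43 : Δ % 4 = 3 := by
        have h1 : ((Δ : ZMod 4)) = (((3:ℤ)) : ZMod 4) := by rw [hΔmod]; norm_num
        have h2 : Δ % 4 = 3 % 4 := (ZMod.intCast_eq_intCast_iff Δ 3 4).mp h1
        omega
      have := hmof 2 ((by norm_num : (4:ℕ) = 2 ^ 2) ▸ FC3 hΔ43)
      omega
  · rintro ⟨w, w₀, wi, hw, hw0, hwi, h30, h20, hΔeq⟩
    simp only [Set.mem_insert_iff, Set.mem_singleton_iff] at hw hw0 hwi
    obtain ⟨x, hx⟩ := backward (n := n) hp hpodd hmexp hfac hwi h30 h20 hw hw0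
    exact ⟨x, by rw [hx, ← hΔeq]⟩
end

section
/- Let G be a finite group with |G| = n > 2 and let C ⊆ G satisfy C ∩ C⁻¹ = ∅. Let A be the real matrix indexed by G×G with A_{g,h} = 1 if g⁻¹h ∈ C, A_{g,h} = −1 if g⁻¹h ∈ C⁻¹, and A_{g,h} = 0 otherwise (the skew adjacency matrix of the oriented Cayley graph X(G,C)). If there exists t ∈ ℝ such that every entry of exp(−tA) has absolute value 1/√n (uniform mixing at time t), then n is an even perfect square: there exists an even natural number c with n = c². -/
open Pointwise
open scoped Nat Matrix

-- helper: exp(B) * P = P when B * P = 0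
lemma exp_mul_eq_of_mul_eq_zero {m : Type*} [Fintype m] [DecidableEq m]
    (B P : Matrix m m ℝ) (h : B * P = 0) :
    NormedSpace.exp B * P = P := by
  letI : SeminormedRing (Matrix m m ℝ) := Matrix.linftyOpSemiNormedRing
  letI : NormedRing (Matrix m m ℝ) := Matrix.linftyOpNormedRing
  letI : NormedAlgebra ℝ (Matrix m m ℝ) := Matrix.linftyOpNormedAlgebra
  have hs := NormedSpace.exp_series_hasSum_exp' (𝕂 := ℝ) B
  have h2 : HasSum (fun k : ℕ => ((k !⁻¹ : ℝ) • B ^ k) * P) (NormedSpace.exp B * P) :=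
    hs.mul_right P
  have h3 : (fun k : ℕ => ((k !⁻¹ : ℝ) • B ^ k) * P)
      = fun k : ℕ => if k = 0 then P else 0 := by
    funext k
    cases k with
    | zero => simp
    | succ k =>
      rw [smul_mul_assoc, pow_succ, mul_assoc, h, mul_zero, smul_zero]
      simp
  rw [h3] at h2
  exact h2.unique (hasSum_ite_eq 0 P)

-- helper: sums of ±1
lemma sum_sign {ι : Type*} [Fintype ι] (f : ι → ℝ) (h : ∀ x, f x = 1 ∨ f x = -1) :
    ∃ a : ℕ, ∑ x, f x = 2 * a - Fintype.card ι := by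
  classical
  refine ⟨(Finset.univ.filter fun x => f x = 1).card, ?_⟩
  rw [← Finset.sum_filter_add_sum_filter_not Finset.univ (fun x => f x = 1) f]
  have h1 : ∑ x ∈ Finset.univ.filter (fun x => f x = 1), f x
      = ((Finset.univ.filter fun x => f x = 1).card : ℝ) := by
    rw [Finset.sum_congr rfl (fun x hx => (Finset.mem_filter.mp hx).2)]
    simp
  have h2 : ∑ x ∈ Finset.univ.filter (fun x => ¬ f x = 1), f x
      = -((Finset.univ.filter fun x => ¬ f x = 1).card : ℝ) := by
    rw [Finset.sum_congr rfl (fun x hx => ((h x).resolve_left (Finset.mem_filter.mp hx).2))]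
    simp
  rw [h1, h2]
  have hc : (Finset.univ.filter fun x => f x = 1).card
      + (Finset.univ.filter fun x => ¬ f x = 1).card = Fintype.card ι := by
    rw [Finset.card_filter_add_card_filter_not]
    rfl
  have := congrArg (fun k : ℕ => (k : ℝ)) hc
  push_cast at this ⊢
  linarith

/-- Let `G` be a finite group with `|G| = n > 2` and `C ⊆ G` with
`C ∩ C⁻¹ = ∅`.  If the oriented Cayley graph `X(G, C)`, with skew adjacency matrix
`A`, admits uniform mixing at some time `t` (all entries of `exp(−tA)` have absolute
value `1/√n`), then `n` is an even perfect square. -/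
theorem stmt14 (G : Type*) [Group G] [Fintype G] [DecidableEq G]
    (n : ℕ) (hn : n = Fintype.card G) (hn2 : 2 < n)
    (C : Set G) [DecidablePred (· ∈ C)]
    (hC : C ∩ C⁻¹ = ∅)
    (A : Matrix G G ℝ)
    (hA : A = Matrix.of fun g h =>
      if g⁻¹ * h ∈ C then 1 else if (g⁻¹ * h)⁻¹ ∈ C then -1 else 0)
    (t : ℝ)
    (hmix : ∀ g h : G, |(NormedSpace.exp ((-t) • A)) g h| = 1 / Real.sqrt n) :
    ∃ c : ℕ, Even c ∧ n = c ^ 2 := by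
  classical
  set U : Matrix G G ℝ := NormedSpace.exp ((-t) • A) with hU
  set B : Matrix G G ℝ := (-t) • A with hB
  have hnpos : 0 < (n : ℝ) := by positivity
  set r : ℝ := Real.sqrt n with hr
  have hrpos : 0 < r := Real.sqrt_pos.mpr hnpos
  have hr2 : r ^ 2 = n := Real.sq_sqrt hnpos.le
  -- disjointness in usable form
  have hdisj : ∀ x : G, x ∈ C → x⁻¹ ∈ C → False := by
    intro x hx hx'
    have : x ∈ C ∩ C⁻¹ := ⟨hx, Set.mem_inv.mpr hx'⟩
    rw [hC] at this
    exact this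
  set f : G → ℝ := fun x => if x ∈ C then (1:ℝ) else if x⁻¹ ∈ C then -1 else 0 with hf
  have hAf : ∀ g h : G, A g h = f (g⁻¹ * h) := by
    intro g h
    simp [hA, hf]
  have hfinv : ∀ x : G, f x⁻¹ = - f x := by
    intro x
    by_cases h1 : x ∈ C
    · have h2 : x⁻¹ ∉ C := fun hc => hdisj _ h1 hc
      simp [hf, h1, h2]
    · by_cases h2 : x⁻¹ ∈ C
      · simp [hf, h1, h2]
      · simp [hf, h1, h2]
  -- A is skew-symmetric
  have hskew : Bᵀ = -B := by
    rw [hB, Matrix.transpose_smul, ← smul_neg]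
    congr 1
    ext g h
    rw [Matrix.transpose_apply, Matrix.neg_apply, hAf, hAf]
    have e1 : h⁻¹ * g = (g⁻¹ * h)⁻¹ := by group
    rw [e1, hfinv]
  -- U is orthogonal
  have horth : U * Uᵀ = 1 := by
    rw [hU, ← Matrix.exp_transpose, hskew]
    rw [← Matrix.exp_add_of_commute B (-B) (Commute.neg_right (Commute.refl B))]
    simp [NormedSpace.exp_zero]
  -- row sums of A vanish
  have hrowA : ∀ g : G, ∑ k : G, A g k = 0 := by
    intro g
    have e1 : ∑ k : G, A g k = ∑ x : G, A g (g * x) :=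
      (Equiv.sum_comp (Equiv.mulLeft g) (fun k => A g k)).symm
    have e2 : ∀ x : G, A g (g * x) = f x := by
      intro x
      rw [hAf]
      congr 1
      group
    rw [e1]
    simp_rw [e2]
    have e3 : ∑ x : G, f x = ∑ x : G, f x⁻¹ :=
      (Equiv.sum_comp (Equiv.inv G) f).symm
    simp_rw [hfinv] at e3
    rw [Finset.sum_neg_distrib] at e3
    linarith [e3]
  -- row sums of U are 1
  have hrowU : ∀ g : G, ∑ k : G, U g k = 1 := by
    intro g
    set P : Matrix G G ℝ := Matrix.of (fun _ _ => (1:ℝ)) with hP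
    have hBP : B * P = 0 := by
      ext a b
      simp only [Matrix.mul_apply, hB, Matrix.smul_apply, hP, Matrix.of_apply, smul_eq_mul,
        mul_one, Matrix.zero_apply]
      rw [← Finset.mul_sum, hrowA a, mul_zero]
    have := exp_mul_eq_of_mul_eq_zero B P hBP
    have h2 := congrFun (congrFun this g) g
    simpa [Matrix.mul_apply, hP] using h2
  -- entries are ± 1/r
  have hentry : ∀ g h : G, r * U g h = 1 ∨ r * U g h = -1 := by
    intro g h
    have h1 : |r * U g h| = 1 := by
      rw [abs_mul, abs_of_pos hrpos, hmix g h]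
      field_simp
    rcases (abs_eq (by norm_num : (0:ℝ) ≤ 1)).mp h1 with h2 | h2
    · exact Or.inl h2
    · exact Or.inr h2
  -- n is a perfect square
  obtain ⟨a, ha⟩ := sum_sign (fun k : G => r * U 1 k) (fun k => hentry 1 k)
  have hsum1 : ∑ k : G, r * U 1 k = r := by
    rw [← Finset.mul_sum, hrowU 1, mul_one]
  rw [hsum1, ← hn] at ha
  have hle : (n : ℝ) ≤ 2 * a := by linarith
  have hlen : n ≤ 2 * a := by exact_mod_cast hle
  set c : ℕ := 2 * a - n with hc
  have hcr : (c : ℝ) = r := by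
    have : ((2 * a - n : ℕ) : ℝ) = 2 * (a : ℝ) - n := by
      push_cast [Nat.cast_sub hlen]
      ring
    rw [hc, this, ha]
  have hnc : n = c ^ 2 := by
    have : ((c : ℝ)) ^ 2 = (n : ℝ) := by rw [hcr, hr2]
    exact_mod_cast this.symm
  -- n is even, via orthogonality of two distinct rows
  obtain ⟨g, hg⟩ := Fintype.exists_ne_of_one_lt_card (by omega : 1 < Fintype.card G) (1 : G)
  obtain ⟨b, hb⟩ := sum_sign (fun k : G => (r * U 1 k) * (r * U g k))
    (fun k => by
      show (r * U 1 k) * (r * U g k) = 1 ∨ (r * U 1 k) * (r * U g k) = -1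
      rcases hentry 1 k with h1 | h1 <;> rcases hentry g k with h2 | h2 <;>
        rw [h1, h2] <;> norm_num)
  have hzero : ∑ k : G, (r * U 1 k) * (r * U g k) = 0 := by
    have h0 : (U * Uᵀ) 1 g = 0 := by
      rw [horth]
      exact Matrix.one_apply_ne (Ne.symm hg)
    have h1 : ∑ k : G, U 1 k * U g k = 0 := by
      rw [← h0, Matrix.mul_apply]
      simp [Matrix.transpose_apply]
    calc ∑ k : G, (r * U 1 k) * (r * U g k) = r^2 * ∑ k : G, U 1 k * U g k := by
          rw [Finset.mul_sum]; congr 1; funext k; ring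
      _ = 0 := by rw [h1, mul_zero]
  rw [hzero, ← hn] at hb
  have hneven : (n : ℝ) = 2 * b := by linarith
  have hne : n = 2 * b := by exact_mod_cast hneven
  refine ⟨c, ?_, hnc⟩
  have heven : Even (c ^ 2) := by rw [← hnc, hne]; exact ⟨b, by ring⟩
  exact (Nat.even_pow.mp heven).1
end

section
/- Let n ≥ 3. Then no oriented Cayley graph for the symmetric group S_n or for the alternating group A_n admits uniform mixing: for every C ⊆ S_n with C ∩ C⁻¹ = ∅ and every t ∈ ℝ, the entries of exp(−tA) do not all have absolute value 1/√(n!) (where A is the skew adjacency matrix of X(S_n,C)); and for every C ⊆ A_n with C ∩ C⁻¹ = ∅ and every t ∈ ℝ, the entries of exp(−tA) do not all have absolute value 1/√(n!/2) (where A is the skew adjacency matrix of X(A_n,C)). -/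
open Pointwise Matrix

lemma exp_mulVec_fixed {m : Type*} [Fintype m] [DecidableEq m]
    (M : Matrix m m ℝ) (v : m → ℝ) (hv : M *ᵥ v = 0) :
    (NormedSpace.exp M) *ᵥ v = v := by
  letI : SeminormedRing (Matrix m m ℝ) := Matrix.linftyOpSemiNormedRing
  letI : NormedRing (Matrix m m ℝ) := Matrix.linftyOpNormedRing
  letI : NormedAlgebra ℝ (Matrix m m ℝ) := Matrix.linftyOpNormedAlgebra
  have hsum : Summable fun k : ℕ => ((k.factorial : ℝ)⁻¹) • M ^ k :=
    NormedSpace.expSeries_summable' (𝕂 := ℝ) M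
  let L : Matrix m m ℝ →ₗ[ℝ] (m → ℝ) :=
    { toFun := fun B => B *ᵥ v
      map_add' := fun B C => Matrix.add_mulVec B C v
      map_smul' := fun c B => Matrix.smul_mulVec c B v }
  have hcont : Continuous L := L.continuous_of_finiteDimensional
  have hpow : ∀ k : ℕ, k ≠ 0 → M ^ k *ᵥ v = 0 := by
    intro k hk
    obtain ⟨j, rfl⟩ := Nat.exists_eq_succ_of_ne_zero hk
    rw [pow_succ, ← Matrix.mulVec_mulVec, hv, Matrix.mulVec_zero]
  have h1 := hsum.hasSum.map L.toAddMonoidHom hcont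
  have h2 : (⇑L.toAddMonoidHom ∘ fun k : ℕ => ((k.factorial : ℝ)⁻¹) • M ^ k)
      = fun k : ℕ => if k = 0 then v else 0 := by
    funext k
    rcases eq_or_ne k 0 with rfl | hk
    · simp [L, Matrix.one_mulVec]
    · simp [L, hk, Matrix.smul_mulVec, hpow k hk]
  rw [h2] at h1
  have h3 : HasSum (fun k : ℕ => if k = 0 then v else 0) v := by
    have := hasSum_ite_eq (0 : ℕ) v
    simpa using this
  have h4 : L.toAddMonoidHom (∑' k : ℕ, ((k.factorial : ℝ)⁻¹) • M ^ k)
      = (NormedSpace.exp M) *ᵥ v := by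
    rw [NormedSpace.exp_eq_tsum ℝ]; rfl
  rw [h4] at h1
  exact h1.unique h3

lemma exists_good_prime (n : ℕ) (hn : 3 ≤ n) :
    ∃ p : ℕ, p.Prime ∧ p % 2 = 1 ∧ p ∣ n.factorial ∧ ¬ p ^ 2 ∣ n.factorial := by
  rcases eq_or_lt_of_le hn with h3 | h4
  · exact ⟨3, by norm_num, by norm_num, by rw [← h3]; decide, by rw [← h3]; decide⟩
  · obtain ⟨p, hp, hlt, hle⟩ := Nat.exists_prime_lt_and_le_two_mul (n / 2) (by omega)
    have hpn : p ≤ n := le_trans hle (by omega)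
    have h2p : n < 2 * p := by omega
    have hp2 : 2 < p := by omega
    have hodd : p % 2 = 1 := Nat.odd_iff.mp (hp.odd_of_ne_two (by omega))
    have hnp2 : n < p ^ 2 := by nlinarith
    have hlog : Nat.log p n < 2 := Nat.log_lt_of_lt_pow (by omega) hnp2
    have hdiv : n / p = 1 := Nat.div_eq_of_lt_le (by omega) (by omega)
    refine ⟨p, hp, hodd, Nat.dvd_factorial hp.pos hpn, ?_⟩
    rw [Nat.Prime.pow_dvd_factorial_iff hp hlog]
    simp [hdiv]

lemma not_factorial_eq_sq (n : ℕ) (hn : 3 ≤ n) (k : ℕ) :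
    n.factorial ≠ k ^ 2 ∧ n.factorial ≠ 2 * k ^ 2 := by
  obtain ⟨p, hp, hodd, hdvd, hndvd⟩ := exists_good_prime n hn
  constructor
  · rintro h
    rw [h] at hdvd hndvd
    have hpk : p ∣ k := hp.dvd_of_dvd_pow hdvd
    exact hndvd (pow_dvd_pow_of_dvd hpk 2)
  · rintro h
    rw [h] at hdvd hndvd
    have hpk2 : p ∣ k ^ 2 := by
      rcases (Nat.Prime.dvd_mul hp).mp hdvd with h2 | h2
      · have := (Nat.prime_dvd_prime_iff_eq hp Nat.prime_two).mp h2
        omega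
      · exact h2
    have hpk : p ∣ k := hp.dvd_of_dvd_pow hpk2
    exact hndvd (Dvd.dvd.mul_left (pow_dvd_pow_of_dvd hpk 2) 2)

lemma sum_abs_eq (ι : Type*) [Fintype ι] [Nonempty ι] (f : ι → ℝ) (r : ℝ)
    (hf : ∀ i, |f i| = 1 / Real.sqrt r) (hs : ∑ i, f i = 1) :
    ∃ k : ℕ, r = (k : ℝ) ^ 2 := by
  set c : ℝ := 1 / Real.sqrt r with hc
  have hc0 : c ≠ 0 := by
    intro h
    have : ∀ i, f i = 0 := fun i => abs_eq_zero.mp (h ▸ hf i)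
    simp [this] at hs
  have hsqrt_pos : 0 < Real.sqrt r := by
    rcases lt_trichotomy (Real.sqrt r) 0 with h | h | h
    · exact absurd h (not_lt.mpr (Real.sqrt_nonneg r))
    · exact absurd (by rw [hc, h, div_zero]) hc0
    · exact h
  have hr0 : 0 ≤ r := by
    by_contra h
    rw [Real.sqrt_eq_zero_of_nonpos (le_of_not_ge h)] at hsqrt_pos
    exact lt_irrefl 0 hsqrt_pos
  classical
  set s : ℤ := ∑ i : ι, (if f i = c then 1 else -1) with hsdef
  have hterm : ∀ i, f i = (if f i = c then (1:ℝ) else -1) * c := by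
    intro i
    rcases abs_eq (by positivity : (0:ℝ) ≤ c) |>.mp (hf i) with h | h
    · simp [h]
    · have hne : f i ≠ c := by
        intro hh; rw [hh] at h
        have : c = 0 := by linarith
        exact hc0 this
      rw [if_neg hne, h]; ring
  have hsum2 : (s : ℝ) * c = 1 := by
    rw [← hs, hsdef]
    push_cast [apply_ite (Int.cast : ℤ → ℝ)]
    rw [Finset.sum_mul]
    exact (Finset.sum_congr rfl fun i _ => (hterm i).symm)
  have hsr : (s : ℝ) = Real.sqrt r := by
    rw [hc, mul_one_div, div_eq_one_iff_eq hsqrt_pos.ne'] at hsum2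
    exact hsum2
  have hspos : 0 < (s : ℝ) := hsr ▸ hsqrt_pos
  refine ⟨s.toNat, ?_⟩
  have : ((s.toNat : ℤ) : ℝ) = (s : ℝ) := by
    norm_cast
    exact Int.toNat_of_nonneg (by exact_mod_cast hspos.le)
  push_cast at this
  rw [this, hsr, Real.sq_sqrt hr0]

lemma cayley_rowsum {G : Type*} [Group G] [Fintype G] [DecidableEq G]
    (C : Set G) [DecidablePred (· ∈ C)] (hC : C ∩ C⁻¹ = ∅) (g : G) :
    ∑ y : G, (if g⁻¹ * y ∈ C then (1:ℝ) else if (g⁻¹ * y)⁻¹ ∈ C then -1 else 0) = 0 := by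
  have h1 : ∑ y : G, (if g⁻¹ * y ∈ C then (1:ℝ) else if (g⁻¹ * y)⁻¹ ∈ C then -1 else 0)
      = ∑ z : G, (if z ∈ C then (1:ℝ) else if z⁻¹ ∈ C then -1 else 0) := by
    apply Fintype.sum_equiv (Equiv.mulLeft g⁻¹)
    intro y
    simp [Equiv.mulLeft]
  rw [h1]
  have hdisj : ∀ z : G, z ∈ C → z⁻¹ ∉ C := by
    intro z hz hz'
    have : z ∈ C ∩ C⁻¹ := ⟨hz, Set.mem_inv.mpr hz'⟩
    rw [hC] at this
    exact this
  have h2 : ∀ z : G, (if z ∈ C then (1:ℝ) else if z⁻¹ ∈ C then -1 else 0)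
      = (if z ∈ C then (1:ℝ) else 0) - (if z⁻¹ ∈ C then (1:ℝ) else 0) := by
    intro z
    by_cases hz : z ∈ C
    · simp [hz, hdisj z hz]
    · by_cases hz' : z⁻¹ ∈ C <;> simp [hz, hz']
  simp_rw [h2]
  rw [Finset.sum_sub_distrib]
  have h3 : ∑ z : G, (if z⁻¹ ∈ C then (1:ℝ) else 0) = ∑ z : G, (if z ∈ C then (1:ℝ) else 0) := by
    apply Fintype.sum_equiv (Equiv.inv G)
    intro z
    simp
  rw [h3, sub_self]

lemma main_cayley {G : Type*} [Group G] [Fintype G] [DecidableEq G]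
    (C : Set G) [DecidablePred (· ∈ C)] (hC : C ∩ C⁻¹ = ∅)
    (A : Matrix G G ℝ)
    (hA : A = Matrix.of (fun x y =>
      if x⁻¹ * y ∈ C then 1 else if (x⁻¹ * y)⁻¹ ∈ C then -1 else 0))
    (t : ℝ) (r : ℝ)
    (h : ∀ g h : G, |(NormedSpace.exp ((-t) • A)) g h| = 1 / Real.sqrt r) :
    ∃ k : ℕ, r = (k : ℝ) ^ 2 := by
  have hA1 : A *ᵥ (fun _ => (1:ℝ)) = 0 := by
    funext g
    have := cayley_rowsum C hC g
    simp only [Matrix.mulVec, dotProduct, mul_one, hA, Matrix.of_apply]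
    simpa using this
  have hM : ((-t) • A) *ᵥ (fun _ => (1:ℝ)) = 0 := by
    rw [Matrix.smul_mulVec, hA1, smul_zero]
  have hP := exp_mulVec_fixed _ _ hM
  have g : G := 1
  have hrow : ∑ y : G, (NormedSpace.exp ((-t) • A)) g y = 1 := by
    have := congrFun hP g
    simpa [Matrix.mulVec, dotProduct] using this
  exact sum_abs_eq G (fun y => (NormedSpace.exp ((-t) • A)) g y) r (h g) hrow

/-- For `n ≥ 3`, no oriented Cayley graph for the symmetric group
`S_n` or the alternating group `A_n` admits uniform mixing: all entries of the
transition matrix `exp(−tA)` never have common absolute value `1/√|G|`. -/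
theorem stmt15 (n : ℕ) (hn : 3 ≤ n) :
    (∀ (C : Set (Equiv.Perm (Fin n))) [DecidablePred (· ∈ C)],
      C ∩ C⁻¹ = ∅ →
      ∀ A : Matrix (Equiv.Perm (Fin n)) (Equiv.Perm (Fin n)) ℝ,
        A = Matrix.of (fun x y =>
          if x⁻¹ * y ∈ C then 1 else if (x⁻¹ * y)⁻¹ ∈ C then -1 else 0) →
        ∀ t : ℝ,
          ¬ (∀ g h : Equiv.Perm (Fin n),
              |(NormedSpace.exp ((-t) • A)) g h| = 1 / Real.sqrt (n.factorial))) ∧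
    (∀ (C : Set (alternatingGroup (Fin n))) [DecidablePred (· ∈ C)],
      C ∩ C⁻¹ = ∅ →
      ∀ A : Matrix (alternatingGroup (Fin n)) (alternatingGroup (Fin n)) ℝ,
        A = Matrix.of (fun x y =>
          if x⁻¹ * y ∈ C then 1 else if (x⁻¹ * y)⁻¹ ∈ C then -1 else 0) →
        ∀ t : ℝ,
          ¬ (∀ g h : alternatingGroup (Fin n),
              |(NormedSpace.exp ((-t) • A)) g h| = 1 / Real.sqrt ((n.factorial : ℝ) / 2))) := by
  constructor
  · intro C _ hC A hA t hcon
    obtain ⟨k, hk⟩ := main_cayley C hC A hA t _ hcon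
    have : n.factorial = k ^ 2 := by exact_mod_cast hk
    exact (not_factorial_eq_sq n hn k).1 this
  · intro C _ hC A hA t hcon
    obtain ⟨k, hk⟩ := main_cayley C hC A hA t _ hcon
    have : n.factorial = 2 * k ^ 2 := by
      have : (n.factorial : ℝ) = 2 * (k : ℝ) ^ 2 := by linarith [hk]
      exact_mod_cast this
    exact (not_factorial_eq_sq n hn k).2 this
end

section
/- Let A be the real matrix indexed by (ℤ/4ℤ)×(ℤ/4ℤ) with A_{g,h} = 1 if h − g = 1, A_{g,h} = −1 if h − g = −1, and A_{g,h} = 0 otherwise (the skew adjacency matrix of the oriented 4-cycle X(ℤ/4ℤ,{1})). Then: (a) every entry of exp(−(π/4)·A) has absolute value 1/2, so X(ℤ/4ℤ,{1}) admits uniform mixing at time π/4; and (b) exp(−(π/2)·A) is the permutation matrix of translation by 2, i.e. its (g,h) entry is 1 if h = g + 2 and 0 otherwise, so X(ℤ/4ℤ,{1}) admits perfect state transfer from each vertex g to g + 2 at time π/2. -/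
noncomputable def Tm (k : ZMod 4) : Matrix (ZMod 4) (ZMod 4) ℝ :=
  Matrix.of fun g h => if h - g = k then 1 else 0

lemma Tm_mul (a b : ZMod 4) : Tm a * Tm b = Tm (a + b) := by
  ext g h
  simp only [Tm, Matrix.mul_apply, Matrix.of_apply]
  have step : ∀ j : ZMod 4, (if j - g = a then (1:ℝ) else 0) * (if h - j = b then 1 else 0)
      = if j = g + a then (if h - j = b then 1 else 0) else 0 := by
    intro j
    simp only [sub_eq_iff_eq_add', ite_mul, one_mul, zero_mul]
  rw [Finset.sum_congr rfl (fun j _ => step j), Finset.sum_ite_eq' Finset.univ (g+a)]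
  simp only [Finset.mem_univ, if_true, sub_add_eq_sub_sub, sub_eq_iff_eq_add, add_comm b a]

lemma Tm_zero : Tm 0 = 1 := by
  ext g h
  simp only [Tm, Matrix.of_apply, Matrix.one_apply, sub_eq_zero]
  by_cases hg : g = h <;> simp [hg, eq_comm]

noncomputable def psiFun (A : Matrix (ZMod 4) (ZMod 4) ℝ) (p : ℝ × ℂ) :
    Matrix (ZMod 4) (ZMod 4) ℝ :=
  p.1 • 1 + (p.2.im / 2) • A + ((p.1 - p.2.re) / 4) • (A * A)

noncomputable def psi (A : Matrix (ZMod 4) (ZMod 4) ℝ)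
    (h3 : A * A * A = (-4 : ℝ) • A) : (ℝ × ℂ) →ₐ[ℝ] Matrix (ZMod 4) (ZMod 4) ℝ where
  toFun := psiFun A
  map_one' := by simp [psiFun]
  map_mul' p q := by
    have h3' : A * (A * A) = (-4 : ℝ) • A := by rw [← mul_assoc, h3]
    have h4 : (A * A) * (A * A) = (-4 : ℝ) • (A * A) := by
      rw [← mul_assoc, mul_assoc A A A, h3', smul_mul_assoc]
    simp only [psiFun, Prod.fst_mul, Prod.snd_mul, Complex.mul_im, Complex.mul_re]
    simp only [add_mul, mul_add, smul_mul_assoc, mul_smul_comm, one_mul, mul_one, smul_smul,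
      h3, h3', h4]
    module
  map_zero' := by simp [psiFun]
  map_add' p q := by
    simp only [psiFun, Prod.fst_add, Prod.snd_add, Complex.add_im, Complex.add_re]
    module
  commutes' r := by
    have : algebraMap ℝ (ℝ × ℂ) r = (r, (r : ℂ)) := rfl
    rw [this]
    simp only [psiFun, Complex.ofReal_im, Complex.ofReal_re, Algebra.algebraMap_eq_smul_one]
    module

lemma psi_continuous (A : Matrix (ZMod 4) (ZMod 4) ℝ)
    (h3 : A * A * A = (-4 : ℝ) • A) : Continuous (psi A h3) := by
  show Continuous (psiFun A)
  unfold psiFun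
  fun_prop

lemma exp_key (A : Matrix (ZMod 4) (ZMod 4) ℝ)
    (h3 : A * A * A = (-4 : ℝ) • A) (t : ℝ) :
    NormedSpace.exp (t • A) =
      1 + (Real.sin (2*t) / 2) • A + ((1 - Real.cos (2*t)) / 4) • (A * A) := by
  have ht : t • A = psi A h3 ((0 : ℝ), (2*t) * Complex.I) := by
    show t • A = psiFun A _
    simp [psiFun]
  letI : SeminormedRing (Matrix (ZMod 4) (ZMod 4) ℝ) := Matrix.linftyOpSemiNormedRing
  letI : NormedRing (Matrix (ZMod 4) (ZMod 4) ℝ) := Matrix.linftyOpNormedRing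
  letI : NormedAlgebra ℝ (Matrix (ZMod 4) (ZMod 4) ℝ) := Matrix.linftyOpNormedAlgebra
  rw [ht]; erw [← NormedSpace.map_exp (psi A h3) (psi_continuous A h3)]
  have hprod : NormedSpace.exp ((0 : ℝ), (2*t) * Complex.I)
      = ((1 : ℝ), Complex.exp ((2*t) * Complex.I)) := by
    have h1 : (NormedSpace.exp ((0 : ℝ), (2*t) * Complex.I)).1 = 1 := by
      rw [Prod.fst_exp]; simp [NormedSpace.exp_zero]
    have h2 : (NormedSpace.exp ((0 : ℝ), (2*t) * Complex.I)).2
        = Complex.exp ((2*t) * Complex.I) := by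
      rw [Prod.snd_exp]
      rw [← Complex.exp_eq_exp_ℂ]
    exact Prod.ext h1 h2
  rw [hprod]
  show psiFun A _ = _
  have hc : (2 * (t:ℝ) : ℂ) * Complex.I = ((2*t : ℝ) : ℂ) * Complex.I := by push_cast; ring
  rw [hc, Complex.exp_mul_I]
  simp only [psiFun, Complex.add_im, Complex.add_re, Complex.mul_im, Complex.mul_re,
    Complex.cos_ofReal_im, Complex.cos_ofReal_re, Complex.sin_ofReal_im, Complex.sin_ofReal_re,
    Complex.I_re, Complex.I_im]
  module

/-- Let `A` be the skew adjacency matrix of the oriented 4-cycle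
`X(ℤ/4ℤ, {1})`.  Then (a) every entry of `exp(−(π/4)·A)` has absolute value `1/2`
(uniform mixing at time `π/4`), and (b) `exp(−(π/2)·A)` is the permutation matrix of
translation by `2` (perfect state transfer from `g` to `g + 2` at time `π/2`). -/
theorem stmt16 (A : Matrix (ZMod 4) (ZMod 4) ℝ)
    (hA : A = Matrix.of fun g h =>
      if h - g = 1 then 1 else if h - g = -1 then -1 else 0) :
    (∀ g h : ZMod 4, |(NormedSpace.exp ((-(Real.pi / 4)) • A)) g h| = 1 / 2) ∧
    (NormedSpace.exp ((-(Real.pi / 2)) • A) =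
      Matrix.of fun g h => if h = g + 2 then 1 else 0) := by
  have hm1 : (-1 : ZMod 4) = 3 := by decide
  have hA' : A = Tm 1 - Tm 3 := by
    rw [hA]
    ext g h
    simp only [Tm, Matrix.sub_apply, Matrix.of_apply, hm1]
    by_cases h1 : h - g = 1
    · rw [if_pos h1, if_pos h1, if_neg (by rw [h1]; decide)]; norm_num
    · by_cases h3 : h - g = 3
      · rw [if_neg h1, if_pos h3, if_neg h1, if_pos h3]; norm_num
      · rw [if_neg h1, if_neg h3, if_neg h1, if_neg h3]; norm_num
  have hAA : A * A = (2:ℝ) • Tm 2 - (2:ℝ) • 1 := by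
    rw [hA']
    simp only [sub_mul, mul_sub, Tm_mul]
    rw [show (1 + 1 : ZMod 4) = 2 from by decide, show (1 + 3 : ZMod 4) = 0 from by decide,
      show (3 + 1 : ZMod 4) = 0 from by decide, show (3 + 3 : ZMod 4) = 2 from by decide,
      Tm_zero]
    module
  have h3 : A * A * A = (-4 : ℝ) • A := by
    conv_lhs => rw [hAA, hA']
    simp only [sub_mul, mul_sub, smul_mul_assoc, one_mul, Tm_mul]
    rw [show (2 + 1 : ZMod 4) = 3 from by decide, show (2 + 3 : ZMod 4) = 1 from by decide]
    rw [hA']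
    module
  have hs2 : Real.sin (2 * -(Real.pi/2)) = 0 := by
    rw [show 2 * -(Real.pi/2) = -Real.pi by ring]; simp
  have hc2 : Real.cos (2 * -(Real.pi/2)) = -1 := by
    rw [show 2 * -(Real.pi/2) = -Real.pi by ring]; simp
  have hs1 : Real.sin (2 * -(Real.pi/4)) = -1 := by
    rw [show 2 * -(Real.pi/4) = -(Real.pi/2) by ring]; simp
  have hc1 : Real.cos (2 * -(Real.pi/4)) = 0 := by
    rw [show 2 * -(Real.pi/4) = -(Real.pi/2) by ring]; simp
  constructor
  · intro g h
    obtain ⟨d, rfl⟩ : ∃ d, h = g + d := ⟨h - g, by ring⟩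
    rw [show (-(Real.pi/4)) • A = (-(Real.pi/4)) • A from rfl, exp_key A h3, hs1, hc1, hAA]
    rw [hA']
    simp only [Matrix.add_apply, Matrix.smul_apply, Matrix.sub_apply, Matrix.one_apply,
      Tm, Matrix.of_apply, smul_eq_mul, add_sub_cancel_left, left_eq_add]
    have hd : d = 0 ∨ d = 1 ∨ d = 2 ∨ d = 3 := by revert d; decide
    rcases hd with rfl | rfl | rfl | rfl <;>
    simp only [show ((0:ZMod 4) = 1) = False from by decide,
      show ((0:ZMod 4) = 2) = False from by decide,
      show ((0:ZMod 4) = 3) = False from by decide,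
      show ((1:ZMod 4) = 0) = False from by decide,
      show ((1:ZMod 4) = 2) = False from by decide,
      show ((1:ZMod 4) = 3) = False from by decide,
      show ((2:ZMod 4) = 0) = False from by decide,
      show ((2:ZMod 4) = 1) = False from by decide,
      show ((2:ZMod 4) = 3) = False from by decide,
      show ((3:ZMod 4) = 0) = False from by decide,
      show ((3:ZMod 4) = 1) = False from by decide,
      show ((3:ZMod 4) = 2) = False from by decide,
      eq_self_iff_true, if_true, if_false] <;>
    norm_num
  · rw [exp_key A h3, hs2, hc2, hAA]
    have hRHS : (Matrix.of fun g h => if h = g + 2 then (1:ℝ) else 0) = Tm 2 := by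
      ext g h
      simp only [Tm, Matrix.of_apply, sub_eq_iff_eq_add']
    rw [hRHS]
    module
end

section
/- Let k ≥ 1 and let G = (ℤ/4ℤ)^{2k}. Let C ⊆ G consist of the 2k standard basis vectors e₁,…,e_{2k} together with the all-ones vector (1,1,…,1), and let A be the skew adjacency matrix of the oriented Cayley graph X(G,C). Then every entry of exp(−(π/4)·A) has absolute value 1/2^{2k} = 1/√|G|; that is, X(G,C) admits uniform mixing at time π/4. -/
/-!
Write `P c = shift c` for the translation matrix `(P c) g h = [h - g = c]`, so that
`A = ∑_{c ∈ C} M c` with `M c = skewShift c = P c - P (-c)`, and all these matrices commute. Since `4 • c = 0`, `M c ^ 3 = -4 • M c`, so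
`exp (-(π/4) • M c) = ½ (1 - P c + P (2c) + P (3c))`. Multiplying these factors over the basis vectors
`e_i` gives the product kernel `∏ᵢ w ((h - g) i)` with `w r = ±½`, negative exactly at `r = 1`; the
factor of the all-ones vector `𝟙` then combines its translates by `r • 𝟙` into an entry
`2^{-(2k+1)} (ε₀ - ε₁ + ε₂ + ε₃)` with signs `εᵣ = ±1`. Each coordinate of `h - g` contributes the
sign `-1` to exactly one `εᵣ`, so `ε₀ε₁ε₂ε₃ = (-1)^{2k} = 1`, and every such signed sum is `±2`.
-/

open NormedSpace Finset
open scoped Real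

section CubicExp

open Nat

variable {𝔸 : Type*} [Ring 𝔸] [Algebra ℝ 𝔸] [TopologicalSpace 𝔸] [IsTopologicalRing 𝔸]
  [ContinuousSMul ℝ 𝔸] [T2Space 𝔸]

theorem exp_eq_of_pow_three_eq_neg_sq_smul {X : 𝔸} {a : ℝ} (ha : a ≠ 0)
    (hX : X ^ 3 = (-a ^ 2) • X) :
    exp X = 1 + (Real.sin a / a) • X + ((1 - Real.cos a) / a ^ 2) • X ^ 2 := by
  have hodd (m : ℕ) : X ^ (2 * m + 1) = (-a ^ 2) ^ m • X := by
    induction m with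
    | zero => simp
    | succ m ih =>
      rw [show 2 * (m + 1) + 1 = 2 * m + 1 + 2 by ring, pow_add, ih, smul_mul_assoc,
        ← pow_succ' X 2, hX, smul_smul, ← pow_succ]
  have heven (m : ℕ) : X ^ (2 * m + 2) = (-a ^ 2) ^ m • X ^ 2 := by
    rw [pow_succ, hodd, smul_mul_assoc, ← sq]
  have hsin : HasSum (fun m : ℕ => ((2 * m + 1)! : ℝ)⁻¹ * (-a ^ 2) ^ m) (Real.sin a / a) := by
    convert (Real.hasSum_sin a).div_const a using 1
    · rfl
    funext m
    rw [neg_pow, ← pow_mul, pow_succ]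
    field_simp
  have hcos : HasSum (fun m : ℕ => ((2 * m + 2)! : ℝ)⁻¹ * (-a ^ 2) ^ m)
      ((1 - Real.cos a) / a ^ 2) := by
    convert ((hasSum_nat_add_iff' 1).mpr (Real.hasSum_cos a)).div_const (-a ^ 2) using 1
    · rfl
    · funext m
      rw [neg_pow, pow_mul, pow_succ, pow_succ, mul_add, mul_one]
      field_simp
      ring
    · rw [div_neg, ← neg_div, neg_sub, range_one, sum_singleton]
      simp
  rw [exp_eq_tsum ℝ]
  refine HasSum.tsum_eq ?_
  rw [add_assoc, add_comm (_ • X), ← add_assoc]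
  refine HasSum.even_add_odd ?_ ?_
  · refine (hasSum_nat_add_iff' 1).mp ?_
    simp only [range_one, sum_singleton, mul_zero, pow_zero, factorial_zero, cast_one, inv_one,
      one_smul, add_sub_cancel_left, mul_add, mul_one]
    convert hcos.smul_const (X ^ 2) using 1
    · rfl
    funext m
    rw [heven, smul_smul]
  · convert hsin.smul_const X using 1
    funext m
    rw [hodd, smul_smul]

end CubicExp

theorem ZMod.sum_univ_four {M : Type*} [AddCommMonoid M] (f : ZMod 4 → M) :
    ∑ r, f r = f 0 + f 1 + f 2 + f 3 :=
  Fin.sum_univ_four f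

theorem ZMod.prod_univ_four {M : Type*} [CommMonoid M] (f : ZMod 4 → M) :
    ∏ r, f r = f 0 * f 1 * f 2 * f 3 :=
  Fin.prod_univ_four f

namespace CayleyWalk

section Translations

variable {G : Type*} [AddCommGroup G]

def convMatrix (f : G → ℝ) : Matrix G G ℝ :=
  Matrix.of fun g h => f (h - g)

theorem convMatrix_apply (f : G → ℝ) (g h : G) : convMatrix f g h = f (h - g) :=
  rfl

variable [DecidableEq G]

def shift (c : G) : Matrix G G ℝ :=
  Matrix.of fun g h => if h - g = c then 1 else 0

def skewShift (c : G) : Matrix G G ℝ :=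
  shift c - shift (-c)

theorem shift_zero : shift (0 : G) = 1 := by
  ext g h
  simp [shift, Matrix.one_apply, sub_eq_zero, eq_comm]

theorem eq_sum_skewShift {C : Finset G} (hC : ∀ c ∈ C, -c ∉ C) {A : Matrix G G ℝ}
    (hA : ∀ g h, (h - g ∈ C → A g h = 1) ∧ (g - h ∈ C → A g h = -1) ∧
      (h - g ∉ C → g - h ∉ C → A g h = 0)) :
    A = ∑ c ∈ C, skewShift c := by
  ext g h
  have hneg (c : G) : h - g = -c ↔ g - h = c := by rw [← neg_sub g h, neg_inj]
  simp only [skewShift, Matrix.sum_apply, Matrix.sub_apply, shift, Matrix.of_apply, hneg,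
    sum_sub_distrib, sum_ite_eq]
  by_cases hgh : h - g ∈ C
  · have hhg : g - h ∉ C := by rw [← neg_sub h g]; exact hC _ hgh
    simp [(hA g h).1 hgh, hgh, hhg]
  · by_cases hhg : g - h ∈ C
    · simp [(hA g h).2.1 hhg, hgh, hhg]
    · simp [(hA g h).2.2 hgh hhg, hgh, hhg]

theorem skewShift_eq_shift_smul [Module (ZMod 4) G] (c : G) :
    skewShift c = shift ((1 : ZMod 4) • c) - shift ((3 : ZMod 4) • c) := by
  rw [skewShift, one_smul, show (3 : ZMod 4) = -1 by decide, neg_one_smul]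

variable [Fintype G]

theorem shift_mul_apply (c : G) (B : Matrix G G ℝ) (g h : G) :
    (shift c * B) g h = B (g + c) h := by
  rw [Matrix.mul_apply, sum_eq_single (g + c)]
  · simp [shift]
  · intro x _ hx
    simp [shift, sub_eq_iff_eq_add', hx]
  · simp

theorem shift_mul_shift (c d : G) : shift c * shift d = shift (c + d) := by
  ext g h
  rw [shift_mul_apply]
  simp only [shift, Matrix.of_apply, sub_eq_iff_eq_add', add_assoc]

theorem commute_shift (c d : G) : Commute (shift c) (shift d) := by
  rw [Commute, SemiconjBy, shift_mul_shift, shift_mul_shift, add_comm]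

theorem commute_skewShift (c d : G) : Commute (skewShift c) (skewShift d) :=
  ((commute_shift c d).sub_right (commute_shift c (-d))).sub_left
    ((commute_shift (-c) d).sub_right (commute_shift (-c) (-d)))

theorem sum_smul_shift_mul_convMatrix {R : Type*} [Fintype R] (w : R → ℝ) (c : R → G)
    (f : G → ℝ) :
    (∑ r, w r • shift (c r)) * convMatrix f = convMatrix fun x => ∑ r, w r * f (x - c r) := by
  ext g h
  simp only [Matrix.sum_mul, Matrix.smul_mul, Matrix.sum_apply, Matrix.smul_apply,
    shift_mul_apply, convMatrix, Matrix.of_apply, smul_eq_mul, sub_add_eq_sub_sub]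

end Translations

def signAtOne (r : ZMod 4) : ℝ := if r = 1 then -1 else 1

theorem signAtOne_zero : signAtOne 0 = 1 := if_neg (by decide)

theorem signAtOne_one : signAtOne 1 = -1 := if_pos rfl

theorem signAtOne_two : signAtOne 2 = 1 := if_neg (by decide)

theorem signAtOne_three : signAtOne 3 = 1 := if_neg (by decide)

theorem signAtOne_sq (r : ZMod 4) : signAtOne r ^ 2 = 1 := by
  unfold signAtOne
  split_ifs <;> norm_num

section ExponentFour

variable {G : Type*} [AddCommGroup G] [DecidableEq G] [Fintype G] [Module (ZMod 4) G]

theorem shift_smul_mul_shift_smul (c : G) (r s : ZMod 4) :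
    shift (r • c) * shift (s • c) = shift ((r + s) • c) := by
  rw [shift_mul_shift, add_smul]

theorem skewShift_sq (c : G) :
    skewShift c ^ 2 = (2 : ℝ) • (shift ((2 : ZMod 4) • c) - shift ((0 : ZMod 4) • c)) := by
  rw [sq, skewShift_eq_shift_smul, sub_mul, mul_sub, mul_sub]
  simp only [shift_smul_mul_shift_smul]
  rw [show (1 + 1 : ZMod 4) = 2 by decide, show (1 + 3 : ZMod 4) = 0 by decide,
    show (3 + 1 : ZMod 4) = 0 by decide, show (3 + 3 : ZMod 4) = 2 by decide]
  module

theorem skewShift_pow_three (c : G) : skewShift c ^ 3 = (-4 : ℝ) • skewShift c := by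
  rw [pow_succ' _ 2, skewShift_sq, mul_smul_comm, skewShift_eq_shift_smul, sub_mul, mul_sub,
    mul_sub]
  simp only [shift_smul_mul_shift_smul]
  rw [show (1 + 2 : ZMod 4) = 3 by decide, show (1 + 0 : ZMod 4) = 1 by decide,
    show (3 + 2 : ZMod 4) = 1 by decide, show (3 + 0 : ZMod 4) = 3 by decide]
  module

theorem exp_neg_pi_div_four_smul_skewShift (c : G) :
    exp ((-(π / 4)) • skewShift c) = ∑ r : ZMod 4, (signAtOne r / 2) • shift (r • c) := by
  have hX : ((-(π / 4)) • skewShift c) ^ 3 = (-(π / 2) ^ 2) • ((-(π / 4)) • skewShift c) := by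
    rw [smul_pow, skewShift_pow_three, smul_smul, smul_smul]
    ring_nf
  rw [exp_eq_of_pow_three_eq_neg_sq_smul (by positivity) hX, Real.sin_pi_div_two,
    Real.cos_pi_div_two, smul_pow, skewShift_sq, skewShift_eq_shift_smul, ZMod.sum_univ_four]
  have hlin : (1 / (π / 2)) * -(π / 4) = -(1 / 2) := by field_simp; norm_num
  have hquad : ((1 - 0) / (π / 2) ^ 2) * ((-(π / 4)) ^ 2 * 2) = 1 / 2 := by field_simp; ring
  simp only [smul_smul, hlin, hquad, signAtOne_zero, signAtOne_one, signAtOne_two, signAtOne_three,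
    zero_smul, shift_zero, one_smul]
  module

end ExponentFour

section ProductKernel

variable {ι : Type*} [Fintype ι]

def productKernel (f : ι → ZMod 4 → ℝ) (x : ι → ZMod 4) : ℝ :=
  ∏ i, f i (x i)

theorem convMatrix_productKernel_ite_eq_zero :
    convMatrix (productKernel fun (_ : ι) (y : ZMod 4) => if y = 0 then (1 : ℝ) else 0) = 1 := by
  ext g h
  simp only [convMatrix, productKernel, Matrix.of_apply, Fintype.prod_boole, Matrix.one_apply,
    ← funext_iff, ← Pi.zero_def, sub_eq_zero, eq_comm (a := h)]

variable [DecidableEq ι]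

theorem sum_smul_shift_single_mul_convMatrix_productKernel (w : ZMod 4 → ℝ) (j : ι)
    (f : ι → ZMod 4 → ℝ) :
    (∑ r, w r • shift (Pi.single j r)) * convMatrix (productKernel f) =
      convMatrix (productKernel (Function.update f j fun y => ∑ r, w r * f j (y - r))) := by
  rw [sum_smul_shift_mul_convMatrix]
  congr 1
  funext x
  have hsplit (f' : ι → ZMod 4 → ℝ) (y : ι → ZMod 4) :
      productKernel f' y = f' j (y j) * ∏ i ∈ univ.erase j, f' i (y i) :=
    (mul_prod_erase _ (fun i => f' i (y i)) (mem_univ j)).symm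
  have hrest (r : ZMod 4) : ∏ i ∈ univ.erase j, f i (x i - (Pi.single j r : ι → ZMod 4) i) =
      ∏ i ∈ univ.erase j, f i (x i) :=
    prod_congr rfl fun i hi => by rw [Pi.single_eq_of_ne (ne_of_mem_erase hi), sub_zero]
  have hupd : ∏ i ∈ univ.erase j, Function.update f j (fun y => ∑ r, w r * f j (y - r)) i (x i) =
      ∏ i ∈ univ.erase j, f i (x i) :=
    prod_congr rfl fun i hi => by rw [Function.update_of_ne (ne_of_mem_erase hi)]
  simp only [hsplit, Pi.sub_apply, hrest, hupd, Function.update_self, Pi.single_eq_same, sum_mul,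
    mul_assoc]

theorem exp_neg_pi_div_four_smul_sum_skewShift_single (S : Finset ι) :
    exp ((-(π / 4)) • ∑ i ∈ S, skewShift (Pi.single i (1 : ZMod 4))) =
      convMatrix (productKernel
        (S.piecewise (fun _ y => signAtOne y / 2) fun _ y => if y = 0 then 1 else 0)) := by
  induction S using Finset.induction_on with
  | empty =>
    rw [sum_empty, smul_zero, exp_zero, piecewise_empty, convMatrix_productKernel_ite_eq_zero]
  | insert j S hj ih =>
    have hcomm : Commute ((-(π / 4)) • skewShift (Pi.single j (1 : ZMod 4)))
        ((-(π / 4)) • ∑ i ∈ S, skewShift (Pi.single i (1 : ZMod 4))) :=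
      ((Commute.sum_right _ _ _ fun i _ => commute_skewShift _ _).smul_left _).smul_right _
    have hsingle (r : ZMod 4) : r • Pi.single j (1 : ZMod 4) = Pi.single j r := by
      rw [← Pi.single_smul', smul_eq_mul, mul_one]
    rw [sum_insert hj, smul_add, Matrix.exp_add_of_commute _ _ hcomm, ih,
      exp_neg_pi_div_four_smul_skewShift]
    simp only [hsingle]
    rw [sum_smul_shift_single_mul_convMatrix_productKernel, piecewise_insert]
    congr 3
    funext y
    simp [piecewise_eq_of_notMem _ _ _ hj, sub_eq_zero]

end ProductKernel

def connectionSet (ι : Type*) [Fintype ι] [DecidableEq ι] : Finset (ι → ZMod 4) :=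
  insert 1 (univ.image fun i => Pi.single i 1)

section ConnectionSet

variable {ι : Type*} [Fintype ι] [DecidableEq ι]

theorem coe_connectionSet :
    (connectionSet ι : Set (ι → ZMod 4)) = {x | (∃ i, x = Pi.single i 1) ∨ x = fun _ => 1} := by
  ext x
  simp [connectionSet, eq_comm, or_comm, Pi.one_def]

theorem neg_notMem_connectionSet [Nonempty ι] : ∀ c ∈ connectionSet ι, -c ∉ connectionSet ι := by
  have key (c) (hc : c ∈ connectionSet ι) : (∃ i, c i = 1) ∧ ∀ i, c i ≠ -1 := by
    simp only [connectionSet, mem_insert, mem_image, mem_univ, true_and] at hc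
    rcases hc with rfl | ⟨j, rfl⟩
    · exact ⟨⟨Classical.arbitrary ι, rfl⟩, fun _ => by simp only [Pi.one_apply]; decide⟩
    · refine ⟨⟨j, Pi.single_eq_same j 1⟩, fun i => ?_⟩
      rw [Pi.single_apply]
      split_ifs <;> decide
  intro c hc hneg
  obtain ⟨i, hi⟩ := (key c hc).1
  exact (key _ hneg).2 i (by rw [Pi.neg_apply, hi])

theorem sum_connectionSet [Nontrivial ι] {M : Type*} [AddCommMonoid M] (f : (ι → ZMod 4) → M) :
    ∑ c ∈ connectionSet ι, f c = f 1 + ∑ i, f (Pi.single i 1) := by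
  have hone : (1 : ι → ZMod 4) ∉ univ.image fun i => Pi.single i 1 := by
    simp only [mem_image, mem_univ, true_and, not_exists]
    intro i hi
    obtain ⟨j, hj⟩ := exists_ne i
    have := congrFun hi j
    rw [Pi.single_eq_of_ne hj, Pi.one_apply] at this
    exact absurd this (by decide)
  have hinj : Set.InjOn (fun i : ι => (Pi.single i 1 : ι → ZMod 4)) (univ : Finset ι) := by
    intro i _ j _ hij
    by_contra hne
    have := congrFun hij i
    dsimp only at this
    rw [Pi.single_eq_same, Pi.single_eq_of_ne hne] at this
    exact absurd this (by decide)
  rw [connectionSet, sum_insert hone, sum_image hinj]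

theorem exp_neg_pi_div_four_smul_sum_connectionSet [Nontrivial ι] :
    exp ((-(π / 4)) • ∑ c ∈ connectionSet ι, skewShift c) =
      convMatrix fun x => ∑ r, signAtOne r / 2 * ∏ i, (signAtOne (x i - r) / 2) := by
  have hcomm : Commute ((-(π / 4)) • skewShift (1 : ι → ZMod 4))
      ((-(π / 4)) • ∑ i, skewShift (Pi.single i (1 : ZMod 4))) :=
    ((Commute.sum_right _ _ _ fun i _ => commute_skewShift _ _).smul_left _).smul_right _
  rw [sum_connectionSet, smul_add, Matrix.exp_add_of_commute _ _ hcomm,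
    exp_neg_pi_div_four_smul_skewShift, exp_neg_pi_div_four_smul_sum_skewShift_single,
    piecewise_univ, sum_smul_shift_mul_convMatrix]
  rfl

end ConnectionSet

theorem prod_signAtOne_sub (x : ZMod 4) : ∏ r, signAtOne (x - r) = -1 := by
  rw [Fintype.prod_equiv (Equiv.subLeft x) (fun r => signAtOne (x - r)) signAtOne fun _ => rfl,
    ZMod.prod_univ_four, signAtOne_zero, signAtOne_one, signAtOne_two, signAtOne_three]
  norm_num

theorem abs_sub_add_add_eq_two {a b c d : ℝ} (ha : a ^ 2 = 1) (hb : b ^ 2 = 1) (hc : c ^ 2 = 1)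
    (habcd : a * b * c * d = 1) : |a - b + c + d| = 2 := by
  have hd : d = a * b * c := by
    linear_combination (a * b * c) * habcd - d * b ^ 2 * c ^ 2 * ha - d * c ^ 2 * hb - d * hc
  subst hd
  rcases sq_eq_one_iff.mp ha with rfl | rfl <;> rcases sq_eq_one_iff.mp hb with rfl | rfl <;>
    rcases sq_eq_one_iff.mp hc with rfl | rfl <;> norm_num

theorem abs_sum_signAtOne_mul_prod {ι : Type*} [Fintype ι] (hι : Even (Fintype.card ι))
    (x : ι → ZMod 4) :
    |∑ r, signAtOne r / 2 * ∏ i, (signAtOne (x i - r) / 2)| = 1 / 2 ^ Fintype.card ι := by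
  set ε : ZMod 4 → ℝ := fun r => ∏ i, signAtOne (x i - r) with hε
  have hsq (r : ZMod 4) : ε r ^ 2 = 1 := by simp [hε, ← prod_pow, signAtOne_sq]
  have hprod : ε 0 * ε 1 * ε 2 * ε 3 = 1 := by
    rw [← ZMod.prod_univ_four, hε, prod_comm]
    simp [prod_signAtOne_sub, hι.neg_one_pow]
  have hsum : ∑ r, signAtOne r / 2 * ∏ i, (signAtOne (x i - r) / 2) =
      (ε 0 - ε 1 + ε 2 + ε 3) / 2 ^ (Fintype.card ι + 1) := by
    simp only [prod_div_distrib, prod_const, card_univ, ZMod.sum_univ_four, hε, signAtOne_zero,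
      signAtOne_one, signAtOne_two, signAtOne_three]
    ring
  rw [hsum, abs_div, abs_sub_add_add_eq_two (hsq 0) (hsq 1) (hsq 2) hprod,
    abs_of_pos (by positivity), pow_succ]
  field_simp

end CayleyWalk

/-- Let `k ≥ 1`, `G = (ℤ/4ℤ)^{2k}`, and let `C` consist of the `2k`
standard basis vectors together with the all-ones vector.  Then the oriented Cayley
graph `X(G, C)` (with skew adjacency matrix `A`) admits uniform mixing at time `π/4`:
every entry of `exp(−(π/4)·A)` has absolute value `1/2^{2k} = 1/√|G|`. -/
theorem stmt17 (k : ℕ) (hk : 1 ≤ k)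
    (C : Set (Fin (2 * k) → ZMod 4))
    (hC : C = {x | (∃ i, x = Pi.single i 1) ∨ x = fun _ => 1})
    (A : Matrix (Fin (2 * k) → ZMod 4) (Fin (2 * k) → ZMod 4) ℝ)
    (hA : ∀ g h, (h - g ∈ C → A g h = 1) ∧ (g - h ∈ C → A g h = -1) ∧
      (h - g ∉ C → g - h ∉ C → A g h = 0)) :
    ∀ g h, |(NormedSpace.exp ((-(Real.pi / 4)) • A)) g h| = 1 / 2 ^ (2 * k) := by
  have : Nontrivial (Fin (2 * k)) := Fin.nontrivial_iff_two_le.mpr (by omega)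
  rw [hC, ← CayleyWalk.coe_connectionSet] at hA
  rw [CayleyWalk.eq_sum_skewShift CayleyWalk.neg_notMem_connectionSet hA,
    CayleyWalk.exp_neg_pi_div_four_smul_sum_connectionSet]
  intro g h
  simpa only [CayleyWalk.convMatrix_apply, Fintype.card_fin] using
    CayleyWalk.abs_sum_signAtOne_mul_prod (by simp) (h - g)
end

section
/- Let {A_i}_{i∈ι} be an association scheme on a finite vertex set V (satisfying the axioms in the context), and let E be a subfield of ℂ that is closed under complex conjugation and contains every eigenvalue of every A_i (i.e. the spectrum over ℂ of each A_i is contained in E). Let S ⊆ Matrix V V ℂ be the E-linear span of {A_i}_{i∈ι}, and let ψ : S → S be a nonzero E-linear map such that ψ(MN) = ψ(M)ψ(N) and ψ(M ∘ N) = ψ(M) ∘ ψ(N) for all M, N ∈ S. Then ψ(Mᵀ) = ψ(M)ᵀ and ψ(M*) = ψ(M)* for all M ∈ S, where M* is the conjugate transpose. -/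
open Matrix

section AuxCounting

private lemma sum01_zero {α : Type*} (s : Finset α) (f : α → ℂ)
    (h : ∀ k ∈ s, f k = 0 ∨ f k = 1) (hs : ∑ k ∈ s, f k = 0) :
    ∀ k ∈ s, f k = 0 := by
  classical
  set g : α → ℕ := fun k => if f k = 1 then 1 else 0 with hg
  have hfg : ∀ k ∈ s, f k = (g k : ℂ) := by
    intro k hk
    rcases h k hk with h0 | h1
    · simp [hg, h0, show (0:ℂ) ≠ 1 by norm_num]
    · simp [hg, h1]
  have hcast : ((∑ k ∈ s, g k : ℕ) : ℂ) = 0 := by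
    rw [Nat.cast_sum, ← hs]
    exact (Finset.sum_congr rfl hfg).symm
  have hsg : ∑ k ∈ s, g k = 0 := by exact_mod_cast hcast
  intro k hk
  have := (Finset.sum_eq_zero_iff.mp hsg) k hk
  rcases h k hk with h0 | h1
  · exact h0
  · simp [hg, h1] at this

private lemma sum01_one {α : Type*} (s : Finset α) (f : α → ℂ)
    (h : ∀ k ∈ s, f k = 0 ∨ f k = 1) (hs : ∑ k ∈ s, f k = 1) :
    ∃ k ∈ s, f k = 1 ∧ ∀ j ∈ s, j ≠ k → f j = 0 := by
  classical
  set g : α → ℕ := fun k => if f k = 1 then 1 else 0 with hg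
  have hfg : ∀ k ∈ s, f k = (g k : ℂ) := by
    intro k hk
    rcases h k hk with h0 | h1
    · simp [hg, h0, show (0:ℂ) ≠ 1 by norm_num]
    · simp [hg, h1]
  have hcast : ((∑ k ∈ s, g k : ℕ) : ℂ) = 1 := by
    rw [Nat.cast_sum, ← hs]
    exact (Finset.sum_congr rfl hfg).symm
  have hsg : ∑ k ∈ s, g k = 1 := by exact_mod_cast hcast
  obtain ⟨k, hk, hk0⟩ := Finset.exists_ne_zero_of_sum_ne_zero
    (by rw [hsg]; exact one_ne_zero)
  have hfk : f k = 1 := by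
    rcases h k hk with h0 | h1
    · exact absurd (by simp [hg, h0, show (0:ℂ) ≠ 1 by norm_num]) hk0
    · exact h1
  have hgk : g k = 1 := by simp [hg, hfk]
  refine ⟨k, hk, hfk, ?_⟩
  intro j hj hjk
  rcases h j hj with h0 | h1
  · exact h0
  exfalso
  have hgj : g j = 1 := by simp [hg, h1]
  have h2 : g k + g j ≤ ∑ x ∈ s, g x := by
    rw [← Finset.add_sum_erase s g hk]
    have : g j ≤ ∑ x ∈ s.erase k, g x :=
      Finset.single_le_sum (fun i _ => Nat.zero_le _) (Finset.mem_erase.mpr ⟨hjk, hj⟩)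
    omega
  omega

private lemma sum01_card {α : Type*} (s : Finset α) (f : α → ℂ)
    (h : ∀ k ∈ s, f k = 0 ∨ f k = 1) (hs : ∑ k ∈ s, f k = s.card) :
    ∀ k ∈ s, f k = 1 := by
  classical
  set g : α → ℕ := fun k => if f k = 1 then 1 else 0 with hg
  have hfg : ∀ k ∈ s, f k = (g k : ℂ) := by
    intro k hk
    rcases h k hk with h0 | h1
    · simp [hg, h0, show (0:ℂ) ≠ 1 by norm_num]
    · simp [hg, h1]
  have hcast : ((∑ k ∈ s, g k : ℕ) : ℂ) = (s.card : ℂ) := by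
    rw [Nat.cast_sum, ← hs]
    exact (Finset.sum_congr rfl hfg).symm
  have hsg : ∑ k ∈ s, g k = s.card := by exact_mod_cast hcast
  intro k hk
  by_contra hne
  rcases h k hk with h0 | h1
  swap
  · exact hne h1
  have hgk : g k = 0 := by simp [hg]; intro h'; exact absurd h' (by rw [h0]; norm_num)
  have hlt : ∑ x ∈ s, g x < ∑ x ∈ s, 1 := by
    refine Finset.sum_lt_sum (fun i _ => ?_) ⟨k, hk, by omega⟩
    simp only [hg]; split <;> omega
  have hcard : ∑ _x ∈ s, (1:ℕ) = s.card := by simp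
  omega

end AuxCounting

/-- Let `{A i}` be an association scheme on a finite vertex set `V`,
let `E` be a conjugation-closed subfield of `ℂ` containing all eigenvalues of the
`A i`, let `S` be the `E`-linear span of the `A i`, and let `ψ` be a nonzero
`E`-linear map of `S` into itself preserving matrix multiplication and Schur
multiplication.  Then `ψ` commutes with transpose and with conjugate transpose on
`S`. -/
theorem stmt19 (V ι : Type*) [Fintype V] [DecidableEq V] [Nonempty V] [Fintype ι]
    (A : ι → Matrix V V ℂ)
    (h01 : ∀ i a b, A i a b = 0 ∨ A i a b = 1)
    (hI : ∃ i₀, A i₀ = (1 : Matrix V V ℂ))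
    (hJ : (∑ i, A i) = Matrix.of fun _ _ => 1)
    (hT : ∀ i, ∃ i', (A i)ᵀ = A i')
    (hcomm : ∀ i j, A i * A j = A j * A i)
    (E : Subfield ℂ)
    (hEconj : ∀ x ∈ E, (starRingEnd ℂ) x ∈ E)
    (hEeig : ∀ i, ∀ μ ∈ spectrum ℂ (A i), μ ∈ E)
    (S : Set (Matrix V V ℂ))
    (hS : S = {M | ∃ c : ι → ℂ, (∀ i, c i ∈ E) ∧ M = ∑ i, c i • A i})
    (hclosed : ∀ i j, A i * A j ∈ S)
    (ψ : Matrix V V ℂ → Matrix V V ℂ)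
    (hmapsto : ∀ M ∈ S, ψ M ∈ S)
    (hadd : ∀ M ∈ S, ∀ N ∈ S, ψ (M + N) = ψ M + ψ N)
    (hsmul : ∀ c ∈ E, ∀ M ∈ S, ψ (c • M) = c • ψ M)
    (hne : ∃ M ∈ S, ψ M ≠ 0)
    (hmul : ∀ M ∈ S, ∀ N ∈ S, ψ (M * N) = ψ M * ψ N)
    (hschur : ∀ M ∈ S, ∀ N ∈ S,
      ψ (Matrix.hadamard M N) = Matrix.hadamard (ψ M) (ψ N)) :
    ∀ M ∈ S, ψ Mᵀ = (ψ M)ᵀ ∧ ψ Mᴴ = (ψ M)ᴴ := by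
  classical
  obtain ⟨i₀, hi₀⟩ := hI
  obtain ⟨a₀⟩ := (inferInstance : Nonempty V)
  set J : Matrix V V ℂ := Matrix.of (fun _ _ => (1:ℂ)) with hJdef
  -- basic membership facts
  have hAmem : ∀ i, A i ∈ S := by
    intro i
    rw [hS]
    refine ⟨fun j => if j = i then 1 else 0, fun j => ?_, ?_⟩
    · by_cases h : j = i <;> simp [h, E.one_mem, E.zero_mem]
    · simp [ite_smul, Finset.sum_ite_eq']
  have hImem : (1 : Matrix V V ℂ) ∈ S := hi₀ ▸ hAmem i₀
  have hJmem : J ∈ S := by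
    rw [hS]
    exact ⟨fun _ => 1, fun _ => E.one_mem, by simp [hJ]⟩
  have hS0 : (0 : Matrix V V ℂ) ∈ S := by
    rw [hS]; exact ⟨fun _ => 0, fun _ => E.zero_mem, by simp⟩
  have hSadd : ∀ M ∈ S, ∀ N ∈ S, M + N ∈ S := by
    intro M hM N hN
    rw [hS] at hM hN ⊢
    obtain ⟨c, hc, rfl⟩ := hM
    obtain ⟨d, hd, rfl⟩ := hN
    exact ⟨fun i => c i + d i, fun i => E.add_mem (hc i) (hd i), by
      rw [← Finset.sum_add_distrib]; simp [add_smul]⟩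
  have hSsmul : ∀ c ∈ E, ∀ M ∈ S, c • M ∈ S := by
    intro c hcE M hM
    rw [hS] at hM ⊢
    obtain ⟨d, hd, rfl⟩ := hM
    exact ⟨fun i => c * d i, fun i => E.mul_mem hcE (hd i), by
      rw [Finset.smul_sum]; simp [smul_smul]⟩
  have hSsum : ∀ (s : Finset ι) (B : ι → Matrix V V ℂ),
      (∀ k ∈ s, B k ∈ S) → (∑ k ∈ s, B k) ∈ S := by
    intro s B hB
    induction s using Finset.induction with
    | empty => simpa using hS0
    | @insert x s hx ih =>
      rw [Finset.sum_insert hx]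
      exact hSadd _ (hB _ (Finset.mem_insert_self _ _)) _
        (ih fun k hk => hB k (Finset.mem_insert_of_mem hk))
  have hSmul : ∀ M ∈ S, ∀ N ∈ S, M * N ∈ S := by
    intro M hM N hN
    rw [hS] at hM hN
    obtain ⟨c, hc, rfl⟩ := hM
    obtain ⟨d, hd, rfl⟩ := hN
    rw [Finset.sum_mul]
    refine hSsum Finset.univ (fun i => c i • A i * ∑ j, d j • A j) fun i _ => ?_
    show c i • A i * (∑ j, d j • A j) ∈ S
    rw [smul_mul_assoc, Finset.mul_sum]
    refine hSsmul _ (hc i) _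
      (hSsum Finset.univ (fun j => A i * (d j • A j)) fun j _ => ?_)
    show A i * (d j • A j) ∈ S
    rw [mul_smul_comm]
    exact hSsmul _ (hd j) _ (hclosed i j)
  -- entries of members of S lie in E
  have hentE : ∀ M ∈ S, ∀ a b, M a b ∈ E := by
    intro M hM a b
    rw [hS] at hM
    obtain ⟨c, hc, rfl⟩ := hM
    rw [Matrix.sum_apply]
    refine Subfield.sum_mem E fun i _ => ?_
    rw [Matrix.smul_apply, smul_eq_mul]
    rcases h01 i a b with h | h <;> rw [h]
    · simpa using E.zero_mem
    · simpa using E.mul_mem (hc i) E.one_mem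
  -- disjointness of supports
  have hdisj : ∀ i j a b, i ≠ j → A i a b = 1 → A j a b = 0 := by
    intro i j a b hij h1
    have hsum : ∑ k, A k a b = 1 := by
      have := congrFun (congrFun hJ a) b
      simpa [Matrix.sum_apply, hJdef] using this
    obtain ⟨k, _, hk1, hk0⟩ := sum01_one Finset.univ (fun k => A k a b)
      (fun k _ => h01 k a b) hsum
    have hik : i = k := by
      by_contra hne
      exact one_ne_zero (h1 ▸ hk0 i (Finset.mem_univ i) hne)
    exact hk0 j (Finset.mem_univ j) (fun h => hij (hik.trans h.symm))
  -- constant diagonal for members of S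
  have hdiag : ∀ M ∈ S, ∀ a, M a a = M a₀ a₀ := by
    intro M hM a
    rw [hS] at hM
    obtain ⟨c, hc, rfl⟩ := hM
    have key : ∀ x : V, (∑ i, c i • A i) x x = c i₀ := by
      intro x
      rw [Matrix.sum_apply, Finset.sum_eq_single i₀]
      · rw [Matrix.smul_apply, hi₀, Matrix.one_apply_eq, smul_eq_mul, mul_one]
      · intro j _ hj
        have hz : A j x x = 0 :=
          hdisj i₀ j x x (fun h => hj (h ▸ rfl)) (by rw [hi₀, Matrix.one_apply_eq])
        rw [Matrix.smul_apply, hz, smul_zero]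
      · intro h; exact absurd (Finset.mem_univ i₀) h
    rw [key, key]
  -- J commutes with members of S
  have hcommJ : ∀ M ∈ S, M * J = J * M := by
    intro M hM
    rw [hS] at hM
    obtain ⟨c, hc, rfl⟩ := hM
    rw [Finset.sum_mul, Finset.mul_sum]
    refine Finset.sum_congr rfl fun i _ => ?_
    rw [smul_mul_assoc, mul_smul_comm, ← hJ, Finset.sum_mul, Finset.mul_sum]
    exact congrArg _ (Finset.sum_congr rfl fun j _ => hcomm i j)
  have hMJentry : ∀ (M : Matrix V V ℂ) (a b : V), (M * J) a b = ∑ k, M a k := by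
    intro M a b; simp [Matrix.mul_apply, hJdef]
  have hJMentry : ∀ (M : Matrix V V ℂ) (a b : V), (J * M) a b = ∑ k, M k b := by
    intro M a b; simp [Matrix.mul_apply, hJdef]
  have hMJconst : ∀ M ∈ S, M * J = ((J * M) a₀ a₀) • J ∧ J * M = ((J * M) a₀ a₀) • J := by
    intro M hM
    have hc : ∀ a b, (M * J) a b = (J * M) a₀ a₀ := by
      intro a b
      calc (M * J) a b = (M * J) a a₀ := by rw [hMJentry, hMJentry]
        _ = (J * M) a a₀ := by rw [hcommJ M hM]
        _ = (J * M) a₀ a₀ := by rw [hJMentry, hJMentry]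
    have h1 : M * J = ((J * M) a₀ a₀) • J := by
      ext a b
      rw [hc a b, Matrix.smul_apply, hJdef, Matrix.of_apply, smul_eq_mul, mul_one]
    refine ⟨h1, ?_⟩
    conv_lhs => rw [← hcommJ M hM]
    exact h1
  -- ψ of 0 and of finite E-combinations
  have hψ0 : ψ 0 = 0 := by
    have h := hsmul 0 E.zero_mem 1 hImem
    simpa using h
  have hψsum : ∀ (c : ι → ℂ) (B : ι → Matrix V V ℂ), (∀ i, c i ∈ E) → (∀ i, B i ∈ S) →
      ψ (∑ i, c i • B i) = ∑ i, c i • ψ (B i) := by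
    intro c B hc hB
    have main : ∀ s : Finset ι, ψ (∑ i ∈ s, c i • B i) = ∑ i ∈ s, c i • ψ (B i) := by
      intro s
      induction s using Finset.induction with
      | empty => simpa using hψ0
      | @insert x s hx ih =>
        have hmem1 : c x • B x ∈ S := hSsmul _ (hc x) _ (hB x)
        have hmem2 : (∑ i ∈ s, c i • B i) ∈ S :=
          hSsum s (fun i => c i • B i) (fun k _ => hSsmul _ (hc k) _ (hB k))
        rw [Finset.sum_insert hx, Finset.sum_insert hx,
          hadd _ hmem1 _ hmem2, hsmul _ (hc x) _ (hB x), ih]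
    exact main Finset.univ
  -- Schur idempotents map to 0-1 matrices
  have hψ01 : ∀ M ∈ S, Matrix.hadamard M M = M → ∀ a b, ψ M a b = 0 ∨ ψ M a b = 1 := by
    intro M hM hMM a b
    have h := hschur M hM M hM
    rw [hMM] at h
    have hx := congrFun (congrFun h a) b
    rw [Matrix.hadamard_apply] at hx
    have hx2 : ψ M a b * (ψ M a b - 1) = 0 := by linear_combination -hx
    rcases mul_eq_zero.mp hx2 with h' | h'
    · exact Or.inl h'
    · exact Or.inr (by linear_combination h')
  have hhadI : Matrix.hadamard (1 : Matrix V V ℂ) 1 = 1 := by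
    ext a b; by_cases h : a = b <;> simp [Matrix.hadamard_apply, Matrix.one_apply, h]
  have hhadA : ∀ i, Matrix.hadamard (A i) (A i) = A i := by
    intro i; ext a b; rcases h01 i a b with h | h <;> simp [Matrix.hadamard_apply, h]
  have hhadJ : Matrix.hadamard J J = J := by
    ext a b; simp [Matrix.hadamard_apply, hJdef]
  have hhadJleft : ∀ M : Matrix V V ℂ, Matrix.hadamard J M = M := by
    intro M; ext a b; simp [Matrix.hadamard_apply, hJdef]
  -- ψ 1 = 1
  have hψI : ψ 1 = 1 := by
    set B := ψ 1 with hBdef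
    have hBS : B ∈ S := hmapsto 1 hImem
    have hB01 : ∀ a b, B a b = 0 ∨ B a b = 1 := hψ01 1 hImem hhadI
    have hBB : B * B = B := by rw [hBdef, ← hmul 1 hImem 1 hImem, one_mul]
    obtain ⟨hBJ, hJB⟩ := hMJconst B hBS
    set c := (J * B) a₀ a₀ with hcdef
    have hcc : c * c = c := by
      have h1 : B * (B * J) = B * J := by rw [← mul_assoc, hBB]
      rw [hBJ, mul_smul_comm, hBJ, smul_smul] at h1
      have h2 := congrFun (congrFun h1 a₀) a₀
      simpa [Matrix.smul_apply, hJdef] using h2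
    have hc01 : c = 0 ∨ c = 1 := by
      have : c * (c - 1) = 0 := by linear_combination hcc
      rcases mul_eq_zero.mp this with h' | h'
      · exact Or.inl h'
      · exact Or.inr (by linear_combination h')
    rcases hc01 with hc0 | hc1
    · exfalso
      have hB0 : B = 0 := by
        ext a b
        have hrow : ∑ k, B a k = 0 := by
          have := congrFun (congrFun hBJ a) a₀
          rw [hMJentry] at this
          rw [this, hc0]
          simp
        exact sum01_zero Finset.univ (fun k => B a k) (fun k _ => hB01 a k) hrow b
          (Finset.mem_univ b)
      obtain ⟨M, hM, hMne⟩ := hne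
      apply hMne
      have h1 : ψ M = ψ (1 * M) := by rw [one_mul]
      rw [h1, hmul 1 hImem M hM, ← hBdef, hB0, zero_mul]
    · have hrow : ∀ a, ∑ k, B a k = 1 := by
        intro a
        have := congrFun (congrFun hBJ a) a₀
        rw [hMJentry] at this
        rw [this, hc1]
        simp [hJdef]
      have hcol : ∀ b, ∑ k, B k b = 1 := by
        intro b
        have := congrFun (congrFun hJB a₀) b
        rw [hJMentry] at this
        rw [this, hc1]
        simp [hJdef]
      ext a b
      obtain ⟨k, _, hk1, hk0⟩ := sum01_one Finset.univ (fun k => B a k)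
        (fun k _ => hB01 a k) (hrow a)
      have hrowEq : ∀ b', B a b' = B k b' := by
        intro b'
        have hm := congrFun (congrFun hBB a) b'
        rw [Matrix.mul_apply] at hm
        rw [← hm, Finset.sum_eq_single k]
        · rw [hk1, one_mul]
        · intro m _ hmk; rw [hk0 m (Finset.mem_univ m) hmk, zero_mul]
        · intro h; exact absurd (Finset.mem_univ k) h
      have hkk : B k k = 1 := by rw [← hrowEq k]; exact hk1
      have hak : a = k := by
        by_contra hne'
        obtain ⟨m, _, hm1, hm0⟩ := sum01_one Finset.univ (fun x => B x k)
          (fun x _ => hB01 x k) (hcol k)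
        have h1 : a = m := by
          by_contra h
          have h0 := hm0 a (Finset.mem_univ a) h
          rw [hk1] at h0
          exact one_ne_zero h0
        have h2 : k = m := by
          by_contra h
          have h0 := hm0 k (Finset.mem_univ k) h
          rw [hkk] at h0
          exact one_ne_zero h0
        exact hne' (h1.trans h2.symm)
      subst hak
      by_cases hab : a = b
      · subst hab
        rw [hk1, Matrix.one_apply_eq]
      · rw [hk0 b (Finset.mem_univ b) (fun h => hab h.symm), Matrix.one_apply_ne hab]
  -- ψ J = J
  have hψJ : ψ J = J := by
    set C := ψ J with hCdef
    have hCS : C ∈ S := hmapsto J hJmem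
    have hC01 : ∀ a b, C a b = 0 ∨ C a b = 1 := hψ01 J hJmem hhadJ
    set n : ℕ := Fintype.card V with hn
    have hJJ : J * J = (n : ℂ) • J := by
      ext a b
      simp [Matrix.mul_apply, hJdef, Matrix.smul_apply, hn]
    have hCC : C * C = (n : ℂ) • C := by
      rw [hCdef, ← hmul J hJmem J hJmem, hJJ, hsmul _ (natCast_mem E n) J hJmem]
    obtain ⟨hCJ, hJC⟩ := hMJconst C hCS
    set d := (J * C) a₀ a₀ with hddef
    have hdd : d * d = (n : ℂ) * d := by
      have h1 : C * (C * J) = (C * C) * J := by rw [mul_assoc]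
      rw [hCJ, mul_smul_comm, hCJ, smul_smul, hCC, smul_mul_assoc, hCJ, smul_smul] at h1
      have h2 := congrFun (congrFun h1 a₀) a₀
      simpa [Matrix.smul_apply, hJdef] using h2
    have hd0n : d = 0 ∨ d = (n : ℂ) := by
      have : d * (d - (n : ℂ)) = 0 := by linear_combination hdd
      rcases mul_eq_zero.mp this with h' | h'
      · exact Or.inl h'
      · exact Or.inr (by linear_combination h')
    rcases hd0n with hd0 | hdn
    · exfalso
      have hC0 : C = 0 := by
        ext a b
        have hrow : ∑ k, C a k = 0 := by
          have := congrFun (congrFun hCJ a) a₀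
          rw [hMJentry] at this
          rw [this, hd0]
          simp
        exact sum01_zero Finset.univ (fun k => C a k) (fun k _ => hC01 a k) hrow b
          (Finset.mem_univ b)
      obtain ⟨M, hM, hMne⟩ := hne
      apply hMne
      have h1 : ψ M = ψ (Matrix.hadamard J M) := by rw [hhadJleft]
      rw [h1, hschur J hJmem M hM, ← hCdef, hC0]
      ext a b
      simp [Matrix.hadamard_apply]
    · ext a b
      have hrow : ∑ k, C a k = (Finset.univ : Finset V).card := by
        have := congrFun (congrFun hCJ a) b
        rw [hMJentry] at this
        rw [this, hdn]
        simp [hJdef, hn, Finset.card_univ]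
      have h1 : C a b = 1 := sum01_card Finset.univ (fun k => C a k)
        (fun k _ => hC01 a k) hrow b (Finset.mem_univ b)
      rw [h1]
      simp [hJdef]
  -- the diagonal entry is preserved by ψ
  have hIM : ∀ M ∈ S, Matrix.hadamard 1 M = (M a₀ a₀) • 1 := by
    intro M hM
    ext a b
    by_cases hab : a = b
    · subst hab
      rw [Matrix.hadamard_apply, Matrix.one_apply_eq, one_mul, hdiag M hM a,
        Matrix.smul_apply, Matrix.one_apply_eq, smul_eq_mul, mul_one]
    · rw [Matrix.hadamard_apply, Matrix.one_apply_ne hab, zero_mul,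
        Matrix.smul_apply, Matrix.one_apply_ne hab, smul_zero]
  have hdiagpres : ∀ M ∈ S, ψ M a₀ a₀ = M a₀ a₀ := by
    intro M hM
    have h1 := hschur 1 hImem M hM
    rw [hIM M hM, hsmul _ (hentE M hM a₀ a₀) 1 hImem, hψI,
      hIM (ψ M) (hmapsto M hM)] at h1
    have h2 := congrFun (congrFun h1 a₀) a₀
    simpa [Matrix.smul_apply, Matrix.one_apply_eq] using h2.symm
  -- the total entry sum is preserved by ψ
  have hJMJ : ∀ (M : Matrix V V ℂ) (a b : V), (J * M * J) a b = ∑ x, ∑ y, M x y := by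
    intro M a b
    rw [hMJentry (J * M)]
    rw [Finset.sum_congr rfl fun k _ => hJMentry M a k]
    exact Finset.sum_comm
  have hsumpres : ∀ M ∈ S, ∑ x, ∑ y, ψ M x y = ∑ x, ∑ y, M x y := by
    intro M hM
    have hmm : J * M * J ∈ S := hSmul _ (hSmul _ hJmem _ hM) _ hJmem
    have hsE : (J * M * J) a₀ a₀ ∈ E := hentE _ hmm a₀ a₀
    have hconst : J * M * J = ((J * M * J) a₀ a₀) • J := by
      ext a b
      rw [hJMJ, Matrix.smul_apply, hJdef, Matrix.of_apply, smul_eq_mul, mul_one,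
        hJMJ M a₀ a₀]
    have h2 : ψ (J * M * J) = J * ψ M * J := by
      rw [hmul _ (hSmul _ hJmem _ hM) _ hJmem, hmul _ hJmem _ hM, hψJ]
    rw [hconst, hsmul _ hsE _ hJmem, hψJ] at h2
    have h3 := congrFun (congrFun h2.symm a₀) a₀
    rw [hJMJ (ψ M) a₀ a₀, Matrix.smul_apply, hJdef, Matrix.of_apply, smul_eq_mul,
      mul_one, hJMJ M a₀ a₀] at h3
    exact h3
  -- key step : the images of transpose-paired basic matrices
  have key : ∀ p q, (A p)ᵀ = A q → ∀ a b, ψ (A p) a b = ψ (A p) a b * ψ (A q) b a := by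
    intro p q hpq a b
    set X := ψ (A p) with hXdef
    set Y := ψ (A q) with hYdef
    have hX01 : ∀ a b, X a b = 0 ∨ X a b = 1 := hψ01 _ (hAmem p) (hhadA p)
    have hY01 : ∀ a b, Y a b = 0 ∨ Y a b = 1 := hψ01 _ (hAmem q) (hhadA q)
    have hPS : A p * A q ∈ S := hclosed p q
    have hXY : X * Y = ψ (A p * A q) := (hmul _ (hAmem p) _ (hAmem q)).symm
    have hXYS : X * Y ∈ S := hXY ▸ hmapsto _ hPS
    set n : ℕ := Fintype.card V with hn
    have e1 : ∑ x : V, ∑ y : V, X x y * Y y x = ∑ x : V, (X * Y) x x :=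
      Finset.sum_congr rfl fun x _ => (Matrix.mul_apply).symm
    have e2 : ∑ x : V, (X * Y) x x = (n : ℂ) * (X * Y) a₀ a₀ := by
      rw [Finset.sum_congr rfl fun x _ => hdiag _ hXYS x]
      simp [hn, Finset.card_univ, mul_comm]
    have e3 : (X * Y) a₀ a₀ = (A p * A q) a₀ a₀ := by
      rw [hXY]; exact hdiagpres _ hPS
    have e4 : ∑ x : V, (A p * A q) x x = (n : ℂ) * (A p * A q) a₀ a₀ := by
      rw [Finset.sum_congr rfl fun x _ => hdiag _ hPS x]
      simp [hn, Finset.card_univ, mul_comm]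
    have e5 : ∑ x : V, (A p * A q) x x = ∑ x : V, ∑ y : V, A p x y * A q y x :=
      Finset.sum_congr rfl fun x _ => Matrix.mul_apply
    have e6 : ∀ x y, A q y x = A p x y := by
      intro x y; rw [← hpq, Matrix.transpose_apply]
    have e7 : ∑ x : V, ∑ y : V, A p x y * A q y x = ∑ x : V, ∑ y : V, A p x y := by
      refine Finset.sum_congr rfl fun x _ => Finset.sum_congr rfl fun y _ => ?_
      rw [e6]
      rcases h01 p x y with h | h <;> rw [h] <;> ring
    have e8 : ∑ x : V, ∑ y : V, A p x y = ∑ x : V, ∑ y : V, X x y :=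
      (hsumpres _ (hAmem p)).symm
    have etot : ∑ x : V, ∑ y : V, (X x y - X x y * Y y x) = 0 := by
      have hsplit : ∑ x : V, ∑ y : V, (X x y - X x y * Y y x)
          = (∑ x : V, ∑ y : V, X x y) - ∑ x : V, ∑ y : V, X x y * Y y x := by
        rw [← Finset.sum_sub_distrib]
        exact Finset.sum_congr rfl fun x _ => Finset.sum_sub_distrib _ _
      rw [hsplit, e1, e2, e3, ← e8, ← e7, ← e5, e4]
      ring
    have hptwise : ∀ z : V × V, X z.1 z.2 - X z.1 z.2 * Y z.2 z.1 = 0 := by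
      intro z
      refine sum01_zero Finset.univ
        (fun z : V × V => X z.1 z.2 - X z.1 z.2 * Y z.2 z.1) ?_ ?_ z (Finset.mem_univ z)
      · intro w _
        rcases hX01 w.1 w.2 with h1 | h1 <;> rcases hY01 w.2 w.1 with h2 | h2 <;>
          norm_num [h1, h2]
      · rw [Fintype.sum_prod_type]
        exact etot
    have := hptwise (a, b)
    linear_combination this
  -- transpose on the generators
  have hψT : ∀ i, ψ ((A i)ᵀ) = (ψ (A i))ᵀ := by
    intro i
    obtain ⟨i', hi'⟩ := hT i
    have hi'2 : (A i')ᵀ = A i := by rw [← hi', Matrix.transpose_transpose]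
    rw [hi']
    ext a b
    rw [Matrix.transpose_apply]
    have e1 := key i i' hi' b a
    have e2 := key i' i hi'2 a b
    calc ψ (A i') a b = ψ (A i') a b * ψ (A i) b a := e2
      _ = ψ (A i) b a * ψ (A i') a b := mul_comm _ _
      _ = ψ (A i) b a := e1.symm
  have hATmem : ∀ i, (A i)ᵀ ∈ S := by
    intro i
    obtain ⟨i', hi'⟩ := hT i
    rw [hi']
    exact hAmem i'
  have hAH : ∀ i, (A i)ᴴ = (A i)ᵀ := by
    intro i
    ext a b
    rw [Matrix.conjTranspose_apply, Matrix.transpose_apply]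
    rcases h01 i b a with h | h <;> rw [h] <;> simp
  have hψAH : ∀ i, (ψ (A i))ᴴ = (ψ (A i))ᵀ := by
    intro i
    ext a b
    rw [Matrix.conjTranspose_apply, Matrix.transpose_apply]
    rcases hψ01 _ (hAmem i) (hhadA i) b a with h | h <;> rw [h] <;> simp
  -- conclusion
  intro M hM
  have hM' := hM
  rw [hS] at hM'
  obtain ⟨c, hc, hMrep⟩ := hM'
  subst hMrep
  constructor
  · have hTrep : (∑ i, c i • A i)ᵀ = ∑ i, c i • (A i)ᵀ := by
      rw [Matrix.transpose_sum]
      exact Finset.sum_congr rfl fun i _ => Matrix.transpose_smul (c i) (A i)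
    rw [hTrep, hψsum c _ hc hATmem, hψsum c A hc hAmem, Matrix.transpose_sum]
    refine Finset.sum_congr rfl fun i _ => ?_
    rw [Matrix.transpose_smul, hψT i]
  · have hHrep : (∑ i, c i • A i)ᴴ = ∑ i, (starRingEnd ℂ (c i)) • (A i)ᵀ := by
      rw [Matrix.conjTranspose_sum]
      refine Finset.sum_congr rfl fun i _ => ?_
      rw [Matrix.conjTranspose_smul, hAH, starRingEnd_apply]
    rw [hHrep, hψsum _ _ (fun i => hEconj _ (hc i)) hATmem,
      hψsum c A hc hAmem, Matrix.conjTranspose_sum]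
    refine Finset.sum_congr rfl fun i _ => ?_
    rw [Matrix.conjTranspose_smul, hψAH, hψT, starRingEnd_apply]
end
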